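/- arXiv:2001.07529 — 13 statements merged into one kernel-verified Lean document; each statement's English description precedes it below -/
import Mathlib

section
/- Let 0 ≤ c₃ ≤ c₁ and 0 ≤ c₄ ≤ c₂ be real numbers, let f : [c₄,∞) → [0,∞) and g : [c₃,∞) → [0,∞) be continuous, and set F(z) = ∫_{c₄}^{z} f(s) ds and G(w) = ∫_{c₃}^{w} g(θ) dθ. Let 0 < ε < 1 < K and suppose ε·G(c₁) ≤ F(c₂) ≤ K·G(c₁). If w, z : [0,T) → ℝ are differentiable with w(0) = c₁, z(0) = c₂, w(t) ≥ c₃, z(t) ≥ c₄, and w'(t) = f(z(t)), z'(t) = g(w(t)) for all t ∈ [0,T), then ε·G(w(t)) ≤ F(z(t)) ≤ K·G(w(t)) for all t ∈ [0,T). -/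
open Set MeasureTheory Filter

/-!
Along the flow `w' = f(z)`, `z' = g(w)` the quantity `F(z) - c G(w)` has derivative
`(1 - c) f(z) g(w)`, which has the sign of `1 - c` because `f, g ≥ 0`. Hence
`F(z) - ε G(w)` is nondecreasing and `F(z) - K G(w)` is nonincreasing in time, and both
inequalities propagate from `t = 0`.
-/

theorem hasDerivWithinAt_integral_Ici {f : ℝ → ℝ} {a x : ℝ} (hf : ContinuousOn f (Ici a))
    (hx : a ≤ x) : HasDerivWithinAt (fun y => ∫ s in a..y, f s) (f x) (Ici a) x := by
  -- `f` is arbitrary to the left of `a`, so differentiate the integral of its continuous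
  -- extension `f ∘ max a` instead, which agrees with it on `Ici a`.
  have hf_ext : Continuous fun s => f (max a s) :=
    hf.comp_continuous (continuous_const.max continuous_id) fun s => le_max_left a s
  have h_eq : EqOn (fun y => ∫ s in a..y, f (max a s)) (fun y => ∫ s in a..y, f s) (Ici a) :=
    fun y hy => intervalIntegral.integral_congr fun s hs => by
      rw [uIcc_of_le hy] at hs
      rw [max_eq_right hs.1]
  have h_ext := (hf_ext.integral_hasStrictDerivAt a x).hasDerivAt.hasDerivWithinAt (s := Ici a)
  rw [max_eq_right hx] at h_ext
  exact h_ext.congr_of_mem h_eq.symm hx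

theorem Convex.monotoneOn_of_hasDerivWithinAt_nonneg {D : Set ℝ} (hD : Convex ℝ D)
    {φ φ' : ℝ → ℝ} (hφ : ∀ t ∈ D, HasDerivWithinAt φ (φ' t) D t) (hφ' : ∀ t ∈ D, 0 ≤ φ' t) :
    MonotoneOn φ D :=
  _root_.monotoneOn_of_hasDerivWithinAt_nonneg hD (fun t ht => (hφ t ht).continuousWithinAt)
    (fun t ht => (hφ t (interior_subset ht)).mono interior_subset)
    (fun t ht => hφ' t (interior_subset ht))

theorem Convex.antitoneOn_of_hasDerivWithinAt_nonpos {D : Set ℝ} (hD : Convex ℝ D)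
    {φ φ' : ℝ → ℝ} (hφ : ∀ t ∈ D, HasDerivWithinAt φ (φ' t) D t) (hφ' : ∀ t ∈ D, φ' t ≤ 0) :
    AntitoneOn φ D :=
  _root_.antitoneOn_of_hasDerivWithinAt_nonpos hD (fun t ht => (hφ t ht).continuousWithinAt)
    (fun t ht => (hφ t (interior_subset ht)).mono interior_subset)
    (fun t ht => hφ' t (interior_subset ht))

section HamiltonianFlow

variable {f g F G w z : ℝ → ℝ} {D S₁ S₂ : Set ℝ}

theorem hasDerivWithinAt_comp_sub_const_mul_comp (c : ℝ) {t : ℝ}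
    (hF : HasDerivWithinAt F (f (z t)) S₁ (z t)) (hG : HasDerivWithinAt G (g (w t)) S₂ (w t))
    (hzD : MapsTo z D S₁) (hwD : MapsTo w D S₂)
    (hz : HasDerivWithinAt z (g (w t)) D t) (hw : HasDerivWithinAt w (f (z t)) D t) :
    HasDerivWithinAt (fun s => F (z s) - c * G (w s)) ((1 - c) * (f (z t) * g (w t))) D t :=
  ((hF.comp t hz hzD).sub ((hG.comp t hw hwD).const_mul c)).congr_deriv (by ring)

theorem monotoneOn_comp_sub_const_mul_comp {c : ℝ} (hc : c ≤ 1) (hD : Convex ℝ D)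
    (hF : ∀ x ∈ S₁, HasDerivWithinAt F (f x) S₁ x) (hG : ∀ x ∈ S₂, HasDerivWithinAt G (g x) S₂ x)
    (hf : ∀ x ∈ S₁, 0 ≤ f x) (hg : ∀ x ∈ S₂, 0 ≤ g x) (hzD : MapsTo z D S₁) (hwD : MapsTo w D S₂)
    (hz : ∀ t ∈ D, HasDerivWithinAt z (g (w t)) D t)
    (hw : ∀ t ∈ D, HasDerivWithinAt w (f (z t)) D t) :
    MonotoneOn (fun s => F (z s) - c * G (w s)) D :=
  hD.monotoneOn_of_hasDerivWithinAt_nonneg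
    (fun t ht => hasDerivWithinAt_comp_sub_const_mul_comp c (hF _ (hzD ht)) (hG _ (hwD ht))
      hzD hwD (hz t ht) (hw t ht))
    (fun _ ht => mul_nonneg (sub_nonneg.2 hc) (mul_nonneg (hf _ (hzD ht)) (hg _ (hwD ht))))

theorem antitoneOn_comp_sub_const_mul_comp {c : ℝ} (hc : 1 ≤ c) (hD : Convex ℝ D)
    (hF : ∀ x ∈ S₁, HasDerivWithinAt F (f x) S₁ x) (hG : ∀ x ∈ S₂, HasDerivWithinAt G (g x) S₂ x)
    (hf : ∀ x ∈ S₁, 0 ≤ f x) (hg : ∀ x ∈ S₂, 0 ≤ g x) (hzD : MapsTo z D S₁) (hwD : MapsTo w D S₂)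
    (hz : ∀ t ∈ D, HasDerivWithinAt z (g (w t)) D t)
    (hw : ∀ t ∈ D, HasDerivWithinAt w (f (z t)) D t) :
    AntitoneOn (fun s => F (z s) - c * G (w s)) D :=
  hD.antitoneOn_of_hasDerivWithinAt_nonpos
    (fun t ht => hasDerivWithinAt_comp_sub_const_mul_comp c (hF _ (hzD ht)) (hG _ (hwD ht))
      hzD hwD (hz t ht) (hw t ht))
    (fun _ ht => mul_nonpos_of_nonpos_of_nonneg (sub_nonpos.2 hc)
      (mul_nonneg (hf _ (hzD ht)) (hg _ (hwD ht))))

end HamiltonianFlow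

theorem invariant_inequality_thmAprime_general
    (c₁ c₂ c₃ c₄ ε K T : ℝ)
    (f g : ℝ → ℝ)
    (hf_cont : ContinuousOn f (Ici c₄)) (hg_cont : ContinuousOn g (Ici c₃))
    (hf_nonneg : ∀ s ∈ Ici c₄, 0 ≤ f s) (hg_nonneg : ∀ s ∈ Ici c₃, 0 ≤ g s)
    (F G : ℝ → ℝ)
    (hF : ∀ x, F x = ∫ s in c₄..x, f s) (hG : ∀ x, G x = ∫ θ in c₃..x, g θ)
    (hε1 : ε < 1) (hK : 1 < K)
    (hFG1 : ε * G c₁ ≤ F c₂) (hFG2 : F c₂ ≤ K * G c₁)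
    (w z : ℝ → ℝ)
    (hw0 : w 0 = c₁) (hz0 : z 0 = c₂)
    (hw_ge : ∀ t ∈ Ico (0 : ℝ) T, c₃ ≤ w t)
    (hz_ge : ∀ t ∈ Ico (0 : ℝ) T, c₄ ≤ z t)
    (hw' : ∀ t ∈ Ico (0 : ℝ) T, HasDerivAt w (f (z t)) t)
    (hz' : ∀ t ∈ Ico (0 : ℝ) T, HasDerivAt z (g (w t)) t) :
    ∀ t ∈ Ico (0 : ℝ) T, ε * G (w t) ≤ F (z t) ∧ F (z t) ≤ K * G (w t) := by
  intro t ht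
  obtain rfl : F = fun x => ∫ s in c₄..x, f s := funext hF
  obtain rfl : G = fun x => ∫ θ in c₃..x, g θ := funext hG
  have hF' := fun x (hx : x ∈ Ici c₄) => hasDerivWithinAt_integral_Ici hf_cont hx
  have hG' := fun x (hx : x ∈ Ici c₃) => hasDerivWithinAt_integral_Ici hg_cont hx
  have hzD : MapsTo z (Ico 0 T) (Ici c₄) := fun s hs => hz_ge s hs
  have hwD : MapsTo w (Ico 0 T) (Ici c₃) := fun s hs => hw_ge s hs
  have hz : ∀ s ∈ Ico 0 T, HasDerivWithinAt z (g (w s)) (Ico 0 T) s :=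
    fun s hs => (hz' s hs).hasDerivWithinAt
  have hw : ∀ s ∈ Ico 0 T, HasDerivWithinAt w (f (z s)) (Ico 0 T) s :=
    fun s hs => (hw' s hs).hasDerivWithinAt
  have h0 : (0 : ℝ) ∈ Ico 0 T := ⟨le_rfl, ht.1.trans_lt ht.2⟩
  have hlower := monotoneOn_comp_sub_const_mul_comp hε1.le (convex_Ico 0 T) hF' hG'
    hf_nonneg hg_nonneg hzD hwD hz hw h0 ht ht.1
  have hupper := antitoneOn_comp_sub_const_mul_comp hK.le (convex_Ico 0 T) hF' hG'
    hf_nonneg hg_nonneg hzD hwD hz hw h0 ht ht.1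
  simp only [hw0, hz0] at hlower hupper
  constructor <;> linarith

/-- Key invariant inequality in Theorem A′ of the paper: along solutions of the ODE
system `w' = f(z)`, `z' = g(w)`, the quantity `F(z) - ε G(w)` stays nonnegative and
`F(z) - K G(w)` stays nonpositive, where `F(z) = ∫_{c₄}^z f`, `G(w) = ∫_{c₃}^w g`. -/
theorem invariant_inequality_thmAprime
    (c₁ c₂ c₃ c₄ ε K T : ℝ)
    (hc₃ : 0 ≤ c₃) (hc₃₁ : c₃ ≤ c₁) (hc₄ : 0 ≤ c₄) (hc₄₂ : c₄ ≤ c₂)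
    (f g : ℝ → ℝ)
    (hf_cont : ContinuousOn f (Ici c₄)) (hg_cont : ContinuousOn g (Ici c₃))
    (hf_nonneg : ∀ s ∈ Ici c₄, 0 ≤ f s) (hg_nonneg : ∀ s ∈ Ici c₃, 0 ≤ g s)
    (F G : ℝ → ℝ)
    (hF : ∀ x, F x = ∫ s in c₄..x, f s) (hG : ∀ x, G x = ∫ θ in c₃..x, g θ)
    (hε : 0 < ε) (hε1 : ε < 1) (hK : 1 < K)
    (hFG1 : ε * G c₁ ≤ F c₂) (hFG2 : F c₂ ≤ K * G c₁)
    (w z : ℝ → ℝ)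
    (hw0 : w 0 = c₁) (hz0 : z 0 = c₂)
    (hw_ge : ∀ t ∈ Ico (0 : ℝ) T, c₃ ≤ w t)
    (hz_ge : ∀ t ∈ Ico (0 : ℝ) T, c₄ ≤ z t)
    (hw' : ∀ t ∈ Ico (0 : ℝ) T, HasDerivAt w (f (z t)) t)
    (hz' : ∀ t ∈ Ico (0 : ℝ) T, HasDerivAt z (g (w t)) t) :
    ∀ t ∈ Ico (0 : ℝ) T, ε * G (w t) ≤ F (z t) ∧ F (z t) ≤ K * G (w t) :=
  invariant_inequality_thmAprime_general c₁ c₂ c₃ c₄ ε K T f g hf_cont hg_cont hf_nonneg hg_nonneg F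
    G hF hG hε1 hK hFG1 hFG2 w z hw0 hz0 hw_ge hz_ge hw' hz'
end

section
/- Let 0 ≤ c₃ < c₁ and 0 ≤ c₄ < c₂, let f : [c₄,∞) → [0,∞) and g : [c₃,∞) → [0,∞) be continuous and nondecreasing, with f strictly positive on (c₄,∞) and ∫_{c₄}^{∞} f(s) ds = ∞, and set F(z) = ∫_{c₄}^{z} f(s) ds (so F is a strictly increasing bijection from [c₄,∞) onto [0,∞) with inverse F⁻¹) and G(w) = ∫_{c₃}^{w} g(θ) dθ. Let 0 < ε < 1 < K with ε·G(c₁) ≤ F(c₂) ≤ K·G(c₁). If w, z : [0,T) → ℝ are differentiable with w(0) = c₁, z(0) = c₂, w(t) ≥ c₃, z(t) ≥ c₄, and w'(t) = f(z(t)), z'(t) = g(w(t)) on [0,T), then for all t ∈ [0,T): f(F⁻¹(ε·G(w(t)))) ≤ w'(t) ≤ f(F⁻¹(K·G(w(t)))). -/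
open Set MeasureTheory Filter

/-- Two-sided differential inequality for `w` in the proof of Theorem A′ of the paper:
`f(F⁻¹(ε G(w(t)))) ≤ w'(t) = f(z(t)) ≤ f(F⁻¹(K G(w(t))))`, where
`F(z) = ∫_{c₄}^z f`, `G(w) = ∫_{c₃}^w g`, and `Finv` is the inverse of `F`. -/
theorem two_sided_differential_inequality_thmAprime
    (c₁ c₂ c₃ c₄ ε K T : ℝ)
    (hc₃ : 0 ≤ c₃) (hc₃₁ : c₃ < c₁) (hc₄ : 0 ≤ c₄) (hc₄₂ : c₄ < c₂)
    (f g : ℝ → ℝ)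
    (hf_cont : ContinuousOn f (Ici c₄)) (hg_cont : ContinuousOn g (Ici c₃))
    (hf_nonneg : ∀ s ∈ Ici c₄, 0 ≤ f s) (hg_nonneg : ∀ s ∈ Ici c₃, 0 ≤ g s)
    (hf_mono : MonotoneOn f (Ici c₄)) (hg_mono : MonotoneOn g (Ici c₃))
    (hf_pos : ∀ s ∈ Ioi c₄, 0 < f s)
    (hf_div : ¬ IntegrableOn f (Ici c₄))
    (F G Finv : ℝ → ℝ)
    (hF : ∀ x, F x = ∫ s in c₄..x, f s) (hG : ∀ x, G x = ∫ θ in c₃..x, g θ)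
    (hF_strict : StrictMonoOn F (Ici c₄))
    (hFinv_mem : ∀ y ∈ Ici (0 : ℝ), Finv y ∈ Ici c₄)
    (hFinv_right : ∀ y ∈ Ici (0 : ℝ), F (Finv y) = y)
    (hFinv_left : ∀ x ∈ Ici c₄, Finv (F x) = x)
    (hε : 0 < ε) (hε1 : ε < 1) (hK : 1 < K)
    (hFG1 : ε * G c₁ ≤ F c₂) (hFG2 : F c₂ ≤ K * G c₁)
    (w z : ℝ → ℝ)
    (hw0 : w 0 = c₁) (hz0 : z 0 = c₂)
    (hw_ge : ∀ t ∈ Ico (0 : ℝ) T, c₃ ≤ w t)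
    (hz_ge : ∀ t ∈ Ico (0 : ℝ) T, c₄ ≤ z t)
    (hw' : ∀ t ∈ Ico (0 : ℝ) T, HasDerivAt w (f (z t)) t)
    (hz' : ∀ t ∈ Ico (0 : ℝ) T, HasDerivAt z (g (w t)) t) :
    ∀ t ∈ Ico (0 : ℝ) T,
      f (Finv (ε * G (w t))) ≤ f (z t) ∧ f (z t) ≤ f (Finv (K * G (w t))) := by
  -- A general monotonicity helper : if u has nonneg derivative on [0,T), then u 0 ≤ u t
  have mono_of : ∀ (u u' : ℝ → ℝ), (∀ s ∈ Ico (0:ℝ) T, HasDerivAt u (u' s) s) →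
      (∀ s ∈ Ico (0:ℝ) T, 0 ≤ u' s) → ∀ t ∈ Ico (0:ℝ) T, u 0 ≤ u t := by
    intro u u' hder hnn t ht
    have hsub : Icc (0:ℝ) t ⊆ Ico 0 T := fun s hs => ⟨hs.1, lt_of_le_of_lt hs.2 ht.2⟩
    have hmono : MonotoneOn u (Icc (0:ℝ) t) := by
      apply monotoneOn_of_deriv_nonneg (convex_Icc _ _)
      · exact fun s hs => (hder s (hsub hs)).continuousAt.continuousWithinAt
      · intro s hs
        have hs' : s ∈ Icc (0:ℝ) t := interior_subset hs
        exact (hder s (hsub hs')).differentiableAt.differentiableWithinAt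
      · intro s hs
        have hs' : s ∈ Icc (0:ℝ) t := interior_subset hs
        rw [(hder s (hsub hs')).deriv]
        exact hnn s (hsub hs')
    exact hmono ⟨le_refl 0, ht.1⟩ ⟨ht.1, le_refl t⟩ ht.1
  -- z and w are above their initial values
  have hz_lb : ∀ t ∈ Ico (0:ℝ) T, c₂ ≤ z t := by
    intro t ht
    rw [← hz0]
    exact mono_of z (fun s => g (w s)) hz' (fun s hs => hg_nonneg _ (hw_ge s hs)) t ht
  have hw_lb : ∀ t ∈ Ico (0:ℝ) T, c₁ ≤ w t := by
    intro t ht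
    rw [← hw0]
    exact mono_of w (fun s => f (z s)) hw' (fun s hs => hf_nonneg _ (hz_ge s hs)) t ht
  have hz_gt : ∀ t ∈ Ico (0:ℝ) T, c₄ < z t := fun t ht => lt_of_lt_of_le hc₄₂ (hz_lb t ht)
  have hw_gt : ∀ t ∈ Ico (0:ℝ) T, c₃ < w t := fun t ht => lt_of_lt_of_le hc₃₁ (hw_lb t ht)
  -- derivative of F at points > c₄
  have hFfun : F = fun x => ∫ s in c₄..x, f s := funext hF
  have hGfun : G = fun x => ∫ θ in c₃..x, g θ := funext hG
  have hF_deriv : ∀ x, c₄ < x → HasDerivAt F (f x) x := by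
    intro x hx
    rw [hFfun]
    apply intervalIntegral.integral_hasDerivAt_right
    · apply ContinuousOn.intervalIntegrable
      rw [uIcc_of_le hx.le]
      exact hf_cont.mono Icc_subset_Ici_self
    · exact (hf_cont.mono Ioi_subset_Ici_self).stronglyMeasurableAtFilter isOpen_Ioi x hx
    · exact hf_cont.continuousAt (Ici_mem_nhds hx)
  have hG_deriv : ∀ x, c₃ < x → HasDerivAt G (g x) x := by
    intro x hx
    rw [hGfun]
    apply intervalIntegral.integral_hasDerivAt_right
    · apply ContinuousOn.intervalIntegrable
      rw [uIcc_of_le hx.le]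
      exact hg_cont.mono Icc_subset_Ici_self
    · exact (hg_cont.mono Ioi_subset_Ici_self).stronglyMeasurableAtFilter isOpen_Ioi x hx
    · exact hg_cont.continuousAt (Ici_mem_nhds hx)
  -- derivative of F ∘ z and G ∘ w
  have hFz : ∀ s ∈ Ico (0:ℝ) T, HasDerivAt (fun s => F (z s)) (f (z s) * g (w s)) s := by
    intro s hs
    exact (hF_deriv (z s) (hz_gt s hs)).comp s (hz' s hs)
  have hGw : ∀ s ∈ Ico (0:ℝ) T, HasDerivAt (fun s => G (w s)) (g (w s) * f (z s)) s := by
    intro s hs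
    exact (hG_deriv (w s) (hw_gt s hs)).comp s (hw' s hs)
  have hfg_nn : ∀ s ∈ Ico (0:ℝ) T, 0 ≤ f (z s) * g (w s) := fun s hs =>
    mul_nonneg (hf_nonneg _ (hz_ge s hs)) (hg_nonneg _ (hw_ge s hs))
  -- lower bound : ε G(w t) ≤ F (z t)
  have hlow : ∀ t ∈ Ico (0:ℝ) T, ε * G (w t) ≤ F (z t) := by
    intro t ht
    have := mono_of (fun s => F (z s) - ε * G (w s))
      (fun s => f (z s) * g (w s) - ε * (g (w s) * f (z s)))
      (fun s hs => (hFz s hs).sub ((hGw s hs).const_mul ε))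
      (fun s hs => by
        show 0 ≤ f (z s) * g (w s) - ε * (g (w s) * f (z s))
        nlinarith [hfg_nn s hs]) t ht
    simp only [hw0, hz0] at this
    linarith
  -- upper bound : F (z t) ≤ K G(w t)
  have hupp : ∀ t ∈ Ico (0:ℝ) T, F (z t) ≤ K * G (w t) := by
    intro t ht
    have := mono_of (fun s => K * G (w s) - F (z s))
      (fun s => K * (g (w s) * f (z s)) - f (z s) * g (w s))
      (fun s hs => ((hGw s hs).const_mul K).sub (hFz s hs))
      (fun s hs => by
        show 0 ≤ K * (g (w s) * f (z s)) - f (z s) * g (w s)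
        nlinarith [hfg_nn s hs]) t ht
    simp only [hw0, hz0] at this
    linarith
  -- G (w t) is nonnegative
  have hGnn : ∀ t ∈ Ico (0:ℝ) T, 0 ≤ G (w t) := by
    intro t ht
    rw [hG]
    exact intervalIntegral.integral_nonneg (hw_ge t ht) (fun θ hθ => hg_nonneg θ hθ.1)
  intro t ht
  have hzt : z t ∈ Ici c₄ := hz_ge t ht
  constructor
  · -- lower bound
    have hy : ε * G (w t) ∈ Ici (0:ℝ) := mul_nonneg hε.le (hGnn t ht)
    have h1 : F (Finv (ε * G (w t))) ≤ F (z t) := by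
      rw [hFinv_right _ hy]; exact hlow t ht
    have h2 : Finv (ε * G (w t)) ≤ z t := by
      by_contra h
      push_neg at h
      exact absurd (hF_strict hzt (hFinv_mem _ hy) h) (not_lt.2 h1)
    exact hf_mono (hFinv_mem _ hy) hzt h2
  · have hy : K * G (w t) ∈ Ici (0:ℝ) := mul_nonneg (by linarith) (hGnn t ht)
    have h1 : F (z t) ≤ F (Finv (K * G (w t))) := by
      rw [hFinv_right _ hy]; exact hupp t ht
    have h2 : z t ≤ Finv (K * G (w t)) := by
      by_contra h
      push_neg at h
      exact absurd (hF_strict (hFinv_mem _ hy) hzt h) (not_lt.2 h1)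
    exact hf_mono hzt (hFinv_mem _ hy) h2
end

section
/- Let 0 ≤ c₃ < c₁ and 0 ≤ c₄ < c₂, let f : [c₄,∞) → [0,∞) and g : [c₃,∞) → [0,∞) be continuous, nondecreasing, strictly positive on (c₄,∞) and (c₃,∞) respectively, with ∫_{c₄}^{∞} f(s) ds = ∫_{c₃}^{∞} g(θ) dθ = ∞. Set F(z) = ∫_{c₄}^{z} f(s) ds and G(w) = ∫_{c₃}^{w} g(θ) dθ, with inverse functions F⁻¹ and G⁻¹. Let 0 < ε < 1 < K with ε·G(c₁) ≤ F(c₂) ≤ K·G(c₁). If ∫_{c₁}^{∞} ds / f(F⁻¹(K·G(s))) = ∞ and ∫_{c₂}^{∞} dθ / g(G⁻¹(F(θ)/ε)) = ∞, then every solution of w' = f(z), z' = g(w) with w(0) = c₁, z(0) = c₂ and w ≥ c₃, z ≥ c₄ on a finite interval [0,T) is bounded on [0,T); hence the solution extends globally to [0,∞). -/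
/-!
Along a solution the derivatives `w' = f(z) ≥ 0` and `z' = g(w) ≥ 0` make both components
nondecreasing, and `F(z) - G(w)` is a first integral. Together with `ε G(c₁) ≤ F(c₂) ≤ K G(c₁)`
it gives `F(z) ≤ K G(w)` and `G(w) ≤ F(z) / ε`, hence `w' ≤ f(F⁻¹(K G(w)))` and
`z' ≤ g(G⁻¹(F(z) / ε))`. Integrating `w' / f(F⁻¹(K G(w))) ≤ 1` shows that `w` can only reach
levels `R` with `∫_{c₁}^{R} ds / f(F⁻¹(K G(s))) ≤ T`; since that integral diverges, `w` stays
bounded on `[0, T)`, and likewise `z`.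
-/

open Set MeasureTheory Filter

section Primitive

variable {f : ℝ → ℝ} {c : ℝ}

lemma intervalIntegrable_of_continuousOn_Ici (hf : ContinuousOn f (Ici c)) {a b : ℝ}
    (ha : c ≤ a) (hb : c ≤ b) : IntervalIntegrable f volume a b :=
  (hf.mono fun _ hx => (le_min ha hb).trans hx.1).intervalIntegrable

lemma hasDerivAt_integral_of_continuousOn_Ici (hf : ContinuousOn f (Ici c)) {x : ℝ}
    (hx : c < x) : HasDerivAt (fun u => ∫ s in c..u, f s) (f x) x :=
  intervalIntegral.integral_hasDerivAt_right
    (intervalIntegrable_of_continuousOn_Ici hf le_rfl hx.le)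
    ((hf.mono Ioi_subset_Ici_self).stronglyMeasurableAtFilter isOpen_Ioi x hx)
    (hf.continuousAt (Ici_mem_nhds hx))

lemma strictMonoOn_integral_of_pos (hf : ContinuousOn f (Ici c))
    (hpos : ∀ s ∈ Ioi c, 0 < f s) : StrictMonoOn (fun x => ∫ s in c..x, f s) (Ici c) := by
  intro a ha b hb hab
  have hsub : (∫ s in c..b, f s) - ∫ s in c..a, f s = ∫ s in a..b, f s :=
    intervalIntegral.integral_interval_sub_left
      (intervalIntegrable_of_continuousOn_Ici hf le_rfl hb)
      (intervalIntegrable_of_continuousOn_Ici hf le_rfl ha)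
  have hpos_ab : 0 < ∫ s in a..b, f s :=
    intervalIntegral.intervalIntegral_pos_of_pos_on
      (intervalIntegrable_of_continuousOn_Ici hf ha hb)
      (fun x hx => hpos x (ha.trans_lt hx.1)) hab
  simp only
  linarith

end Primitive

section RightInverse

variable {F Finv : ℝ → ℝ} {c : ℝ}

lemma StrictMonoOn.le_apply_of_rightInvOn (hF : StrictMonoOn F (Ici c))
    (hmaps : MapsTo Finv (Ici 0) (Ici c)) (hright : RightInvOn Finv F (Ici 0)) {x y : ℝ} (hx : c ≤ x) (hy : 0 ≤ y) (hxy : F x ≤ y) :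
    x ≤ Finv y :=
  (hF.le_iff_le hx (hmaps hy)).1 (by rwa [hright hy])

lemma StrictMonoOn.lt_apply_of_rightInvOn (hF : StrictMonoOn F (Ici c)) (hFc : F c = 0)
    (hmaps : MapsTo Finv (Ici 0) (Ici c)) (hright : RightInvOn Finv F (Ici 0)) {y : ℝ}
    (hy : 0 < y) : c < Finv y :=
  (hF.lt_iff_lt self_mem_Ici (hmaps hy.le)).1 (by rwa [hFc, hright hy.le])

lemma StrictMonoOn.continuousOn_Ioi_of_rightInvOn (hF : StrictMonoOn F (Ici c)) (hFc : F c = 0)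
    (hmaps : MapsTo Finv (Ici 0) (Ici c)) (hright : RightInvOn Finv F (Ici 0))
    (hleft : LeftInvOn Finv F (Ici c)) : ContinuousOn Finv (Ioi 0) := by
  have hmono : MonotoneOn Finv (Ici 0) := fun y₁ hy₁ y₂ hy₂ hy =>
    hF.le_apply_of_rightInvOn hmaps hright (hmaps hy₁) hy₂ (by rwa [hright hy₁])
  have hsurj : Ioi c ⊆ Finv '' Ioi 0 := fun x hx =>
    ⟨F x, by simpa [hFc] using hF self_mem_Ici (mem_Ici.2 hx.le) hx, hleft (mem_Ici.2 hx.le)⟩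
  intro y hy
  refine (continuousAt_of_monotoneOn_of_image_mem_nhds (hmono.mono Ioi_subset_Ici_self)
    (Ioi_mem_nhds hy) (mem_of_superset ?_ hsurj)).continuousWithinAt
  exact Ioi_mem_nhds (hF.lt_apply_of_rightInvOn hFc hmaps hright hy)

end RightInverse

lemma monotoneOn_of_hasDerivAt_nonneg {D : Set ℝ} (hD : Convex ℝ D) {u u' : ℝ → ℝ}
    (hu : ∀ t ∈ D, HasDerivAt u (u' t) t) (hu' : ∀ t ∈ D, 0 ≤ u' t) : MonotoneOn u D :=
  monotoneOn_of_hasDerivWithinAt_nonneg hD (fun t ht => (hu t ht).continuousAt.continuousWithinAt)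
    (fun t ht => (hu t (interior_subset ht)).hasDerivWithinAt)
    fun t ht => hu' t (interior_subset ht)

lemma exists_le_integral_of_not_integrableOn_Ici {φ : ℝ → ℝ} {a : ℝ} (hφ : Continuous φ)
    (hφ_nonneg : ∀ s, 0 ≤ φ s) (hdiv : ¬ IntegrableOn φ (Ici a)) (M : ℝ) :
    ∃ R, M ≤ ∫ s in a..R, φ s := by
  by_contra! h
  refine hdiv ((integrableOn_Ici_iff_integrableOn_Ioi (f := φ)).2 <|
    integrableOn_Ioi_of_intervalIntegral_norm_bounded M a (fun _ => hφ.integrableOn_Ioc)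
      tendsto_id (Eventually.of_forall fun R => ?_))
  simp only [Real.norm_of_nonneg (hφ_nonneg _)]
  exact (h R).le

theorem exists_le_of_hasDerivAt_le_of_not_integrableOn {h u u' : ℝ → ℝ} {a T : ℝ}
    (hh : ContinuousOn h (Ici a)) (hh_pos : ∀ s ∈ Ici a, 0 < h s)
    (hdiv : ¬ IntegrableOn (fun s => 1 / h s) (Ici a))
    (hu0 : u 0 = a) (hu_ge : ∀ t ∈ Ico 0 T, a ≤ u t)
    (hu : ∀ t ∈ Ico 0 T, HasDerivAt u (u' t) t) (hu' : ∀ t ∈ Ico 0 T, u' t ≤ h (u t)) :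
    ∃ C, ∀ t ∈ Ico 0 T, u t ≤ C := by
  -- extended continuously to all of `ℝ`, so that `Φ` below is differentiable also at `u t = a`
  set φ : ℝ → ℝ := fun s => 1 / h (max s a)
  have hφ_pos : ∀ s, 0 < φ s := fun s => one_div_pos.2 (hh_pos _ (le_max_right s a))
  have hφ : Continuous φ :=
    continuous_const.div
      (hh.comp_continuous (continuous_id.max continuous_const) fun s => le_max_right s a)
      fun s => (hh_pos _ (le_max_right s a)).ne'
  set Φ : ℝ → ℝ := fun x => ∫ s in a..x, φ s
  have hΦ : ∀ x, HasDerivAt Φ (φ x) x := fun x => (hφ.integral_hasStrictDerivAt a x).hasDerivAt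
  have hΦ_mono : Monotone Φ := monotone_of_hasDerivAt_nonneg hΦ fun s => (hφ_pos s).le
  have hΦu_speed : ∀ t ∈ Ico 0 T, φ (u t) * u' t ≤ 1 := fun t ht =>
    calc φ (u t) * u' t ≤ φ (u t) * h (u t) := mul_le_mul_of_nonneg_left (hu' t ht) (hφ_pos _).le
      _ = 1 := by simp [φ, max_eq_left (hu_ge t ht), (hh_pos _ (hu_ge t ht)).ne']
  have hgap : MonotoneOn (fun t => t - Φ (u t)) (Ico 0 T) :=
    monotoneOn_of_hasDerivAt_nonneg (convex_Ico 0 T)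
      (fun t ht => (hasDerivAt_id t).sub ((hΦ (u t)).comp t (hu t ht)))
      fun t ht => by simpa using hΦu_speed t ht
  have hΦu : ∀ t ∈ Ico 0 T, Φ (u t) ≤ t := fun t ht => by
    simpa [Φ, hu0] using hgap ⟨le_rfl, ht.1.trans_lt ht.2⟩ ht ht.1
  have hφ_div : ¬ IntegrableOn φ (Ici a) := fun hint => hdiv <|
    hint.congr_fun (fun s hs => by simp [φ, max_eq_left (mem_Ici.1 hs)]) measurableSet_Ici
  obtain ⟨R, hR⟩ := exists_le_integral_of_not_integrableOn_Ici hφ (fun s => (hφ_pos s).le) hφ_div T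
  refine ⟨R, fun t ht => le_of_not_gt fun hRu => ?_⟩
  linarith [hΦ_mono hRu.le, hΦu t ht, ht.2]

theorem exists_le_of_hasDerivAt_of_apply_le {f F Finv Ψ u v : ℝ → ℝ} {a c T : ℝ}
    (hf_cont : ContinuousOn f (Ici c)) (hf_mono : MonotoneOn f (Ici c))
    (hf_pos : ∀ s ∈ Ioi c, 0 < f s)
    (hF : StrictMonoOn F (Ici c)) (hFc : F c = 0) (hmaps : MapsTo Finv (Ici 0) (Ici c))
    (hright : RightInvOn Finv F (Ici 0)) (hleft : LeftInvOn Finv F (Ici c))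
    (hΨ_cont : ContinuousOn Ψ (Ici a)) (hΨ_pos : ∀ s ∈ Ici a, 0 < Ψ s)
    (hdiv : ¬ IntegrableOn (fun s => 1 / f (Finv (Ψ s))) (Ici a))
    (hu0 : u 0 = a) (hu_ge : ∀ t ∈ Ico 0 T, a ≤ u t) (hv_ge : ∀ t ∈ Ico 0 T, c ≤ v t)
    (hu : ∀ t ∈ Ico 0 T, HasDerivAt u (f (v t)) t) (hFv : ∀ t ∈ Ico 0 T, F (v t) ≤ Ψ (u t)) :
    ∃ C, ∀ t ∈ Ico 0 T, u t ≤ C := by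
  have hFinv_gt : ∀ s ∈ Ici a, c < Finv (Ψ s) := fun s hs =>
    hF.lt_apply_of_rightInvOn hFc hmaps hright (hΨ_pos s hs)
  have hcont : ContinuousOn (fun s => f (Finv (Ψ s))) (Ici a) :=
    (hf_cont.mono Ioi_subset_Ici_self).comp
      ((hF.continuousOn_Ioi_of_rightInvOn hFc hmaps hright hleft).comp hΨ_cont hΨ_pos) hFinv_gt
  refine exists_le_of_hasDerivAt_le_of_not_integrableOn hcont
    (fun s hs => hf_pos _ (hFinv_gt s hs)) hdiv hu0 hu_ge hu fun t ht => ?_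
  have hΨ_nonneg := (hΨ_pos _ (hu_ge t ht)).le
  exact hf_mono (hv_ge t ht) (hmaps hΨ_nonneg)
    (hF.le_apply_of_rightInvOn hmaps hright (hv_ge t ht) hΨ_nonneg (hFv t ht))

lemma integral_sub_integral_eq_of_hasDerivAt {f g w z : ℝ → ℝ} {c₃ c₄ T : ℝ}
    (hf : ContinuousOn f (Ici c₄)) (hg : ContinuousOn g (Ici c₃)) (hw_gt : ∀ t ∈ Ico 0 T, c₃ < w t)
    (hz_gt : ∀ t ∈ Ico 0 T, c₄ < z t) (hw' : ∀ t ∈ Ico 0 T, HasDerivAt w (f (z t)) t)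
    (hz' : ∀ t ∈ Ico 0 T, HasDerivAt z (g (w t)) t) {t : ℝ} (ht : t ∈ Ico 0 T) :
    (∫ s in c₄..z t, f s) - ∫ s in c₃..w t, g s = (∫ s in c₄..z 0, f s) - ∫ s in c₃..w 0, g s := by
  have hE : ∀ t ∈ Ico 0 T, HasDerivAt
      (fun t => (∫ s in c₄..z t, f s) - ∫ s in c₃..w t, g s) 0 t := fun t ht => by
    have hFz : HasDerivAt (fun t => ∫ s in c₄..z t, f s) (f (z t) * g (w t)) t :=
      (hasDerivAt_integral_of_continuousOn_Ici hf (hz_gt t ht)).comp t (hz' t ht)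
    have hGw : HasDerivAt (fun t => ∫ s in c₃..w t, g s) (g (w t) * f (z t)) t :=
      (hasDerivAt_integral_of_continuousOn_Ici hg (hw_gt t ht)).comp t (hw' t ht)
    simpa only [mul_comm, sub_self] using hFz.fun_sub hGw
  have h0 : (0 : ℝ) ∈ Ico 0 T := ⟨le_rfl, ht.1.trans_lt ht.2⟩
  have hle := monotoneOn_of_hasDerivAt_nonneg (convex_Ico 0 T) hE (fun _ _ => le_rfl) h0 ht ht.1
  have hge := monotoneOn_of_hasDerivAt_nonneg (convex_Ico 0 T) (fun t ht => (hE t ht).fun_neg)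
    (fun _ _ => neg_zero.ge) h0 ht ht.1
  simp only at hle hge
  linarith

theorem exists_le_of_hasDerivAt_of_integral_le (c₁ c₂ c₃ c₄ K T : ℝ)
    (hc₃₁ : c₃ < c₁) (hc₄₂ : c₄ < c₂) (f g : ℝ → ℝ)
    (hf_cont : ContinuousOn f (Ici c₄)) (hg_cont : ContinuousOn g (Ici c₃))
    (hf_nonneg : ∀ s ∈ Ici c₄, 0 ≤ f s) (hg_nonneg : ∀ s ∈ Ici c₃, 0 ≤ g s)
    (hf_mono : MonotoneOn f (Ici c₄))
    (hf_pos : ∀ s ∈ Ioi c₄, 0 < f s) (hg_pos : ∀ s ∈ Ioi c₃, 0 < g s)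
    (F G Finv : ℝ → ℝ)
    (hF : ∀ x, F x = ∫ s in c₄..x, f s) (hG : ∀ x, G x = ∫ θ in c₃..x, g θ)
    (hmaps : MapsTo Finv (Ici 0) (Ici c₄))
    (hright : RightInvOn Finv F (Ici 0)) (hleft : LeftInvOn Finv F (Ici c₄))
    (hK : 1 ≤ K) (hFG : F c₂ ≤ K * G c₁)
    (hdiv : ¬ IntegrableOn (fun s => 1 / f (Finv (K * G s))) (Ici c₁))
    (w z : ℝ → ℝ) (hw0 : w 0 = c₁) (hz0 : z 0 = c₂)
    (hw_ge : ∀ t ∈ Ico 0 T, c₃ ≤ w t) (hz_ge : ∀ t ∈ Ico 0 T, c₄ ≤ z t)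
    (hw' : ∀ t ∈ Ico 0 T, HasDerivAt w (f (z t)) t)
    (hz' : ∀ t ∈ Ico 0 T, HasDerivAt z (g (w t)) t) :
    ∃ C, ∀ t ∈ Ico 0 T, w t ≤ C := by
  obtain rfl : F = _ := funext hF
  obtain rfl : G = _ := funext hG
  beta_reduce at hFG
  have hw_ge₁ : ∀ t ∈ Ico 0 T, c₁ ≤ w t := fun t ht => hw0 ▸
    monotoneOn_of_hasDerivAt_nonneg (convex_Ico 0 T) hw' (fun t ht => hf_nonneg _ (hz_ge t ht))
      ⟨le_rfl, ht.1.trans_lt ht.2⟩ ht ht.1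
  have hz_ge₂ : ∀ t ∈ Ico 0 T, c₂ ≤ z t := fun t ht => hz0 ▸
    monotoneOn_of_hasDerivAt_nonneg (convex_Ico 0 T) hz' (fun t ht => hg_nonneg _ (hw_ge t ht))
      ⟨le_rfl, ht.1.trans_lt ht.2⟩ ht ht.1
  have hG_mono := strictMonoOn_integral_of_pos hg_cont hg_pos
  have hG₁ : 0 < ∫ θ in c₃..c₁, g θ := by
    simpa using hG_mono self_mem_Ici (mem_Ici.2 hc₃₁.le) hc₃₁
  have hGw : ∀ s ∈ Ici c₁, (∫ θ in c₃..c₁, g θ) ≤ ∫ θ in c₃..s, g θ := fun s hs =>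
    hG_mono.monotoneOn (mem_Ici.2 hc₃₁.le) (mem_Ici.2 (hc₃₁.le.trans hs)) hs
  refine exists_le_of_hasDerivAt_of_apply_le (Ψ := fun s => K * ∫ θ in c₃..s, g θ) hf_cont
    hf_mono hf_pos (strictMonoOn_integral_of_pos hf_cont hf_pos) intervalIntegral.integral_same
    hmaps hright hleft
    (continuousOn_const.mul fun s hs =>
      (hasDerivAt_integral_of_continuousOn_Ici hg_cont (hc₃₁.trans_le hs)).continuousAt
        |>.continuousWithinAt)
    (fun s hs => mul_pos (by linarith) (hG₁.trans_le (hGw s hs))) hdiv hw0 hw_ge₁ hz_ge hw'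
    fun t ht => ?_
  have hcons := integral_sub_integral_eq_of_hasDerivAt hf_cont hg_cont
    (fun t ht => hc₃₁.trans_le (hw_ge₁ t ht)) (fun t ht => hc₄₂.trans_le (hz_ge₂ t ht)) hw' hz' ht
  rw [hw0, hz0] at hcons
  -- `F(z) = G(w) + F(c₂) - G(c₁) ≤ G(w) + (K - 1) G(c₁) ≤ K G(w)`
  nlinarith [hGw _ (hw_ge₁ t ht)]

theorem global_existence_thmAprime_general
    (c₁ c₂ c₃ c₄ ε K T : ℝ)
    (hc₃₁ : c₃ < c₁) (hc₄₂ : c₄ < c₂)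
    (f g : ℝ → ℝ)
    (hf_cont : ContinuousOn f (Ici c₄)) (hg_cont : ContinuousOn g (Ici c₃))
    (hf_nonneg : ∀ s ∈ Ici c₄, 0 ≤ f s) (hg_nonneg : ∀ s ∈ Ici c₃, 0 ≤ g s)
    (hf_mono : MonotoneOn f (Ici c₄)) (hg_mono : MonotoneOn g (Ici c₃))
    (hf_pos : ∀ s ∈ Ioi c₄, 0 < f s) (hg_pos : ∀ s ∈ Ioi c₃, 0 < g s)
    (F G Finv Ginv : ℝ → ℝ)
    (hF : ∀ x, F x = ∫ s in c₄..x, f s) (hG : ∀ x, G x = ∫ θ in c₃..x, g θ)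
    (hFinv_mem : ∀ y ∈ Ici (0 : ℝ), Finv y ∈ Ici c₄)
    (hFinv_right : ∀ y ∈ Ici (0 : ℝ), F (Finv y) = y)
    (hFinv_left : ∀ x ∈ Ici c₄, Finv (F x) = x)
    (hGinv_mem : ∀ y ∈ Ici (0 : ℝ), Ginv y ∈ Ici c₃)
    (hGinv_right : ∀ y ∈ Ici (0 : ℝ), G (Ginv y) = y)
    (hGinv_left : ∀ x ∈ Ici c₃, Ginv (G x) = x)
    (hε : 0 < ε) (hε1 : ε < 1) (hK : 1 < K)
    (hFG1 : ε * G c₁ ≤ F c₂) (hFG2 : F c₂ ≤ K * G c₁)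
    (hdiv1 : ¬ IntegrableOn (fun s => 1 / f (Finv (K * G s))) (Ici c₁))
    (hdiv2 : ¬ IntegrableOn (fun θ => 1 / g (Ginv (F θ / ε))) (Ici c₂))
    (w z : ℝ → ℝ)
    (hw0 : w 0 = c₁) (hz0 : z 0 = c₂)
    (hw_ge : ∀ t ∈ Ico (0 : ℝ) T, c₃ ≤ w t)
    (hz_ge : ∀ t ∈ Ico (0 : ℝ) T, c₄ ≤ z t)
    (hw' : ∀ t ∈ Ico (0 : ℝ) T, HasDerivAt w (f (z t)) t)
    (hz' : ∀ t ∈ Ico (0 : ℝ) T, HasDerivAt z (g (w t)) t) :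
    ∃ C : ℝ, ∀ t ∈ Ico (0 : ℝ) T, w t ≤ C ∧ z t ≤ C := by
  obtain ⟨C₁, hC₁⟩ := exists_le_of_hasDerivAt_of_integral_le c₁ c₂ c₃ c₄ K T hc₃₁ hc₄₂ f g
    hf_cont hg_cont hf_nonneg hg_nonneg hf_mono hf_pos hg_pos F G Finv hF hG hFinv_mem
    hFinv_right hFinv_left hK.le hFG2 hdiv1 w z hw0 hz0 hw_ge hz_ge hw' hz'
  have hGF : G c₁ ≤ ε⁻¹ * F c₂ := by
    rw [inv_mul_eq_div, le_div_iff₀ hε]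
    linarith
  obtain ⟨C₂, hC₂⟩ := exists_le_of_hasDerivAt_of_integral_le c₂ c₁ c₄ c₃ ε⁻¹ T hc₄₂ hc₃₁ g f
    hg_cont hf_cont hg_nonneg hf_nonneg hg_mono hg_pos hf_pos G F Ginv hG hF hGinv_mem
    hGinv_right hGinv_left ((one_le_inv₀ hε).2 hε1.le) hGF
    (by simpa only [inv_mul_eq_div] using hdiv2) z w hz0 hw0 hz_ge hw_ge hz' hw'
  exact ⟨max C₁ C₂, fun t ht =>
    ⟨(hC₁ t ht).trans (le_max_left _ _), (hC₂ t ht).trans (le_max_right _ _)⟩⟩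

/-- Theorem A′, part 1 (global-existence case) of the paper: under the divergence
conditions `∫_{c₁}^∞ ds / f(F⁻¹(K G(s))) = ∞` and `∫_{c₂}^∞ dθ / g(G⁻¹(F(θ)/ε)) = ∞`,
every solution of `w' = f(z)`, `z' = g(w)` on a finite interval `[0,T)` is bounded. -/
theorem global_existence_thmAprime
    (c₁ c₂ c₃ c₄ ε K T : ℝ)
    (hc₃ : 0 ≤ c₃) (hc₃₁ : c₃ < c₁) (hc₄ : 0 ≤ c₄) (hc₄₂ : c₄ < c₂)
    (f g : ℝ → ℝ)
    (hf_cont : ContinuousOn f (Ici c₄)) (hg_cont : ContinuousOn g (Ici c₃))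
    (hf_nonneg : ∀ s ∈ Ici c₄, 0 ≤ f s) (hg_nonneg : ∀ s ∈ Ici c₃, 0 ≤ g s)
    (hf_mono : MonotoneOn f (Ici c₄)) (hg_mono : MonotoneOn g (Ici c₃))
    (hf_pos : ∀ s ∈ Ioi c₄, 0 < f s) (hg_pos : ∀ s ∈ Ioi c₃, 0 < g s)
    (hf_div : ¬ IntegrableOn f (Ici c₄)) (hg_div : ¬ IntegrableOn g (Ici c₃))
    (F G Finv Ginv : ℝ → ℝ)
    (hF : ∀ x, F x = ∫ s in c₄..x, f s) (hG : ∀ x, G x = ∫ θ in c₃..x, g θ)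
    (hFinv_mem : ∀ y ∈ Ici (0 : ℝ), Finv y ∈ Ici c₄)
    (hFinv_right : ∀ y ∈ Ici (0 : ℝ), F (Finv y) = y)
    (hFinv_left : ∀ x ∈ Ici c₄, Finv (F x) = x)
    (hGinv_mem : ∀ y ∈ Ici (0 : ℝ), Ginv y ∈ Ici c₃)
    (hGinv_right : ∀ y ∈ Ici (0 : ℝ), G (Ginv y) = y)
    (hGinv_left : ∀ x ∈ Ici c₃, Ginv (G x) = x)
    (hε : 0 < ε) (hε1 : ε < 1) (hK : 1 < K)
    (hFG1 : ε * G c₁ ≤ F c₂) (hFG2 : F c₂ ≤ K * G c₁)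
    (hdiv1 : ¬ IntegrableOn (fun s => 1 / f (Finv (K * G s))) (Ici c₁))
    (hdiv2 : ¬ IntegrableOn (fun θ => 1 / g (Ginv (F θ / ε))) (Ici c₂))
    (w z : ℝ → ℝ)
    (hw0 : w 0 = c₁) (hz0 : z 0 = c₂)
    (hw_ge : ∀ t ∈ Ico (0 : ℝ) T, c₃ ≤ w t)
    (hz_ge : ∀ t ∈ Ico (0 : ℝ) T, c₄ ≤ z t)
    (hw' : ∀ t ∈ Ico (0 : ℝ) T, HasDerivAt w (f (z t)) t)
    (hz' : ∀ t ∈ Ico (0 : ℝ) T, HasDerivAt z (g (w t)) t) :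
    ∃ C : ℝ, ∀ t ∈ Ico (0 : ℝ) T, w t ≤ C ∧ z t ≤ C :=
  global_existence_thmAprime_general c₁ c₂ c₃ c₄ ε K T hc₃₁ hc₄₂ f g hf_cont hg_cont hf_nonneg
    hg_nonneg hf_mono hg_mono hf_pos hg_pos F G Finv Ginv hF hG hFinv_mem hFinv_right hFinv_left
    hGinv_mem hGinv_right hGinv_left hε hε1 hK hFG1 hFG2 hdiv1 hdiv2 w z hw0 hz0 hw_ge hz_ge hw' hz'
end

section
/- Let f₁, f₂, g₁, g₂ : [0,∞) → [0,∞) be continuous, nondecreasing functions that are strictly positive on (0,∞), let c₁ > 0, c₂ > 0, and suppose ∫_{c₁}^{∞} dw / g₁(w) < ∞. Then the system w'(t) = f₁(z(t))·g₁(w(t)), z'(t) = f₂(z(t))·g₂(w(t)) with w(0) = c₁, z(0) = c₂ has no global solution: there is no pair of differentiable functions w, z : [0,∞) → [0,∞) satisfying these equations for all t ≥ 0. -/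
/-!
Since `f₂, g₂ ≥ 0` on `[0, ∞)` (at `0` by continuity), the component `z` is nondecreasing, so
`f₁ (z t) ≥ a := f₁ c₂ > 0`; then `w` is nondecreasing as well. With
`G x = ∫_{c₁}^x ds / g₁(s)` the chain rule gives `(G ∘ w)' = f₁ (z) ≥ a`, hence
`a t ≤ G (w t) ≤ ∫_{c₁}^∞ ds / g₁(s) < ∞` for every `t ≥ 0`, which is absurd.
-/

open Set MeasureTheory Filter

lemma nonneg_on_Ici_of_nonneg_on_Ioi {f : ℝ → ℝ} {a : ℝ} (hf : ContinuousOn f (Ici a))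
    (hpos : ∀ s ∈ Ioi a, 0 ≤ f s) : ∀ s ∈ Ici a, 0 ≤ f s := fun s hs =>
  ContinuousWithinAt.closure_le (by rwa [closure_Ioi]) continuousWithinAt_const
    ((hf s hs).mono Ioi_subset_Ici_self) hpos

lemma monotoneOn_Ici_of_hasDerivAt_nonneg {f f' : ℝ → ℝ} {a : ℝ}
    (hf : ∀ t ∈ Ici a, HasDerivAt f (f' t) t) (hf' : ∀ t ∈ Ioi a, 0 ≤ f' t) :
    MonotoneOn f (Ici a) :=
  monotoneOn_of_hasDerivWithinAt_nonneg (convex_Ici a)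
    (fun t ht => (hf t ht).continuousAt.continuousWithinAt)
    (fun t ht => by
      rw [interior_Ici] at ht ⊢
      exact (hf t (mem_Ici_of_Ioi ht)).hasDerivWithinAt)
    (by rwa [interior_Ici])

lemma add_mul_le_of_le_hasDerivAt {f f' : ℝ → ℝ} {a C : ℝ}
    (hf : ∀ t ∈ Ici a, HasDerivAt f (f' t) t) (hf' : ∀ t ∈ Ioi a, C ≤ f' t) :
    ∀ t ∈ Ici a, f a + C * (t - a) ≤ f t := by
  have hmono : MonotoneOn (fun t => f t - C * t) (Ici a) :=
    monotoneOn_Ici_of_hasDerivAt_nonneg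
      (fun t ht => by simpa using (hf t ht).fun_sub ((hasDerivAt_id t).const_mul C))
      (fun t ht => sub_nonneg.mpr (hf' t ht))
  intro t ht
  have := hmono self_mem_Ici ht ht
  simp only at this
  linarith

lemma intervalIntegral_le_setIntegral_Ici {f : ℝ → ℝ} {a x : ℝ} (hf : IntegrableOn f (Ici a))
    (hf₀ : ∀ s ∈ Ici a, 0 ≤ f s) (hx : a ≤ x) : ∫ s in a..x, f s ≤ ∫ s in Ici a, f s := by
  rw [intervalIntegral.integral_of_le hx]
  exact setIntegral_mono_set hf
    (by filter_upwards [ae_restrict_mem measurableSet_Ici] with s hs using hf₀ s hs)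
    (Ioc_subset_Icc_self.trans Icc_subset_Ici_self).eventuallyLE

lemma mul_le_integral_inv_of_le_hasDerivAt {g w w' : ℝ → ℝ} {a c : ℝ} (hc : 0 < c)
    (hg : ContinuousOn g (Ioi 0)) (hg_pos : ∀ s ∈ Ioi 0, 0 < g s)
    (hint : IntegrableOn (fun s => 1 / g s) (Ici c))
    (hw : ∀ t ∈ Ici 0, HasDerivAt w (w' t) t) (hw0 : w 0 = c) (hwc : ∀ t ∈ Ici 0, c ≤ w t)
    (hw' : ∀ t ∈ Ioi 0, a * g (w t) ≤ w' t) :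
    ∀ t ∈ Ici 0, a * t ≤ ∫ s in Ici c, 1 / g s := by
  set G : ℝ → ℝ := fun x => ∫ s in c..x, 1 / g s
  have hinv_cont : ContinuousOn (fun s => 1 / g s) (Ioi 0) :=
    continuousOn_const.div hg fun s hs => (hg_pos s hs).ne'
  have hG : ∀ x ∈ Ici c, HasDerivAt G (1 / g x) x := fun x hx =>
    have hx₀ : x ∈ Ioi 0 := hc.trans_le hx
    intervalIntegral.integral_hasDerivAt_right
      ((hint.mono_set (by rw [uIcc_of_le hx]; exact Icc_subset_Ici_self)).intervalIntegrable)
      (hinv_cont.stronglyMeasurableAtFilter isOpen_Ioi x hx₀)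
      (hinv_cont.continuousAt (isOpen_Ioi.mem_nhds hx₀))
  have hGw : ∀ t ∈ Ici 0, HasDerivAt (G ∘ w) (w' t / g (w t)) t := fun t ht => by
    simpa only [one_div, div_eq_inv_mul, mul_one] using (hG (w t) (hwc t ht)).comp t (hw t ht)
  have hGw' : ∀ t ∈ Ioi 0, a ≤ w' t / g (w t) := fun t ht =>
    (le_div_iff₀ (hg_pos _ (hc.trans_le (hwc t (mem_Ici_of_Ioi ht))))).mpr (hw' t ht)
  intro t ht
  calc a * t = G (w 0) + a * (t - 0) := by simp [G, hw0]
    _ ≤ G (w t) := add_mul_le_of_le_hasDerivAt hGw hGw' t ht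
    _ ≤ ∫ s in Ici c, 1 / g s := intervalIntegral_le_setIntegral_Ici hint
        (fun s hs => (one_div_pos.mpr (hg_pos s (hc.trans_le hs))).le) (hwc t ht)

theorem no_global_solution_separated_variables_general
    (f₁ f₂ g₁ g₂ : ℝ → ℝ) (c₁ c₂ : ℝ)
    (hf₂_cont : ContinuousOn f₂ (Ici (0 : ℝ)))
    (hg₁_cont : ContinuousOn g₁ (Ici (0 : ℝ))) (hg₂_cont : ContinuousOn g₂ (Ici (0 : ℝ)))
    (hf₁_mono : MonotoneOn f₁ (Ici (0 : ℝ)))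
    (hf₁_pos : ∀ s ∈ Ioi (0 : ℝ), 0 < f₁ s) (hf₂_pos : ∀ s ∈ Ioi (0 : ℝ), 0 < f₂ s)
    (hg₁_pos : ∀ s ∈ Ioi (0 : ℝ), 0 < g₁ s) (hg₂_pos : ∀ s ∈ Ioi (0 : ℝ), 0 < g₂ s)
    (hc₁ : 0 < c₁) (hc₂ : 0 < c₂)
    (hint : IntegrableOn (fun s => 1 / g₁ s) (Ici c₁)) :
    ¬ ∃ w z : ℝ → ℝ,
        (∀ t : ℝ, 0 ≤ t → 0 ≤ w t ∧ 0 ≤ z t) ∧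
        w 0 = c₁ ∧ z 0 = c₂ ∧
        (∀ t : ℝ, 0 ≤ t →
          HasDerivAt w (f₁ (z t) * g₁ (w t)) t ∧
          HasDerivAt z (f₂ (z t) * g₂ (w t)) t) := by
  rintro ⟨w, z, hnn, hw0, hz0, hderiv⟩
  have hf₂_nonneg := nonneg_on_Ici_of_nonneg_on_Ioi hf₂_cont fun s hs => (hf₂_pos s hs).le
  have hg₁_nonneg := nonneg_on_Ici_of_nonneg_on_Ioi hg₁_cont fun s hs => (hg₁_pos s hs).le
  have hg₂_nonneg := nonneg_on_Ici_of_nonneg_on_Ioi hg₂_cont fun s hs => (hg₂_pos s hs).le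
  have hz : ∀ t ∈ Ici (0 : ℝ), c₂ ≤ z t := fun t ht =>
    hz0 ▸ monotoneOn_Ici_of_hasDerivAt_nonneg (fun t ht => (hderiv t ht).2)
      (fun t ht => mul_nonneg (hf₂_nonneg _ (hnn t ht.le).2) (hg₂_nonneg _ (hnn t ht.le).1))
      self_mem_Ici ht ht
  have hf₁z : ∀ t ∈ Ici (0 : ℝ), f₁ c₂ ≤ f₁ (z t) := fun t ht =>
    hf₁_mono hc₂.le (hc₂.le.trans (hz t ht)) (hz t ht)
  have hw : ∀ t ∈ Ici (0 : ℝ), c₁ ≤ w t := fun t ht =>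
    hw0 ▸ monotoneOn_Ici_of_hasDerivAt_nonneg (fun t ht => (hderiv t ht).1)
      (fun t ht => mul_nonneg ((hf₁_pos c₂ hc₂).le.trans (hf₁z t (mem_Ici_of_Ioi ht)))
        (hg₁_nonneg _ (hnn t ht.le).1))
      self_mem_Ici ht ht
  have hbound := mul_le_integral_inv_of_le_hasDerivAt hc₁ (hg₁_cont.mono Ioi_subset_Ici_self)
    hg₁_pos hint (fun t ht => (hderiv t ht).1) hw0 hw
    fun t ht =>
      mul_le_mul_of_nonneg_right (hf₁z t (mem_Ici_of_Ioi ht)) (hg₁_nonneg _ (hnn t ht.le).1)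
  set M := ∫ s in Ici c₁, 1 / g₁ s
  have hM : 0 ≤ M := by simpa using hbound 0 self_mem_Ici
  have ha := hf₁_pos c₂ hc₂
  have := hbound ((M + 1) / f₁ c₂) (div_nonneg (by linarith) ha.le)
  rw [mul_div_cancel₀ _ ha.ne'] at this
  linarith

/-- Theorem A, part (1), of the paper: for the separated-variables system
`w' = f₁(z) g₁(w)`, `z' = f₂(z) g₂(w)` with positive initial data, the condition
`∫_{c₁}^∞ dw / g₁(w) < ∞` rules out global solutions (the solution blows up in
finite time). -/
theorem no_global_solution_separated_variables
    (f₁ f₂ g₁ g₂ : ℝ → ℝ) (c₁ c₂ : ℝ)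
    (hf₁_cont : ContinuousOn f₁ (Ici (0 : ℝ))) (hf₂_cont : ContinuousOn f₂ (Ici (0 : ℝ)))
    (hg₁_cont : ContinuousOn g₁ (Ici (0 : ℝ))) (hg₂_cont : ContinuousOn g₂ (Ici (0 : ℝ)))
    (hf₁_mono : MonotoneOn f₁ (Ici (0 : ℝ))) (hf₂_mono : MonotoneOn f₂ (Ici (0 : ℝ)))
    (hg₁_mono : MonotoneOn g₁ (Ici (0 : ℝ))) (hg₂_mono : MonotoneOn g₂ (Ici (0 : ℝ)))
    (hf₁_pos : ∀ s ∈ Ioi (0 : ℝ), 0 < f₁ s) (hf₂_pos : ∀ s ∈ Ioi (0 : ℝ), 0 < f₂ s)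
    (hg₁_pos : ∀ s ∈ Ioi (0 : ℝ), 0 < g₁ s) (hg₂_pos : ∀ s ∈ Ioi (0 : ℝ), 0 < g₂ s)
    (hc₁ : 0 < c₁) (hc₂ : 0 < c₂)
    (hint : IntegrableOn (fun s => 1 / g₁ s) (Ici c₁)) :
    ¬ ∃ w z : ℝ → ℝ,
        (∀ t : ℝ, 0 ≤ t → 0 ≤ w t ∧ 0 ≤ z t) ∧
        w 0 = c₁ ∧ z 0 = c₂ ∧
        (∀ t : ℝ, 0 ≤ t →
          HasDerivAt w (f₁ (z t) * g₁ (w t)) t ∧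
          HasDerivAt z (f₂ (z t) * g₂ (w t)) t) :=
  no_global_solution_separated_variables_general f₁ f₂ g₁ g₂ c₁ c₂ hf₂_cont hg₁_cont hg₂_cont
    hf₁_mono hf₁_pos hf₂_pos hg₁_pos hg₂_pos hc₁ hc₂ hint
end

section
/- Let f, g : [0,∞) × [0,∞) → ℝ be continuous, let h, l : [0,∞) → [0,∞) be continuously differentiable, and let H : [0,∞) → (0,∞) be continuous and locally Lipschitz with ∫_{0}^{∞} ds / H(s) = ∞. Suppose f(w,z)·h'(w)·l(z) + g(w,z)·h(w)·l'(z) ≤ H(h(w)·l(z)) for all w, z ≥ 0. If w, z : [0,T) → [0,∞) are differentiable with w' = f(w,z), z' = g(w,z) and w(0) = c₁ ≥ 0, z(0) = c₂ ≥ 0, then h(w(t))·l(z(t)) ≤ s(t) for all t ∈ [0,T), where s is the (global) solution of s' = H(s), s(0) = h(c₁)·l(c₂); in particular t ↦ h(w(t))·l(z(t)) is bounded on every bounded subinterval of [0,T). -/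
open Set MeasureTheory Filter

/-! A primitive `G` of `1 / H` is strictly increasing, and it straightens the scalar equation:
`(G ∘ s)' = 1` for `s' = H(s)`, while the hypothesis on `f, g, h, l` says exactly that
`u = h(w) l(z)` satisfies `u' ≤ H(u)`, hence `(G ∘ u)' ≤ 1`. Comparing `G ∘ u` with `G ∘ s`
from equal initial values gives `G(u) ≤ G(s)`, so `u ≤ s`. Since `H` is only positive on
`[0, ∞)`, it is replaced by `y ↦ H (max y 0)`, which changes nothing along `u ≥ 0` and
`s ≥ s(0) ≥ 0`. -/

theorem exists_strictMono_hasDerivAt_inv {F : ℝ → ℝ} (hF : Continuous F)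
    (hF_pos : ∀ x, 0 < F x) : ∃ G : ℝ → ℝ, StrictMono G ∧ ∀ x, HasDerivAt G (F x)⁻¹ x := by
  have hinv : Continuous fun y => (F y)⁻¹ := hF.inv₀ fun y => (hF_pos y).ne'
  have hG : ∀ x, HasDerivAt (fun x => ∫ y in (0 : ℝ)..x, (F y)⁻¹) (F x)⁻¹ x := fun x =>
    (hinv.integral_hasStrictDerivAt 0 x).hasDerivAt
  refine ⟨_, strictMono_of_deriv_pos fun x => ?_, hG⟩
  rw [(hG x).deriv]
  exact inv_pos.mpr (hF_pos x)

theorem image_le_of_deriv_right_le_autonomous_boundary {F u u' s : ℝ → ℝ} {a b : ℝ}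
    (hF : Continuous F) (hF_pos : ∀ x, 0 < F x)
    (hu : ContinuousOn u (Icc a b)) (hu' : ∀ r ∈ Ico a b, HasDerivWithinAt u (u' r) (Ici r) r)
    (hu'_le : ∀ r ∈ Ico a b, u' r ≤ F (u r)) (hs : ContinuousOn s (Icc a b))
    (hs' : ∀ r ∈ Ico a b, HasDerivWithinAt s (F (s r)) (Ici r) r) (ha : u a ≤ s a) :
    ∀ r ∈ Icc a b, u r ≤ s r := by
  obtain ⟨G, hG_mono, hG⟩ := exists_strictMono_hasDerivAt_inv hF hF_pos
  have hG_cont : Continuous G := continuous_iff_continuousAt.mpr fun x => (hG x).continuousAt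
  have hGu : ∀ r ∈ Icc a b, G (u r) ≤ G (s r) := by
    refine image_le_of_deriv_right_le_deriv_boundary (hG_cont.comp_continuousOn hu)
      (fun r hr => (hG (u r)).comp_hasDerivWithinAt r (hu' r hr)) (hG_mono.monotone ha)
      (hG_cont.comp_continuousOn hs)
      (fun r hr => (hG (s r)).comp_hasDerivWithinAt r (hs' r hr)) fun r hr => ?_
    rw [inv_mul_cancel₀ (hF_pos (s r)).ne', inv_mul_le_iff₀ (hF_pos (u r)), mul_one]
    exact hu'_le r hr
  exact fun r hr => hG_mono.le_iff_le.mp (hGu r hr)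

theorem initial_le_of_deriv_right_autonomous {H s : ℝ → ℝ} {a b : ℝ}
    (hs : ContinuousOn s (Icc a b))
    (hs' : ∀ r ∈ Ico a b, HasDerivWithinAt s (H (s r)) (Ici r) r) (hH : 0 < H (s a)) :
    ∀ r ∈ Icc a b, s a ≤ s r :=
  image_le_of_deriv_right_lt_deriv_boundary' continuousOn_const
    (fun r _ => hasDerivWithinAt_const r _ (s a)) le_rfl hs hs'
    (fun r _ hr => by rwa [← hr])

theorem sup_control_thmB_part1_general
    (f g : ℝ → ℝ → ℝ) (h l H : ℝ → ℝ) (c₁ c₂ T : ℝ)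
    (hh_diff : ContDiff ℝ 1 h) (hl_diff : ContDiff ℝ 1 l)
    (hh_nonneg : ∀ x, 0 ≤ x → 0 ≤ h x) (hl_nonneg : ∀ x, 0 ≤ x → 0 ≤ l x)
    (hH_cont : Continuous H) (hH_pos : ∀ x, 0 ≤ x → 0 < H x)
    (hineq : ∀ x y : ℝ, 0 ≤ x → 0 ≤ y →
      f x y * deriv h x * l y + g x y * h x * deriv l y ≤ H (h x * l y))
    (hc₁ : 0 ≤ c₁) (hc₂ : 0 ≤ c₂)
    (s : ℝ → ℝ)
    (hs0 : s 0 = h c₁ * l c₂)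
    (hs' : ∀ t : ℝ, 0 ≤ t → HasDerivAt s (H (s t)) t)
    (w z : ℝ → ℝ)
    (hw0 : w 0 = c₁) (hz0 : z 0 = c₂)
    (hnn : ∀ t ∈ Ico (0 : ℝ) T, 0 ≤ w t ∧ 0 ≤ z t)
    (hw' : ∀ t ∈ Ico (0 : ℝ) T, HasDerivAt w (f (w t) (z t)) t)
    (hz' : ∀ t ∈ Ico (0 : ℝ) T, HasDerivAt z (g (w t) (z t)) t) :
    ∀ t ∈ Ico (0 : ℝ) T, h (w t) * l (z t) ≤ s t := by
  rintro t ⟨ht0, htT⟩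
  set u : ℝ → ℝ := fun r => h (w r) * l (z r)
  have hsub : Icc 0 t ⊆ Ico 0 T := Icc_subset_Ico_right htT
  have hu' : ∀ r ∈ Ico 0 T, HasDerivAt u
      (deriv h (w r) * f (w r) (z r) * l (z r) + h (w r) * (deriv l (z r) * g (w r) (z r))) r :=
    fun r hr => ((hh_diff.differentiable one_ne_zero _).hasDerivAt.comp r (hw' r hr)).mul
      ((hl_diff.differentiable one_ne_zero _).hasDerivAt.comp r (hz' r hr))
  have hu_nonneg : ∀ r ∈ Ico 0 T, 0 ≤ u r := fun r hr =>
    mul_nonneg (hh_nonneg _ (hnn r hr).1) (hl_nonneg _ (hnn r hr).2)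
  have hs0_nonneg : 0 ≤ s 0 := hs0 ▸ mul_nonneg (hh_nonneg _ hc₁) (hl_nonneg _ hc₂)
  have hs_ge : ∀ r ∈ Icc 0 t, s 0 ≤ s r :=
    initial_le_of_deriv_right_autonomous (fun r hr => (hs' r hr.1).continuousAt.continuousWithinAt)
      (fun r hr => (hs' r hr.1).hasDerivWithinAt) (hH_pos _ hs0_nonneg)
  have hH_max : ∀ y, 0 ≤ y → H (max y 0) = H y := fun y hy => by rw [max_eq_left hy]
  refine image_le_of_deriv_right_le_autonomous_boundary (F := fun y => H (max y 0))
    (hH_cont.comp (continuous_id.max continuous_const)) (fun y => hH_pos _ (le_max_right _ _))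
    (fun r hr => (hu' r (hsub hr)).continuousAt.continuousWithinAt)
    (fun r hr => (hu' r (hsub (Ico_subset_Icc_self hr))).hasDerivWithinAt) (fun r hr => ?_)
    (fun r hr => (hs' r hr.1).continuousAt.continuousWithinAt) (fun r hr => ?_)
    (by simp [u, hw0, hz0, hs0]) t ⟨ht0, le_rfl⟩
  · have hr' := hsub (Ico_subset_Icc_self hr)
    rw [hH_max _ (hu_nonneg r hr')]
    linarith [hineq _ _ (hnn r hr').1 (hnn r hr').2]
  · rw [hH_max _ (hs0_nonneg.trans (hs_ge r (Ico_subset_Icc_self hr)))]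
    exact (hs' r hr.1).hasDerivWithinAt

/-- Theorem B, part (1), of the paper: if
`f(w,z) h'(w) l(z) + g(w,z) h(w) l'(z) ≤ H(h(w) l(z))` with `H > 0` and
`∫_0^∞ ds/H(s) = ∞`, then along any solution of `w' = f(w,z)`, `z' = g(w,z)` the
product `h(w(t)) l(z(t))` is dominated by the global solution of `s' = H(s)`,
`s(0) = h(c₁) l(c₂)`. -/
theorem sup_control_thmB_part1
    (f g : ℝ → ℝ → ℝ) (h l H : ℝ → ℝ) (c₁ c₂ T : ℝ)
    (hf_cont : Continuous fun p : ℝ × ℝ => f p.1 p.2)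
    (hg_cont : Continuous fun p : ℝ × ℝ => g p.1 p.2)
    (hh_diff : ContDiff ℝ 1 h) (hl_diff : ContDiff ℝ 1 l)
    (hh_nonneg : ∀ x, 0 ≤ x → 0 ≤ h x) (hl_nonneg : ∀ x, 0 ≤ x → 0 ≤ l x)
    (hH_cont : Continuous H) (hH_pos : ∀ x, 0 ≤ x → 0 < H x)
    (hH_lip : LocallyLipschitz H)
    (hH_div : ¬ IntegrableOn (fun x => 1 / H x) (Ici (0 : ℝ)))
    (hineq : ∀ x y : ℝ, 0 ≤ x → 0 ≤ y →
      f x y * deriv h x * l y + g x y * h x * deriv l y ≤ H (h x * l y))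
    (hc₁ : 0 ≤ c₁) (hc₂ : 0 ≤ c₂)
    (s : ℝ → ℝ)
    (hs0 : s 0 = h c₁ * l c₂)
    (hs' : ∀ t : ℝ, 0 ≤ t → HasDerivAt s (H (s t)) t)
    (w z : ℝ → ℝ)
    (hw0 : w 0 = c₁) (hz0 : z 0 = c₂)
    (hnn : ∀ t ∈ Ico (0 : ℝ) T, 0 ≤ w t ∧ 0 ≤ z t)
    (hw' : ∀ t ∈ Ico (0 : ℝ) T, HasDerivAt w (f (w t) (z t)) t)
    (hz' : ∀ t ∈ Ico (0 : ℝ) T, HasDerivAt z (g (w t) (z t)) t) :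
    ∀ t ∈ Ico (0 : ℝ) T, h (w t) * l (z t) ≤ s t :=
  sup_control_thmB_part1_general f g h l H c₁ c₂ T hh_diff hl_diff hh_nonneg hl_nonneg hH_cont
    hH_pos hineq hc₁ hc₂ s hs0 hs' w z hw0 hz0 hnn hw' hz'
end

section
/- Let f, g : [0,∞) × [0,∞) → [0,∞) be continuous and nonnegative, let h, l : [0,∞) → [0,∞) be continuously differentiable, nondecreasing, and satisfying lim_{s→∞} h(s) = lim_{s→∞} l(s) = ∞, and let H : [0,∞) → (0,∞) be continuous and locally Lipschitz with ∫_{0}^{∞} ds / H(s) = ∞. Suppose f(w,z)·h'(w)·l(z) + g(w,z)·h(w)·l'(z) ≤ H(h(w)·l(z)) for all w, z ≥ 0, and let c₁, c₂ ≥ 0 with h(c₁) > 0 and l(c₂) > 0. Then every solution w, z : [0,T) → [0,∞) of w' = f(w,z), z' = g(w,z) with w(0) = c₁, z(0) = c₂ on a finite interval [0,T) is bounded on [0,T); hence the solution is global. -/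
/-!
Since `f, g ≥ 0`, both components are nondecreasing, and the chain rule together with the
structural inequality gives `u' ≤ H(u)` for `u = h(w) l(z)`. Hence `s ↦ s - ∫₀^{u(s)} dx/H(x)`
is nondecreasing, so `∫₀^{u(t)} dx/H ≤ ∫₀^{u(0)} dx/H + T`; as `∫₀^∞ dx/H = ∞`, this bounds
`u` on `[0,T)` (Osgood's criterion). Finally `h(w) l(z) ≥ h(w) l(c₂)` and `h → ∞` bound `w`,
and symmetrically `z`.
-/

open Set MeasureTheory Filter

lemma monotoneOn_of_hasDerivAt_nonneg_s7 {D : Set ℝ} (hD : Convex ℝ D) {f f' : ℝ → ℝ}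
    (hf : ∀ x ∈ D, HasDerivAt f (f' x) x) (hf₀ : ∀ x ∈ D, 0 ≤ f' x) : MonotoneOn f D :=
  monotoneOn_of_hasDerivWithinAt_nonneg hD
    (fun x hx => (hf x hx).continuousAt.continuousWithinAt)
    (fun x hx => (hf x (interior_subset hx)).hasDerivWithinAt)
    (fun x hx => hf₀ x (interior_subset hx))

lemma exists_lt_intervalIntegral_of_not_integrableOn_Ici {φ : ℝ → ℝ} {a : ℝ}
    (hφ : ContinuousOn φ (Ici a)) (hφ_nonneg : ∀ x ∈ Ici a, 0 ≤ φ x)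
    (hdiv : ¬ IntegrableOn φ (Ici a)) (B : ℝ) : ∃ M, a ≤ M ∧ B < ∫ x in a..M, φ x := by
  by_contra! hbdd
  refine hdiv ((integrableOn_Ici_iff_integrableOn_Ioi).2 <|
    integrableOn_Ioi_of_intervalIntegral_norm_bounded B a (b := fun n : ℕ => a + n)
      (fun n => ?_) (tendsto_atTop_add_const_left _ a tendsto_natCast_atTop_atTop)
      (Eventually.of_forall fun n => ?_))
  · exact ((hφ.mono Icc_subset_Ici_self).integrableOn_Icc).mono_set Ioc_subset_Icc_self
  · have ha : a ≤ a + n := le_add_of_nonneg_right n.cast_nonneg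
    calc ∫ x in a..a + n, ‖φ x‖ = ∫ x in a..a + n, φ x :=
          intervalIntegral.integral_congr fun x hx =>
            Real.norm_of_nonneg (hφ_nonneg x (uIcc_of_le ha ▸ hx).1)
      _ ≤ B := hbdd _ ha

section Osgood

variable {H : ℝ → ℝ} (hH : Continuous H) (hH_pos : ∀ x, 0 ≤ x → 0 < H x)
include hH hH_pos

lemma continuousOn_one_div_Ici : ContinuousOn (fun x => 1 / H x) (Ici 0) :=
  continuousOn_const.div hH.continuousOn fun x hx => (hH_pos x hx).ne'

lemma intervalIntegrable_one_div {s : ℝ} (hs : 0 ≤ s) :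
    IntervalIntegrable (fun x => 1 / H x) volume 0 s :=
  (continuousOn_one_div_Ici hH hH_pos).mono (uIcc_of_le hs ▸ Icc_subset_Ici_self)
    |>.intervalIntegrable

lemma hasDerivAt_integral_one_div {s : ℝ} (hs : 0 ≤ s) :
    HasDerivAt (fun s => ∫ x in (0 : ℝ)..s, 1 / H x) (1 / H s) s :=
  intervalIntegral.integral_hasDerivAt_right
    (intervalIntegrable_one_div hH hH_pos hs)
    ((measurable_const.div hH.measurable).stronglyMeasurable.stronglyMeasurableAtFilter)
    (continuousAt_const.div hH.continuousAt (hH_pos s hs).ne')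

lemma integral_one_div_comp_le {u u' : ℝ → ℝ} {a b t : ℝ}
    (hu_nonneg : ∀ s ∈ Ico a b, 0 ≤ u s) (hu : ∀ s ∈ Ico a b, HasDerivAt u (u' s) s)
    (hu' : ∀ s ∈ Ico a b, u' s ≤ H (u s)) (ht : t ∈ Ico a b) :
    ∫ x in (0 : ℝ)..u t, 1 / H x ≤ (∫ x in (0 : ℝ)..u a, 1 / H x) + (t - a) := by
  have hmono : MonotoneOn (fun s => s - ∫ x in (0 : ℝ)..u s, 1 / H x) (Ico a b) := by
    refine monotoneOn_of_hasDerivAt_nonneg_s7 (convex_Ico a b)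
      (fun s hs => (hasDerivAt_id s).sub
        ((hasDerivAt_integral_one_div hH hH_pos (hu_nonneg s hs)).comp s (hu s hs))) ?_
    intro s hs
    have hle : 1 / H (u s) * u' s ≤ 1 := by
      rw [one_div, inv_mul_le_iff₀ (hH_pos _ (hu_nonneg s hs)), mul_one]
      exact hu' s hs
    exact sub_nonneg.2 hle
  linarith [hmono (left_mem_Ico.2 (ht.1.trans_lt ht.2)) ht ht.1]

theorem bddAbove_image_of_hasDerivAt_le (hdiv : ¬ IntegrableOn (fun x => 1 / H x) (Ici 0))
    {u u' : ℝ → ℝ} {a b : ℝ}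
    (hu_nonneg : ∀ s ∈ Ico a b, 0 ≤ u s) (hu : ∀ s ∈ Ico a b, HasDerivAt u (u' s) s)
    (hu' : ∀ s ∈ Ico a b, u' s ≤ H (u s)) : BddAbove (u '' Ico a b) := by
  have hinv_nonneg : ∀ x ∈ Ici (0 : ℝ), 0 ≤ 1 / H x := fun x hx => (one_div_pos.2 (hH_pos x hx)).le
  obtain ⟨M, hM, hlt⟩ := exists_lt_intervalIntegral_of_not_integrableOn_Ici
    (continuousOn_one_div_Ici hH hH_pos) hinv_nonneg hdiv ((∫ x in (0 : ℝ)..u a, 1 / H x) + (b - a))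
  refine ⟨M, forall_mem_image.2 fun t ht => ?_⟩
  by_contra! hMt
  have hmono : ∫ x in (0 : ℝ)..M, 1 / H x ≤ ∫ x in (0 : ℝ)..u t, 1 / H x :=
    intervalIntegral.integral_mono_interval le_rfl hM hMt.le
      ((ae_restrict_iff' measurableSet_Ioc).2 (Eventually.of_forall fun x hx =>
        hinv_nonneg x hx.1.le))
      (intervalIntegrable_one_div hH hH_pos (hM.trans hMt.le))
  linarith [integral_one_div_comp_le hH hH_pos hu_nonneg hu hu' ht, ht.2]

end Osgood

lemma exists_forall_le_of_mul_le {h l : ℝ → ℝ} {c₁ c₂ : ℝ} (M : ℝ)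
    (hh_top : Tendsto h atTop atTop) (hh_nonneg : ∀ x, 0 ≤ x → 0 ≤ h x)
    (hl_mono : MonotoneOn l (Ici 0)) (hc₁ : 0 ≤ c₁) (hc₂ : 0 ≤ c₂) (hlc₂ : 0 < l c₂) :
    ∃ K, ∀ x y, c₁ ≤ x → c₂ ≤ y → h x * l y ≤ M → x ≤ K := by
  obtain ⟨K, hK⟩ := (hh_top.eventually_gt_atTop (M / l c₂)).exists_forall_of_atTop
  refine ⟨K, fun x y hx hy hxy => le_of_not_gt fun hKx => (hK x hKx.le).not_ge ?_⟩
  rw [le_div_iff₀ hlc₂]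
  exact (mul_le_mul_of_nonneg_left (hl_mono hc₂ (hc₂.trans hy) hy)
    (hh_nonneg x (hc₁.trans hx))).trans hxy

theorem global_existence_thmB_part1_general
    (f g : ℝ → ℝ → ℝ) (h l H : ℝ → ℝ) (c₁ c₂ T : ℝ)
    (hf_nonneg : ∀ x y : ℝ, 0 ≤ x → 0 ≤ y → 0 ≤ f x y)
    (hg_nonneg : ∀ x y : ℝ, 0 ≤ x → 0 ≤ y → 0 ≤ g x y)
    (hh_diff : ContDiff ℝ 1 h) (hl_diff : ContDiff ℝ 1 l)
    (hh_nonneg : ∀ x, 0 ≤ x → 0 ≤ h x) (hl_nonneg : ∀ x, 0 ≤ x → 0 ≤ l x)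
    (hh_mono : MonotoneOn h (Ici (0 : ℝ))) (hl_mono : MonotoneOn l (Ici (0 : ℝ)))
    (hh_top : Tendsto h atTop atTop) (hl_top : Tendsto l atTop atTop)
    (hH_cont : Continuous H) (hH_pos : ∀ x, 0 ≤ x → 0 < H x)
    (hH_div : ¬ IntegrableOn (fun x => 1 / H x) (Ici (0 : ℝ)))
    (hineq : ∀ x y : ℝ, 0 ≤ x → 0 ≤ y →
      f x y * deriv h x * l y + g x y * h x * deriv l y ≤ H (h x * l y))
    (hc₁ : 0 ≤ c₁) (hc₂ : 0 ≤ c₂) (hhc₁ : 0 < h c₁) (hlc₂ : 0 < l c₂)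
    (w z : ℝ → ℝ)
    (hw0 : w 0 = c₁) (hz0 : z 0 = c₂)
    (hnn : ∀ t ∈ Ico (0 : ℝ) T, 0 ≤ w t ∧ 0 ≤ z t)
    (hw' : ∀ t ∈ Ico (0 : ℝ) T, HasDerivAt w (f (w t) (z t)) t)
    (hz' : ∀ t ∈ Ico (0 : ℝ) T, HasDerivAt z (g (w t) (z t)) t) :
    ∃ C : ℝ, ∀ t ∈ Ico (0 : ℝ) T, w t ≤ C ∧ z t ≤ C := by
  have hw_mono : MonotoneOn w (Ico 0 T) := monotoneOn_of_hasDerivAt_nonneg_s7 (convex_Ico 0 T) hw'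
    fun t ht => hf_nonneg _ _ (hnn t ht).1 (hnn t ht).2
  have hz_mono : MonotoneOn z (Ico 0 T) := monotoneOn_of_hasDerivAt_nonneg_s7 (convex_Ico 0 T) hz'
    fun t ht => hg_nonneg _ _ (hnn t ht).1 (hnn t ht).2
  have hu : ∀ t ∈ Ico (0 : ℝ) T, HasDerivAt (fun s => h (w s) * l (z s))
      (deriv h (w t) * f (w t) (z t) * l (z t) + h (w t) * (deriv l (z t) * g (w t) (z t))) t :=
    fun t ht => (((hh_diff.differentiable one_ne_zero _).hasDerivAt.comp t (hw' t ht)).mul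
      ((hl_diff.differentiable one_ne_zero _).hasDerivAt.comp t (hz' t ht)))
  obtain ⟨M, hM⟩ := bddAbove_image_of_hasDerivAt_le hH_cont hH_pos hH_div
    (fun t ht => mul_nonneg (hh_nonneg _ (hnn t ht).1) (hl_nonneg _ (hnn t ht).2)) hu
    fun t ht => by linarith [hineq _ _ (hnn t ht).1 (hnn t ht).2]
  obtain ⟨K₁, hK₁⟩ := exists_forall_le_of_mul_le M hh_top hh_nonneg hl_mono hc₁ hc₂ hlc₂
  obtain ⟨K₂, hK₂⟩ := exists_forall_le_of_mul_le M hl_top hl_nonneg hh_mono hc₂ hc₁ hhc₁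
  refine ⟨max K₁ K₂, fun t ht => ?_⟩
  have h0 : (0 : ℝ) ∈ Ico 0 T := left_mem_Ico.2 (ht.1.trans_lt ht.2)
  have hwt : c₁ ≤ w t := hw0 ▸ hw_mono h0 ht ht.1
  have hzt : c₂ ≤ z t := hz0 ▸ hz_mono h0 ht ht.1
  have hut : h (w t) * l (z t) ≤ M := hM (mem_image_of_mem _ ht)
  exact ⟨(hK₁ _ _ hwt hzt hut).trans (le_max_left _ _),
    (hK₂ _ _ hzt hwt (mul_comm (h (w t)) _ ▸ hut)).trans (le_max_right _ _)⟩

/-- Special case in Theorem B, part (1), of the paper: if moreover `f, g ≥ 0`, `h, l`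
are nondecreasing and tend to `∞`, and `h(c₁) > 0`, `l(c₂) > 0`, then every solution
of `w' = f(w,z)`, `z' = g(w,z)` on a finite interval `[0,T)` is bounded; hence the
solution is global. -/
theorem global_existence_thmB_part1
    (f g : ℝ → ℝ → ℝ) (h l H : ℝ → ℝ) (c₁ c₂ T : ℝ)
    (hf_cont : Continuous fun p : ℝ × ℝ => f p.1 p.2)
    (hg_cont : Continuous fun p : ℝ × ℝ => g p.1 p.2)
    (hf_nonneg : ∀ x y : ℝ, 0 ≤ x → 0 ≤ y → 0 ≤ f x y)
    (hg_nonneg : ∀ x y : ℝ, 0 ≤ x → 0 ≤ y → 0 ≤ g x y)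
    (hh_diff : ContDiff ℝ 1 h) (hl_diff : ContDiff ℝ 1 l)
    (hh_nonneg : ∀ x, 0 ≤ x → 0 ≤ h x) (hl_nonneg : ∀ x, 0 ≤ x → 0 ≤ l x)
    (hh_mono : MonotoneOn h (Ici (0 : ℝ))) (hl_mono : MonotoneOn l (Ici (0 : ℝ)))
    (hh_top : Tendsto h atTop atTop) (hl_top : Tendsto l atTop atTop)
    (hH_cont : Continuous H) (hH_pos : ∀ x, 0 ≤ x → 0 < H x)
    (hH_lip : LocallyLipschitz H)
    (hH_div : ¬ IntegrableOn (fun x => 1 / H x) (Ici (0 : ℝ)))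
    (hineq : ∀ x y : ℝ, 0 ≤ x → 0 ≤ y →
      f x y * deriv h x * l y + g x y * h x * deriv l y ≤ H (h x * l y))
    (hc₁ : 0 ≤ c₁) (hc₂ : 0 ≤ c₂) (hhc₁ : 0 < h c₁) (hlc₂ : 0 < l c₂)
    (w z : ℝ → ℝ)
    (hw0 : w 0 = c₁) (hz0 : z 0 = c₂)
    (hnn : ∀ t ∈ Ico (0 : ℝ) T, 0 ≤ w t ∧ 0 ≤ z t)
    (hw' : ∀ t ∈ Ico (0 : ℝ) T, HasDerivAt w (f (w t) (z t)) t)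
    (hz' : ∀ t ∈ Ico (0 : ℝ) T, HasDerivAt z (g (w t) (z t)) t) :
    ∃ C : ℝ, ∀ t ∈ Ico (0 : ℝ) T, w t ≤ C ∧ z t ≤ C :=
  global_existence_thmB_part1_general f g h l H c₁ c₂ T hf_nonneg hg_nonneg hh_diff hl_diff
    hh_nonneg hl_nonneg hh_mono hl_mono hh_top hl_top hH_cont hH_pos hH_div hineq hc₁ hc₂ hhc₁ hlc₂
    w z hw0 hz0 hnn hw' hz'
end

section
/- Let f, g : [0,∞) × [0,∞) → ℝ be continuous, let h, l : [0,∞) → [0,∞) be continuously differentiable, and let L : [0,∞) → [0,∞) be continuous, locally Lipschitz, strictly positive on [s₀,∞) for s₀ = h(c₁)·l(c₂) > 0, and satisfying ∫_{s₀}^{∞} ds / L(s) < ∞. Suppose f(w,z)·h'(w)·l(z) + g(w,z)·h(w)·l'(z) ≥ L(h(w)·l(z)) ≥ 0 for all w, z ≥ 0. If w, z : [0,T) → [0,∞) are differentiable with w' = f(w,z), z' = g(w,z), w(0) = c₁, z(0) = c₂, then h(w(t))·l(z(t)) ≥ s(t) on [0,T), where s solves s' = L(s), s(0) = s₀; consequently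 T ≤ ∫_{s₀}^{∞} ds / L(s), i.e. the product h(w)·l(z) and the solution (w,z) blow up in finite time. -/
open Set MeasureTheory Filter

/-!
Put `u = h(w) l(z)` and `F(y) = ∫_{s₀}^y ds / L(s)`. The hypothesis on `f, g` says exactly that
`u' ≥ L(u)`, so `u` is a supersolution of `s' = L(s)`, just as `s` itself is. A supersolution
starting at `s₀` cannot drop below `s₀` (where it touches `s₀` its slope is at least `L(s₀) > 0`),
and on `[s₀, ∞)` separation of variables gives `(F ∘ u)' = u' / L(u) ≥ 1 = (F ∘ s)'`. Hence
`F(s(t)) = t ≤ F(u(t))`, so `s ≤ u` because `F` is increasing, and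
`t ≤ F(u(t)) ≤ ∫_{s₀}^∞ ds / L(s)` for every `t < T`.
-/

theorem hasDerivAt_comp_mul_comp {h l w z : ℝ → ℝ} {w' z' t : ℝ}
    (hh : Differentiable ℝ h) (hl : Differentiable ℝ l)
    (hw : HasDerivAt w w' t) (hz : HasDerivAt z z' t) :
    HasDerivAt (fun t => h (w t) * l (z t))
      (w' * deriv h (w t) * l (z t) + z' * h (w t) * deriv l (z t)) t := by
  have := ((hh (w t)).hasDerivAt.comp t hw).mul ((hl (z t)).hasDerivAt.comp t hz)
  exact this.congr_deriv (by simp only [Function.comp_apply]; ring)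

def IsSupersolution (L : ℝ → ℝ) (T : ℝ) (B : ℝ → ℝ) : Prop :=
  ∀ t ∈ Ico 0 T, ∃ B', HasDerivAt B B' t ∧ L (B t) ≤ B'

section SeparationOfVariables

variable {L : ℝ → ℝ} {a : ℝ}

theorem hasDerivAt_integral_one_div_s8 (hL : Continuous L) (hpos : ∀ x ∈ Ici a, 0 < L x)
    {y : ℝ} (hy : a ≤ y) :
    HasDerivAt (fun y => ∫ x in a..y, 1 / L x) (1 / L y) y := by
  have hcont : ∀ x ∈ Ici a, ContinuousAt (fun x => 1 / L x) x := fun x hx =>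
    continuousAt_const.div hL.continuousAt (hpos x hx).ne'
  refine intervalIntegral.integral_hasDerivAt_right ?_ ?_ (hcont y hy)
  · refine ContinuousOn.intervalIntegrable fun x hx => (hcont x ?_).continuousWithinAt
    rw [uIcc_of_le hy] at hx
    exact hx.1
  · exact (measurable_const.div hL.measurable).stronglyMeasurable.stronglyMeasurableAtFilter

theorem strictMonoOn_integral_one_div (hL : Continuous L) (hpos : ∀ x ∈ Ici a, 0 < L x) :
    StrictMonoOn (fun y => ∫ x in a..y, 1 / L x) (Ici a) := by
  refine strictMonoOn_of_deriv_pos (convex_Ici a)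
    (fun y hy => (hasDerivAt_integral_one_div_s8 hL hpos hy).continuousAt.continuousWithinAt)
    fun y hy => ?_
  rw [interior_Ici, mem_Ioi] at hy
  rw [(hasDerivAt_integral_one_div_s8 hL hpos hy.le).deriv]
  exact one_div_pos.mpr (hpos y hy.le)

theorem integral_one_div_le_setIntegral_Ici (hpos : ∀ x ∈ Ici a, 0 < L x)
    (hint : IntegrableOn (fun x => 1 / L x) (Ici a)) {y : ℝ} (hy : a ≤ y) :
    ∫ x in a..y, 1 / L x ≤ ∫ x in Ici a, 1 / L x := by
  rw [intervalIntegral.integral_of_le hy]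
  refine setIntegral_mono_set hint ?_ (Ioc_subset_Ioi_self.trans Ioi_subset_Ici_self).eventuallyLE
  filter_upwards [self_mem_ae_restrict measurableSet_Ici] with x hx
  exact (one_div_pos.mpr (hpos x hx)).le

variable {T : ℝ} {B : ℝ → ℝ}

theorem isSupersolution_of_hasDerivAt (hB : ∀ t ∈ Ico 0 T, HasDerivAt B (L (B t)) t) :
    IsSupersolution L T B := fun t ht => ⟨_, hB t ht, le_rfl⟩

theorem IsSupersolution.le_apply (hB : IsSupersolution L T B) (ha : 0 < L a) (hB0 : a ≤ B 0) :
    ∀ t ∈ Ico 0 T, a ≤ B t := by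
  choose! B' hB' hBL using hB
  intro t ⟨ht0, htT⟩
  have hsub : Icc 0 t ⊆ Ico 0 T := fun r hr => ⟨hr.1, hr.2.trans_lt htT⟩
  refine image_le_of_deriv_right_lt_deriv_boundary' continuousOn_const
    (fun x _ => hasDerivWithinAt_const x _ a) hB0
    (fun r hr => (hB' r (hsub hr)).continuousAt.continuousWithinAt)
    (fun r hr => (hB' r (hsub (Ico_subset_Icc_self hr))).hasDerivWithinAt)
    (fun r hr hBr => ?_) ⟨ht0, le_rfl⟩
  calc (0 : ℝ) < L a := ha
    _ = L (B r) := by rw [hBr]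
    _ ≤ B' r := hBL r (hsub (Ico_subset_Icc_self hr))

theorem IsSupersolution.le_integral_one_div (hB : IsSupersolution L T B) (hL : Continuous L)
    (hpos : ∀ x ∈ Ici a, 0 < L x) (hB0 : a ≤ B 0) :
    ∀ t ∈ Ico 0 T, t ≤ ∫ x in a..B t, 1 / L x := by
  have hBa := hB.le_apply (hpos a self_mem_Ici) hB0
  choose! B' hB' hBL using hB
  have hF : ∀ r ∈ Ico 0 T,
      HasDerivAt (fun r => ∫ x in a..B r, 1 / L x) (1 / L (B r) * B' r) r := fun r hr =>
    (hasDerivAt_integral_one_div_s8 hL hpos (hBa r hr)).comp r (hB' r hr)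
  intro t ⟨ht0, htT⟩
  have hsub : Icc 0 t ⊆ Ico 0 T := fun r hr => ⟨hr.1, hr.2.trans_lt htT⟩
  refine image_le_of_deriv_right_le_deriv_boundary continuousOn_id
    (fun x _ => hasDerivWithinAt_id x _)
    (intervalIntegral.integral_nonneg hB0 fun x hx => (one_div_pos.mpr (hpos x hx.1)).le)
    (fun r hr => (hF r (hsub hr)).continuousAt.continuousWithinAt)
    (fun r hr => (hF r (hsub (Ico_subset_Icc_self hr))).hasDerivWithinAt)
    (fun r hr => ?_) ⟨ht0, le_rfl⟩
  have hr := hsub (Ico_subset_Icc_self hr)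
  rw [one_div_mul_eq_div, one_le_div (hpos _ (hBa r hr))]
  exact hBL r hr

theorem integral_one_div_eq_of_hasDerivAt {s : ℝ → ℝ} (hL : Continuous L)
    (hpos : ∀ x ∈ Ici a, 0 < L x) (hs0 : s 0 = a)
    (hs : ∀ t ∈ Ico 0 T, HasDerivAt s (L (s t)) t) :
    ∀ t ∈ Ico 0 T, ∫ x in a..s t, 1 / L x = t := by
  have hsa := (isSupersolution_of_hasDerivAt hs).le_apply (hpos a self_mem_Ici) hs0.ge
  have hF : ∀ r ∈ Ico 0 T, HasDerivAt (fun r => ∫ x in a..s r, 1 / L x) 1 r := fun r hr =>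
    ((hasDerivAt_integral_one_div_s8 hL hpos (hsa r hr)).comp r (hs r hr)).congr_deriv
      (one_div_mul_cancel (hpos _ (hsa r hr)).ne')
  intro t ⟨ht0, htT⟩
  have hsub : Icc 0 t ⊆ Ico 0 T := fun r hr => ⟨hr.1, hr.2.trans_lt htT⟩
  refine eq_of_has_deriv_right_eq
    (fun r hr => (hF r (hsub (Ico_subset_Icc_self hr))).hasDerivWithinAt)
    (fun x _ => hasDerivWithinAt_id x _)
    (fun r hr => (hF r (hsub hr)).continuousAt.continuousWithinAt) continuousOn_id
    (by simp [hs0]) t ⟨ht0, le_rfl⟩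

theorem IsSupersolution.le_of_hasDerivAt {s : ℝ → ℝ} (hB : IsSupersolution L T B)
    (hL : Continuous L) (hpos : ∀ x ∈ Ici a, 0 < L x) (hs0 : s 0 = a) (hB0 : a ≤ B 0)
    (hs : ∀ t ∈ Ico 0 T, HasDerivAt s (L (s t)) t) :
    ∀ t ∈ Ico 0 T, s t ≤ B t := by
  have hsa := (isSupersolution_of_hasDerivAt hs).le_apply (hpos a self_mem_Ici) hs0.ge
  intro t ht
  refine ((strictMonoOn_integral_one_div hL hpos).le_iff_le (hsa t ht)
    (hB.le_apply (hpos a self_mem_Ici) hB0 t ht)).mp ?_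
  rw [integral_one_div_eq_of_hasDerivAt hL hpos hs0 hs t ht]
  exact hB.le_integral_one_div hL hpos hB0 t ht

end SeparationOfVariables

theorem blowup_thmB_part2_general
    (f g : ℝ → ℝ → ℝ) (h l L : ℝ → ℝ) (c₁ c₂ s₀ T : ℝ)
    (hh_diff : ContDiff ℝ 1 h) (hl_diff : ContDiff ℝ 1 l)
    (hs₀ : s₀ = h c₁ * l c₂)
    (hL_cont : Continuous L)
    (hL_pos : ∀ x ∈ Ici s₀, 0 < L x)
    (hL_int : IntegrableOn (fun x => 1 / L x) (Ici s₀))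
    (hineq : ∀ x y : ℝ, 0 ≤ x → 0 ≤ y →
      L (h x * l y) ≤ f x y * deriv h x * l y + g x y * h x * deriv l y)
    (s : ℝ → ℝ)
    (hs0 : s 0 = s₀)
    (hs' : ∀ t ∈ Ico (0 : ℝ) T, HasDerivAt s (L (s t)) t)
    (w z : ℝ → ℝ)
    (hw0 : w 0 = c₁) (hz0 : z 0 = c₂)
    (hnn : ∀ t ∈ Ico (0 : ℝ) T, 0 ≤ w t ∧ 0 ≤ z t)
    (hw' : ∀ t ∈ Ico (0 : ℝ) T, HasDerivAt w (f (w t) (z t)) t)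
    (hz' : ∀ t ∈ Ico (0 : ℝ) T, HasDerivAt z (g (w t) (z t)) t) :
    (∀ t ∈ Ico (0 : ℝ) T, s t ≤ h (w t) * l (z t)) ∧
      T ≤ ∫ x in Ici s₀, 1 / L x := by
  have hu : IsSupersolution L T fun t => h (w t) * l (z t) := fun t ht =>
    ⟨_, hasDerivAt_comp_mul_comp (hh_diff.differentiable one_ne_zero)
      (hl_diff.differentiable one_ne_zero) (hw' t ht) (hz' t ht), hineq _ _ (hnn t ht).1 (hnn t ht).2⟩
  have hu0 : s₀ ≤ h (w 0) * l (z 0) := by rw [hw0, hz0, hs₀]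
  refine ⟨hu.le_of_hasDerivAt hL_cont hL_pos hs0 hu0 hs', ?_⟩
  have hbound : ∀ t ∈ Ico 0 T, t ≤ ∫ x in Ici s₀, 1 / L x := fun t ht =>
    (hu.le_integral_one_div hL_cont hL_pos hu0 t ht).trans
      (integral_one_div_le_setIntegral_Ici hL_pos hL_int
        (hu.le_apply (hL_pos s₀ self_mem_Ici) hu0 t ht))
  have hI : 0 ≤ ∫ x in Ici s₀, 1 / L x :=
    setIntegral_nonneg measurableSet_Ici fun x hx => (one_div_pos.mpr (hL_pos x hx)).le
  by_contra! hT
  linarith [hbound (((∫ x in Ici s₀, 1 / L x) + T) / 2) ⟨by linarith, by linarith⟩]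

/-- Theorem B, part (2), of the paper: if
`f(w,z) h'(w) l(z) + g(w,z) h(w) l'(z) ≥ L(h(w) l(z)) ≥ 0` with
`∫_{s₀}^∞ ds / L(s) < ∞` for `s₀ = h(c₁) l(c₂) > 0`, then along any solution of
`w' = f(w,z)`, `z' = g(w,z)` the product `h(w) l(z)` dominates the solution of
`s' = L(s)`, `s(0) = s₀`, and the existence time satisfies `T ≤ ∫_{s₀}^∞ ds / L(s)`,
i.e. blowup occurs in finite time. -/
theorem blowup_thmB_part2
    (f g : ℝ → ℝ → ℝ) (h l L : ℝ → ℝ) (c₁ c₂ s₀ T : ℝ)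
    (hf_cont : Continuous fun p : ℝ × ℝ => f p.1 p.2)
    (hg_cont : Continuous fun p : ℝ × ℝ => g p.1 p.2)
    (hh_diff : ContDiff ℝ 1 h) (hl_diff : ContDiff ℝ 1 l)
    (hh_nonneg : ∀ x, 0 ≤ x → 0 ≤ h x) (hl_nonneg : ∀ x, 0 ≤ x → 0 ≤ l x)
    (hs₀ : s₀ = h c₁ * l c₂) (hs₀_pos : 0 < s₀)
    (hL_cont : Continuous L) (hL_nonneg : ∀ x, 0 ≤ x → 0 ≤ L x)
    (hL_pos : ∀ x ∈ Ici s₀, 0 < L x)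
    (hL_lip : LocallyLipschitz L)
    (hL_int : IntegrableOn (fun x => 1 / L x) (Ici s₀))
    (hineq : ∀ x y : ℝ, 0 ≤ x → 0 ≤ y →
      L (h x * l y) ≤ f x y * deriv h x * l y + g x y * h x * deriv l y)
    (hc₁ : 0 ≤ c₁) (hc₂ : 0 ≤ c₂)
    (s : ℝ → ℝ)
    (hs0 : s 0 = s₀)
    (hs' : ∀ t ∈ Ico (0 : ℝ) T, HasDerivAt s (L (s t)) t)
    (w z : ℝ → ℝ)
    (hw0 : w 0 = c₁) (hz0 : z 0 = c₂)
    (hnn : ∀ t ∈ Ico (0 : ℝ) T, 0 ≤ w t ∧ 0 ≤ z t)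
    (hw' : ∀ t ∈ Ico (0 : ℝ) T, HasDerivAt w (f (w t) (z t)) t)
    (hz' : ∀ t ∈ Ico (0 : ℝ) T, HasDerivAt z (g (w t) (z t)) t) :
    (∀ t ∈ Ico (0 : ℝ) T, s t ≤ h (w t) * l (z t)) ∧
      T ≤ ∫ x in Ici s₀, 1 / L x :=
  blowup_thmB_part2_general f g h l L c₁ c₂ s₀ T hh_diff hl_diff hs₀ hL_cont hL_pos hL_int hineq s
    hs0 hs' w z hw0 hz0 hnn hw' hz'
end

section
/- Let c₁ ≤ c₁'' < ∞ and c₂ ≤ c₂'' < ∞ with c₁ < c₁'' and c₂ < c₂'', and let f, g be continuous on the region R = [c₁, c₁'') × [c₂, c₂'') with f(w,z) > 0 and g(w,z) > 0 for all (w,z) ∈ R. Assume g(w,z) → +∞ as z → c₂''⁻, uniformly for w ∈ [c₁, c₁''] (i.e., for every M > 0 there is δ > 0 such that g(w,z) > M whenever c₂'' − δ < z < c₂'' and c₁ ≤ w ≤ c₁''). Then every maximal solution w, z : [0,T) → ℝ of w' = f(w,z), z' = g(w,z) with w(0) = c₁, z(0) = c₂ and (w(t),z(t)) ∈ R for all t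 ∈ [0,T) quenches in finite time: T < ∞, w and z are strictly increasing on [0,T), and as t → T⁻ either z(t) → c₂'' with |z'(t)| unbounded, or w(t) → c₁''. -/
/-!
Since `f, g > 0`, both `w` and `z` increase, so they have limits `L₁ ≤ c₁''` and `L₂ ≤ c₂''` as
`t → T⁻`. If `L₂ = c₂''`, the uniform blow-up of `g` makes `z'` unbounded. If neither limit lies on
the boundary, the solution can be continued past `T`, contradicting maximality. As `f` and `g` are
only continuous, the continuation comes from Peano's theorem. For a scalar equation
`v' = h(s, v)` it is obtained from the solutions for the Lipschitz minorants
`infᵤ (h(s, u) + n |v - u|)`: they increase with `n` by comparison, and their limit solves the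
integral equation by dominated convergence. The planar system reduces to two scalar equations
because `g > 0`: the orbit is a graph `w = x(z)` with `dx/dz = f / g`, and then `z' = g(x(z), z)`.
-/

open Set MeasureTheory Filter Topology
open scoped NNReal

theorem nonpos_of_hasDerivWithinAt_le_mul_abs {u u' : ℝ → ℝ} {a c L : ℝ}
    (hu : ContinuousOn u (Icc a c)) (hu' : ∀ s ∈ Ico a c, HasDerivWithinAt u (u' s) (Ici s) s)
    (ha : u a ≤ 0) (bound : ∀ s ∈ Ico a c, u' s ≤ L * |u s|) :
    ∀ s ∈ Icc a c, u s ≤ 0 := by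
  intro s hs
  -- the barriers `ε * exp ((|L| + 1) * (t - a))` grow strictly faster than `u` can
  have barrier : ∀ ε > 0, u s ≤ ε * Real.exp ((|L| + 1) * (s - a)) := by
    intro ε hε
    refine image_le_of_deriv_right_lt_deriv_boundary hu hu'
      (B := fun t => ε * Real.exp ((|L| + 1) * (t - a)))
      (B' := fun t => ε * Real.exp ((|L| + 1) * (t - a)) * (|L| + 1))
      (by simpa using ha.trans hε.le) (fun t => ?_) (fun t ht hut => ?_) hs
    · simpa [mul_assoc] using
        (((hasDerivAt_id t).sub_const a).const_mul (|L| + 1)).exp.const_mul ε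
    · have hpos : 0 < ε * Real.exp ((|L| + 1) * (t - a)) := by positivity
      have := bound t ht
      rw [hut, abs_of_pos hpos] at this
      nlinarith [le_abs_self L]
  refine le_of_forall_pos_le_add fun ε hε => ?_
  have := barrier (ε / Real.exp ((|L| + 1) * (s - a))) (by positivity)
  rw [div_mul_cancel₀ _ (Real.exp_pos _).ne'] at this
  linarith

theorem le_of_hasDerivWithinAt_of_lipschitzWith {x y : ℝ → ℝ} {F G : ℝ → ℝ → ℝ} {L : ℝ≥0}
    {a c : ℝ} (hx : ∀ s ∈ Icc a c, HasDerivWithinAt x (F s (x s)) (Icc a c) s)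
    (hy : ∀ s ∈ Icc a c, HasDerivWithinAt y (G s (y s)) (Icc a c) s)
    (hFG : ∀ s v, F s v ≤ G s v) (hG : ∀ s, LipschitzWith L (G s)) (ha : x a ≤ y a) :
    ∀ s ∈ Icc a c, x s ≤ y s := by
  have hdiff : ∀ s ∈ Icc a c,
      HasDerivWithinAt (x - y) (F s (x s) - G s (y s)) (Icc a c) s :=
    fun s hs => (hx s hs).sub (hy s hs)
  intro s hs
  refine sub_nonpos.1 <| nonpos_of_hasDerivWithinAt_le_mul_abs (L := L)
    (fun s hs => (hdiff s hs).continuousWithinAt)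
    (fun s hs => (hdiff s (Ico_subset_Icc_self hs)).mono_of_mem_nhdsWithin
      (Icc_mem_nhdsGE_of_mem hs))
    (sub_nonpos.2 ha) (fun σ _ => ?_) s hs
  have := (hG σ).dist_le_mul (x σ) (y σ)
  rw [Real.dist_eq, Real.dist_eq] at this
  simp only [Pi.sub_apply]
  linarith [hFG σ (x σ), le_abs_self (G σ (x σ) - G σ (y σ))]

theorem exists_hasDerivWithinAt_Icc_of_lipschitzWith {F : ℝ → ℝ → ℝ} {K L : ℝ≥0} {a c : ℝ}
    (hac : a ≤ c) (b : ℝ) (hlip : ∀ s, LipschitzWith L (F s)) (hcont : ∀ v, Continuous (F · v))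
    (hK : ∀ s v, |F s v| ≤ K) :
    ∃ x : ℝ → ℝ, x a = b ∧ ∀ s ∈ Icc a c, HasDerivWithinAt x (F s (x s)) (Icc a c) s :=
  IsPicardLindelof.exists_eq_forall_mem_Icc_hasDerivWithinAt₀
    (t₀ := ⟨a, left_mem_Icc.2 hac⟩) (x₀ := b) (a := K * (c - a).toNNReal) (L := K) (K := L)
    { lipschitzOnWith := fun s _ => (hlip s).lipschitzOnWith
      continuousOn := fun v _ => (hcont v).continuousOn
      norm_le := fun s _ v _ => hK s v
      mul_max_le := by simp [sub_nonneg.2 hac] }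

theorem eq_add_integral_of_hasDerivWithinAt {x F : ℝ → ℝ} {a c : ℝ}
    (hx : ∀ s ∈ Icc a c, HasDerivWithinAt x (F s) (Icc a c) s) (hF : ContinuousOn F (Icc a c)) :
    ∀ s ∈ Icc a c, x s = x a + ∫ σ in a..s, F σ := by
  intro s hs
  have hsub : Icc a s ⊆ Icc a c := Icc_subset_Icc_right hs.2
  rw [intervalIntegral.integral_eq_sub_of_hasDeriv_right_of_le hs.1
    (fun σ hσ => (hx σ (hsub hσ)).continuousWithinAt.mono hsub)
    (fun σ hσ => ((hx σ (hsub (Ioo_subset_Icc_self hσ))).hasDerivAt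
      (Icc_mem_nhds hσ.1 (hσ.2.trans_le hs.2))).hasDerivWithinAt)
    ((hF.mono hsub).intervalIntegrable_of_Icc hs.1)]
  ring

theorem hasDerivWithinAt_of_eq_add_integral {x F : ℝ → ℝ} {a c b : ℝ}
    (hx : ∀ s ∈ Icc a c, x s = b + ∫ σ in a..s, F σ) (hF : ContinuousOn F (Icc a c)) :
    ∀ s ∈ Icc a c, HasDerivWithinAt x (F s) (Icc a c) s := by
  intro s hs
  have : Fact (s ∈ Icc a c) := ⟨hs⟩
  refine ((intervalIntegral.integral_hasDerivWithinAt_right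
    ((hF.mono (Icc_subset_Icc_right hs.2)).intervalIntegrable_of_Icc hs.1)
    (hF.stronglyMeasurableAtFilter_nhdsWithin measurableSet_Icc s) (hF s hs)).const_add b).congr
    hx (hx s hs)

/-- The Pasch–Hausdorff envelope of `h s ·`. -/
noncomputable def lipschitzMinorant (h : ℝ → ℝ → ℝ) (n : ℕ) (s v : ℝ) : ℝ :=
  ⨅ u, h s u + n * |v - u|

section lipschitzMinorant

variable {h : ℝ → ℝ → ℝ} {K : ℝ}

theorem bddBelow_range_add_mul_abs (hK : ∀ s v, |h s v| ≤ K) (n : ℕ) (s v : ℝ) :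
    BddBelow (range fun u => h s u + n * |v - u|) := by
  refine ⟨-K, ?_⟩
  rintro _ ⟨u, rfl⟩
  have := (abs_le.1 (hK s u)).1
  have : (0 : ℝ) ≤ n * |v - u| := by positivity
  linarith

theorem lipschitzMinorant_le (hK : ∀ s v, |h s v| ≤ K) (n : ℕ) (s v : ℝ) :
    lipschitzMinorant h n s v ≤ h s v :=
  (ciInf_le (bddBelow_range_add_mul_abs hK n s v) v).trans_eq (by simp)

theorem abs_lipschitzMinorant_le (hK : ∀ s v, |h s v| ≤ K) (n : ℕ) (s v : ℝ) :
    |lipschitzMinorant h n s v| ≤ K := by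
  refine abs_le.2
    ⟨le_ciInf fun u => ?_, (lipschitzMinorant_le hK n s v).trans (abs_le.1 (hK s v)).2⟩
  have := (abs_le.1 (hK s u)).1
  have : (0 : ℝ) ≤ n * |v - u| := by positivity
  linarith

theorem lipschitzMinorant_mono (hK : ∀ s v, |h s v| ≤ K) {m n : ℕ} (hmn : m ≤ n) (s v : ℝ) :
    lipschitzMinorant h m s v ≤ lipschitzMinorant h n s v := by
  refine le_ciInf fun u => (ciInf_le (bddBelow_range_add_mul_abs hK m s v) u).trans ?_
  gcongr

theorem lipschitzMinorant_le_add (hK : ∀ s v, |h s v| ≤ K) (n : ℕ) (s v w : ℝ) :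
    lipschitzMinorant h n s v ≤ lipschitzMinorant h n s w + n * |v - w| := by
  rw [← sub_le_iff_le_add]
  refine le_ciInf fun u => sub_le_iff_le_add.2 <|
    (ciInf_le (bddBelow_range_add_mul_abs hK n s v) u).trans ?_
  have : (n : ℝ) * |v - u| ≤ n * (|v - w| + |w - u|) := by gcongr; exact abs_sub_le v w u
  linarith

theorem lipschitzWith_lipschitzMinorant (hK : ∀ s v, |h s v| ≤ K) (n : ℕ) (s : ℝ) :
    LipschitzWith n (lipschitzMinorant h n s) :=
  .of_le_add_mul _ fun v w => by
    simpa [Real.dist_eq] using lipschitzMinorant_le_add hK n s v w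

theorem lipschitzMinorant_le_add_of_abs_sub_lt (hK : ∀ s v, |h s v| ≤ K) {ε δ : ℝ}
    (hδ : ∀ s s' v, |s - s'| < δ → h s v ≤ h s' v + ε) (n : ℕ) {s s' : ℝ} (hs : |s - s'| < δ)
    (v : ℝ) : lipschitzMinorant h n s v ≤ lipschitzMinorant h n s' v + ε := by
  rw [← sub_le_iff_le_add]
  refine le_ciInf fun u => sub_le_iff_le_add.2 <|
    (ciInf_le (bddBelow_range_add_mul_abs hK n s v) u).trans ?_
  linarith [hδ s s' u hs]

theorem uniformContinuous_lipschitzMinorant (hh : UniformContinuous (Function.uncurry h))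
    (hK : ∀ s v, |h s v| ≤ K) (n : ℕ) :
    UniformContinuous (Function.uncurry (lipschitzMinorant h n)) := by
  rw [Metric.uniformContinuous_iff] at hh ⊢
  intro ε hε
  obtain ⟨δ, hδ, hhδ⟩ := hh (ε / 3) (by positivity)
  have htime : ∀ s s' v, |s - s'| < δ → h s v ≤ h s' v + ε / 3 := fun s s' v hs => by
    have := hhδ (a := (s, v)) (b := (s', v)) (by simpa [Prod.dist_eq, Real.dist_eq] using hs)
    simp only [Function.uncurry_apply_pair, Real.dist_eq] at this
    linarith [le_abs_self (h s v - h s' v)]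
  refine ⟨min δ (ε / (3 * (n + 1))), by positivity, fun {p q} hpq => ?_⟩
  rw [Prod.dist_eq, max_lt_iff, Real.dist_eq, Real.dist_eq, lt_min_iff, lt_min_iff] at hpq
  have hv : n * |p.2 - q.2| ≤ ε / 3 := by
    calc n * |p.2 - q.2| ≤ n * (ε / (3 * (n + 1))) := by gcongr; exact hpq.2.2.le
      _ ≤ ε / 3 := by
        rw [mul_div_assoc', div_le_div_iff₀ (by positivity) three_pos]; nlinarith
  rw [Real.dist_eq, abs_sub_lt_iff]
  simp only [Function.uncurry]
  have h1 := lipschitzMinorant_le_add hK n p.1 p.2 q.2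
  have h2 := lipschitzMinorant_le_add hK n p.1 q.2 p.2
  have h3 := lipschitzMinorant_le_add_of_abs_sub_lt hK htime n hpq.1.1 q.2
  have h4 := lipschitzMinorant_le_add_of_abs_sub_lt hK htime n
    (by rw [abs_sub_comm]; exact hpq.1.1) q.2
  rw [abs_sub_comm] at h2
  constructor <;> linarith

theorem tendstoUniformly_lipschitzMinorant (hh : UniformContinuous (Function.uncurry h))
    (hK : ∀ s v, |h s v| ≤ K) :
    TendstoUniformly (fun n => Function.uncurry (lipschitzMinorant h n)) (Function.uncurry h)
      atTop := by
  rw [Metric.tendstoUniformly_iff]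
  intro ε hε
  obtain ⟨δ, hδ, hhδ⟩ := Metric.uniformContinuous_iff.1 hh (ε / 2) (half_pos hε)
  filter_upwards [eventually_ge_atTop ⌈2 * K / δ⌉₊] with n hn
  rintro ⟨s, v⟩
  have hnδ : 2 * K ≤ n * δ := (div_le_iff₀ hδ).1 ((Nat.le_ceil _).trans (by exact_mod_cast hn))
  have hle := lipschitzMinorant_le hK n s v
  -- far from `v` the penalty `n * |v - u|` alone exceeds the oscillation `2 * K` of `h`
  have hge : h s v - ε / 2 ≤ lipschitzMinorant h n s v := by
    refine le_ciInf fun u => ?_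
    rcases lt_or_ge |v - u| δ with hvu | hvu
    · have := hhδ (a := (s, v)) (b := (s, u)) (by simpa [Prod.dist_eq, Real.dist_eq] using hvu)
      simp only [Function.uncurry_apply_pair, Real.dist_eq] at this
      have : (0 : ℝ) ≤ n * |v - u| := by positivity
      linarith [le_abs_self (h s v - h s u)]
    · have : (n : ℝ) * δ ≤ n * |v - u| := by gcongr
      linarith [(abs_le.1 (hK s u)).1, (abs_le.1 (hK s v)).2]
  simp only [Function.uncurry_apply_pair, Real.dist_eq]
  rw [abs_of_nonneg (sub_nonneg.2 hle)]
  linarith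

end lipschitzMinorant

theorem eq_add_integral_of_tendsto {X F : ℕ → ℝ → ℝ} {x f : ℝ → ℝ} {a c b K : ℝ}
    (hX : ∀ n, ∀ s ∈ Icc a c, X n s = b + ∫ σ in a..s, F n σ)
    (hFcont : ∀ n, ContinuousOn (F n) (Icc a c)) (hFK : ∀ n, ∀ σ ∈ Icc a c, |F n σ| ≤ K)
    (hXx : ∀ s ∈ Icc a c, Tendsto (fun n => X n s) atTop (𝓝 (x s)))
    (hFf : ∀ σ ∈ Icc a c, Tendsto (fun n => F n σ) atTop (𝓝 (f σ))) :
    ∀ s ∈ Icc a c, x s = b + ∫ σ in a..s, f σ := by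
  intro s hs
  have hsub : uIoc a s ⊆ Icc a c := by
    rw [uIoc_of_le hs.1]; exact fun σ hσ => ⟨hσ.1.le, hσ.2.trans hs.2⟩
  have hint : Tendsto (fun n => ∫ σ in a..s, F n σ) atTop (𝓝 (∫ σ in a..s, f σ)) :=
    intervalIntegral.tendsto_integral_filter_of_dominated_convergence (fun _ => K)
      (.of_forall fun n => ((hFcont n).mono hsub).aestronglyMeasurable measurableSet_uIoc)
      (.of_forall fun n => ae_of_all _ fun σ hσ => hFK n σ (hsub hσ)) intervalIntegrable_const
      (ae_of_all _ fun σ hσ => hFf σ (hsub hσ))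
  exact tendsto_nhds_unique (hXx s hs) <|
    (hint.const_add b).congr fun n => (hX n s hs).symm

theorem exists_hasDerivWithinAt_Icc_of_uniformContinuous {h : ℝ → ℝ → ℝ} {K : ℝ≥0} {a c : ℝ}
    (hh : UniformContinuous (Function.uncurry h)) (hK : ∀ s v, |h s v| ≤ K) (hac : a ≤ c)
    (b : ℝ) :
    ∃ x : ℝ → ℝ, x a = b ∧ ∀ s ∈ Icc a c, HasDerivWithinAt x (h s (x s)) (Icc a c) s := by
  have hHcont : ∀ n, Continuous (Function.uncurry (lipschitzMinorant h n)) := fun n =>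
    (uniformContinuous_lipschitzMinorant hh hK n).continuous
  choose X hXa hX using fun n => exists_hasDerivWithinAt_Icc_of_lipschitzWith hac b
    (lipschitzWith_lipschitzMinorant hK n)
    (fun v => (hHcont n).comp (continuous_id.prodMk continuous_const))
    (abs_lipschitzMinorant_le hK n)
  -- the minorants increase with `n`, hence so do the solutions `X n`
  have hXmono : ∀ s ∈ Icc a c, Monotone fun n => X n s := fun s hs m n hmn =>
    le_of_hasDerivWithinAt_of_lipschitzWith (hX m) (hX n) (lipschitzMinorant_mono hK hmn)
      (lipschitzWith_lipschitzMinorant hK n) (by rw [hXa, hXa]) s hs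
  have hXlip : ∀ n, LipschitzOnWith K (X n) (Icc a c) := fun n =>
    (convex_Icc a c).lipschitzOnWith_of_nnnorm_hasDerivWithin_le (hX n) fun s _ => by
      rw [← NNReal.coe_le_coe, coe_nnnorm]; exact abs_lipschitzMinorant_le hK n s _
  have hXbdd : ∀ s ∈ Icc a c, BddAbove (range fun n => X n s) := by
    refine fun s hs => ⟨b + K * (s - a), ?_⟩
    rintro _ ⟨n, rfl⟩
    have := (hXlip n).dist_le_mul s hs a (left_mem_Icc.2 hac)
    rw [hXa, Real.dist_eq, Real.dist_eq, abs_of_nonneg (sub_nonneg.2 hs.1)] at this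
    linarith [le_abs_self (X n s - b)]
  set x := fun s => ⨆ n, X n s
  have hXx : ∀ s ∈ Icc a c, Tendsto (fun n => X n s) atTop (𝓝 (x s)) := fun s hs =>
    tendsto_atTop_ciSup (hXmono s hs) (hXbdd s hs)
  have hxlip : LipschitzOnWith K x (Icc a c) := .of_dist_le_mul fun s hs t ht =>
    le_of_tendsto' ((hXx s hs).dist (hXx t ht)) fun n => (hXlip n).dist_le_mul s hs t ht
  have hXcont : ∀ n, ContinuousOn (fun σ => lipschitzMinorant h n σ (X n σ)) (Icc a c) := fun n =>
    (hHcont n).comp_continuousOn (continuousOn_id.prodMk (hXlip n).continuousOn)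
  refine ⟨x, by simp [x, hXa], hasDerivWithinAt_of_eq_add_integral (b := b) ?_
    (hh.continuous.comp_continuousOn (continuousOn_id.prodMk hxlip.continuousOn))⟩
  refine eq_add_integral_of_tendsto (fun n s hs => ?_) hXcont
    (fun n σ _ => abs_lipschitzMinorant_le hK n σ _) hXx fun σ hσ => ?_
  · rw [eq_add_integral_of_hasDerivWithinAt (hX n) (hXcont n) s hs, hXa]
  · exact (tendstoUniformly_lipschitzMinorant hh hK).tendsto_comp (x := (σ, x σ))
      (g := fun n => (σ, X n σ)) hh.continuous.continuousAt
      (tendsto_const_nhds.prodMk_nhds (hXx σ hσ))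

theorem exists_hasDerivWithinAt_Icc_of_continuousOn_of_nonneg {h : ℝ → ℝ → ℝ} {a c b d K : ℝ}
    (hac : a ≤ c) (hbd : b ≤ d) (hh : ContinuousOn (Function.uncurry h) (Icc a c ×ˢ Icc b d))
    (h0 : ∀ s ∈ Icc a c, ∀ v ∈ Icc b d, 0 ≤ h s v)
    (hK : ∀ s ∈ Icc a c, ∀ v ∈ Icc b d, h s v ≤ K) (hKd : b + K * (c - a) ≤ d) :
    ∃ x : ℝ → ℝ, x a = b ∧
      ∀ s ∈ Icc a c, x s ∈ Icc b d ∧ HasDerivWithinAt x (h s (x s)) (Icc a c) s := by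
  have hK0 : 0 ≤ K := (h0 a (left_mem_Icc.2 hac) b (left_mem_Icc.2 hbd)).trans
    (hK a (left_mem_Icc.2 hac) b (left_mem_Icc.2 hbd))
  lift K to ℝ≥0 using hK0
  set clamp : ℝ × ℝ → ℝ × ℝ := fun p => (projIcc a c hac p.1, projIcc b d hbd p.2)
  have hclamp : ∀ p, clamp p ∈ Icc a c ×ˢ Icc b d := fun p =>
    ⟨(projIcc a c hac p.1).2, (projIcc b d hbd p.2).2⟩
  have hclampU : UniformContinuous clamp :=
    (uniformContinuous_subtype_val.comp
        ((LipschitzWith.projIcc hac).uniformContinuous.comp uniformContinuous_fst)).prodMk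
      (uniformContinuous_subtype_val.comp
        ((LipschitzWith.projIcc hbd).uniformContinuous.comp uniformContinuous_snd))
  set h' : ℝ → ℝ → ℝ := fun s v => Function.uncurry h (clamp (s, v))
  have hh' : UniformContinuous (Function.uncurry h') :=
    uniformContinuousOn_univ.1 <|
      ((isCompact_Icc.prod isCompact_Icc).uniformContinuousOn_of_continuous hh).comp
        hclampU.uniformContinuousOn fun p _ => hclamp p
  have hh'0 : ∀ s v, 0 ≤ h' s v := fun s v => h0 _ (hclamp (s, v)).1 _ (hclamp (s, v)).2
  have hh'K : ∀ s v, |h' s v| ≤ K := fun s v => by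
    rw [abs_of_nonneg (hh'0 s v)]; exact hK _ (hclamp (s, v)).1 _ (hclamp (s, v)).2
  obtain ⟨x, hxa, hx⟩ := exists_hasDerivWithinAt_Icc_of_uniformContinuous hh' hh'K hac b
  have hxmono : MonotoneOn x (Icc a c) := by
    refine monotoneOn_of_hasDerivWithinAt_nonneg (convex_Icc a c)
      (fun s hs => (hx s hs).continuousWithinAt) (fun s hs => ?_) fun s _ => hh'0 s (x s)
    rw [interior_Icc] at hs ⊢
    exact (hx s (Ioo_subset_Icc_self hs)).mono Ioo_subset_Icc_self
  have hxlip : LipschitzOnWith K x (Icc a c) :=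
    (convex_Icc a c).lipschitzOnWith_of_nnnorm_hasDerivWithin_le hx fun s _ => by
      rw [← NNReal.coe_le_coe, coe_nnnorm]; exact hh'K s _
  have hxmem : ∀ s ∈ Icc a c, x s ∈ Icc b d := fun s hs => by
    refine ⟨hxa ▸ hxmono (left_mem_Icc.2 hac) hs hs.1, ?_⟩
    have := hxlip.dist_le_mul s hs a (left_mem_Icc.2 hac)
    rw [hxa, Real.dist_eq, Real.dist_eq, abs_of_nonneg (sub_nonneg.2 hs.1)] at this
    have : K * (s - a) ≤ K * (c - a) := by gcongr; exact hs.2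
    linarith [le_abs_self (x s - b)]
  refine ⟨x, hxa, fun s hs => ⟨hxmem s hs, ?_⟩⟩
  convert hx s hs using 1
  simp [h', clamp, projIcc_of_mem hac hs, projIcc_of_mem hbd (hxmem s hs)]

theorem exists_hasDerivWithinAt_Icc_of_pos {F G : ℝ → ℝ → ℝ} {p q r T : ℝ} (hr : 0 < r)
    (hF : ContinuousOn (Function.uncurry F) (Icc p (p + r) ×ˢ Icc q (q + r)))
    (hG : ContinuousOn (Function.uncurry G) (Icc p (p + r) ×ˢ Icc q (q + r)))
    (hF0 : ∀ x ∈ Icc p (p + r), ∀ y ∈ Icc q (q + r), 0 ≤ F x y)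
    (hG0 : ∀ x ∈ Icc p (p + r), ∀ y ∈ Icc q (q + r), 0 < G x y) :
    ∃ ρ > 0, ∃ W Z : ℝ → ℝ, W T = p ∧ Z T = q ∧ ∀ t ∈ Icc T (T + ρ),
      (W t ∈ Icc p (p + r) ∧ Z t ∈ Icc q (q + r)) ∧
      HasDerivWithinAt W (F (W t) (Z t)) (Icc T (T + ρ)) t ∧
      HasDerivWithinAt Z (G (W t) (Z t)) (Icc T (T + ρ)) t := by
  have hB : IsCompact (Icc p (p + r) ×ˢ Icc q (q + r)) := isCompact_Icc.prod isCompact_Icc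
  have hFG := hF.div hG fun z hz => (hG0 _ hz.1 _ hz.2).ne'
  obtain ⟨C₁, hC₁⟩ := hB.exists_bound_of_continuousOn hFG
  obtain ⟨C₂, hC₂⟩ := hB.exists_bound_of_continuousOn hG
  -- `z` increases along trajectories, so the orbit is a graph `w = x z` with `dx/dz = F / G`
  set ρ' := r / max C₁ 1
  have hρ' : 0 < ρ' := by positivity
  have hρ'r : ρ' ≤ r := div_le_self hr.le (le_max_right _ _)
  have hsub : Icc q (q + ρ') ⊆ Icc q (q + r) := Icc_subset_Icc_right (by linarith)
  obtain ⟨x, hxq, hx⟩ := exists_hasDerivWithinAt_Icc_of_continuousOn_of_nonneg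
    (h := fun y v => F v y / G v y) (K := max C₁ 1) (by linarith) (by linarith)
    (hFG.comp continuous_swap.continuousOn fun z hz => ⟨hz.2, hsub hz.1⟩)
    (fun y hy v hv => div_nonneg (hF0 v hv y (hsub hy)) (hG0 v hv y (hsub hy)).le)
    (fun y hy v hv => (le_abs_self _).trans <| (hC₁ (v, y) ⟨hv, hsub hy⟩).trans (le_max_left _ _))
    (by rw [add_sub_cancel_left, mul_div_cancel₀ _ (by positivity)])
  have hxB : ∀ y ∈ Icc q (q + ρ'), (x y, y) ∈ Icc p (p + r) ×ˢ Icc q (q + r) := fun y hy =>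
    ⟨(hx y hy).1, hsub hy⟩
  -- then the time along the orbit solves `dz/dt = G (x z) z`
  have hxcont : ContinuousOn x (Icc q (q + ρ')) := fun y hy => (hx y hy).2.continuousWithinAt
  set ρ := ρ' / max C₂ 1
  have hρ : 0 < ρ := by positivity
  obtain ⟨Z, hZT, hZ⟩ := exists_hasDerivWithinAt_Icc_of_continuousOn_of_nonneg
    (h := fun _ ζ => G (x ζ) ζ) (K := max C₂ 1) (a := T) (c := T + ρ) (by linarith)
    (by linarith)
    (hG.comp ((hxcont.comp continuous_snd.continuousOn fun z hz => hz.2).prodMk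
        continuous_snd.continuousOn)
      fun z hz => hxB z.2 hz.2)
    (fun _ _ ζ hζ => (hG0 _ (hxB ζ hζ).1 _ (hxB ζ hζ).2).le)
    (fun _ _ ζ hζ => (le_abs_self _).trans <| (hC₂ _ (hxB ζ hζ)).trans (le_max_left _ _))
    (by rw [add_sub_cancel_left, mul_div_cancel₀ _ (by positivity)])
  refine ⟨ρ, hρ, x ∘ Z, Z, by simp [hZT, hxq], hZT, fun t ht => ?_⟩
  refine ⟨⟨(hx _ (hZ t ht).1).1, hsub (hZ t ht).1⟩, ?_, (hZ t ht).2⟩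
  have := (hx _ (hZ t ht).1).2.comp t (hZ t ht).2 fun s hs => (hZ s hs).1
  rwa [div_mul_cancel₀ _ (hG0 _ (hxB _ (hZ t ht).1).1 _ (hxB _ (hZ t ht).1).2).ne'] at this

theorem hasDerivAt_ite_lt {u v d : ℝ → ℝ} {a T c : ℝ} (haT : a < T) (hTc : T < c)
    (hu : ∀ t ∈ Ico a T, HasDerivAt u (d t) t)
    (hv : ∀ t ∈ Icc T c, HasDerivWithinAt v (d t) (Icc T c) t)
    (huv : Tendsto u (𝓝[<] T) (𝓝 (v T))) (hd : Tendsto d (𝓝[<] T) (𝓝 (d T))) :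
    ∀ t ∈ Ico a c, HasDerivAt (fun s => if s < T then u s else v s) (d t) t := by
  set φ := fun s => if s < T then u s else v s
  have hleft : ∀ t ∈ Ico a T, HasDerivAt φ (d t) t := fun t ht =>
    (hu t ht).congr_of_eventuallyEq <| by
      filter_upwards [Iio_mem_nhds ht.2] with s hs using if_pos hs
  have hright : ∀ t ∈ Icc T c, HasDerivWithinAt φ (d t) (Icc T c) t := fun t ht =>
    (hv t ht).congr (fun s hs => if_neg (not_lt.2 hs.1)) (if_neg (not_lt.2 ht.1))
  intro t ht
  rcases lt_trichotomy t T with htT | rfl | htT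
  · exact hleft t ⟨ht.1, htT⟩
  · have hφu : φ =ᶠ[𝓝[<] t] u := eventually_nhdsWithin_of_forall fun s hs => if_pos hs
    have hIic : HasDerivWithinAt φ (d t) (Iic t) t := by
      refine hasDerivWithinAt_Iic_of_tendsto_deriv (s := Ioo a t)
        (fun s hs => (hleft s ⟨hs.1.le, hs.2⟩).differentiableAt.differentiableWithinAt) ?_
        (Ioo_mem_nhdsLT haT) ?_
      · have : Tendsto φ (𝓝[<] t) (𝓝 (φ t)) := by
          rw [show φ t = v t from if_neg (lt_irrefl t)]; exact huv.congr' hφu.symm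
        exact this.mono_left (nhdsWithin_mono t Ioo_subset_Iio_self)
      · refine hd.congr' ?_
        filter_upwards [Ioo_mem_nhdsLT haT] with s hs
        exact (hleft s ⟨hs.1.le, hs.2⟩).deriv.symm
    have hIci := (hright t ⟨le_rfl, hTc.le⟩).mono_of_mem_nhdsWithin (Icc_mem_nhdsGE hTc)
    simpa using hIic.union hIci
  · exact (hright t ⟨htT.le, ht.2.le⟩).hasDerivAt (Icc_mem_nhds htT ht.2)

theorem strictMonoOn_Ico_of_hasDerivAt_pos {φ φ' : ℝ → ℝ} {a b : ℝ}
    (hφ : ∀ t ∈ Ico a b, HasDerivAt φ (φ' t) t) (hpos : ∀ t ∈ Ico a b, 0 < φ' t) :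
    StrictMonoOn φ (Ico a b) := by
  refine strictMonoOn_of_hasDerivWithinAt_pos (f' := φ') (convex_Ico a b)
    (fun t ht => (hφ t ht).continuousAt.continuousWithinAt) (fun t ht => ?_) fun t ht => ?_
  all_goals rw [interior_Ico] at ht
  · exact (hφ t (Ioo_subset_Ico_self ht)).hasDerivWithinAt
  · exact hpos t (Ioo_subset_Ico_self ht)

theorem exists_tendsto_nhdsLT_of_monotoneOn {φ : ℝ → ℝ} {a T lo hi : ℝ} (haT : a < T)
    (hφ : MonotoneOn φ (Ico a T)) (hmem : ∀ t ∈ Ico a T, φ t ∈ Ico lo hi) :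
    ∃ L ∈ Icc lo hi, Tendsto φ (𝓝[<] T) (𝓝 L) := by
  have hlim := (hφ.mono Ioo_subset_Ico_self).tendsto_nhdsWithin_Ioo_left (nonempty_Ioo.2 haT)
    ⟨hi, by rintro _ ⟨t, ht, rfl⟩; exact (hmem t (Ioo_subset_Ico_self ht)).2.le⟩
  refine ⟨_, isClosed_Icc.mem_of_tendsto hlim ?_, hlim⟩
  filter_upwards [Ioo_mem_nhdsLT haT] with t ht
  exact Ico_subset_Icc_self (hmem t (Ioo_subset_Ico_self ht))

theorem tendsto_atTop_of_forall_lt_of_tendsto {g : ℝ → ℝ → ℝ} {w z : ℝ → ℝ} {l : Filter ℝ}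
    {c₁ c₁'' c₂'' : ℝ}
    (hg : ∀ M > (0 : ℝ), ∃ δ > (0 : ℝ), ∀ x y : ℝ,
      c₂'' - δ < y → y < c₂'' → c₁ ≤ x → x ≤ c₁'' → M < g x y)
    (hz : Tendsto z l (𝓝 c₂'')) (hmem : ∀ᶠ t in l, w t ∈ Icc c₁ c₁'' ∧ z t < c₂'') :
    Tendsto (fun t => g (w t) (z t)) l atTop := by
  refine tendsto_atTop.2 fun M => ?_
  obtain ⟨δ, hδ, hgδ⟩ := hg (max M 1) (by positivity)
  filter_upwards [hz.eventually (lt_mem_nhds (sub_lt_self c₂'' hδ)), hmem] with t hzt hwt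
  exact (le_max_left M 1).trans (hgδ _ _ hzt hwt.2 hwt.1.1 hwt.1.2).le

theorem exists_pos_Icc_prod_Icc_subset_Ico_prod_Ico {a b c d x y : ℝ} (hx : x ∈ Ico a b)
    (hy : y ∈ Ico c d) : ∃ r > 0, Icc x (x + r) ×ˢ Icc y (y + r) ⊆ Ico a b ×ˢ Ico c d := by
  refine ⟨min (b - x) (d - y) / 2, by have := hx.2; have := hy.2; positivity, ?_⟩
  have := min_le_left (b - x) (d - y)
  have := min_le_right (b - x) (d - y)
  have := lt_min (sub_pos.2 hx.2) (sub_pos.2 hy.2)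
  exact prod_mono (Icc_subset_Ico hx.1 (by linarith)) (Icc_subset_Ico hy.1 (by linarith))

theorem exists_extension_of_tendsto {c₁ c₁'' c₂ c₂'' T L₁ L₂ : ℝ} {f g : ℝ → ℝ → ℝ}
    (hf_cont : ContinuousOn (fun p : ℝ × ℝ => f p.1 p.2) (Ico c₁ c₁'' ×ˢ Ico c₂ c₂''))
    (hg_cont : ContinuousOn (fun p : ℝ × ℝ => g p.1 p.2) (Ico c₁ c₁'' ×ˢ Ico c₂ c₂''))
    (hf_nonneg : ∀ x ∈ Ico c₁ c₁'', ∀ y ∈ Ico c₂ c₂'', 0 ≤ f x y)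
    (hg_pos : ∀ x ∈ Ico c₁ c₁'', ∀ y ∈ Ico c₂ c₂'', 0 < g x y)
    (hT : 0 < T) {w z : ℝ → ℝ}
    (hmem : ∀ t ∈ Ico (0 : ℝ) T, w t ∈ Ico c₁ c₁'' ∧ z t ∈ Ico c₂ c₂'')
    (hw' : ∀ t ∈ Ico (0 : ℝ) T, HasDerivAt w (f (w t) (z t)) t)
    (hz' : ∀ t ∈ Ico (0 : ℝ) T, HasDerivAt z (g (w t) (z t)) t)
    (hL₁ : L₁ ∈ Ico c₁ c₁'') (hL₂ : L₂ ∈ Ico c₂ c₂'')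
    (hwL : Tendsto w (𝓝[<] T) (𝓝 L₁)) (hzL : Tendsto z (𝓝[<] T) (𝓝 L₂)) :
    ∃ (T' : ℝ) (W Z : ℝ → ℝ), T < T' ∧
      (∀ t ∈ Ico (0 : ℝ) T, W t = w t ∧ Z t = z t) ∧
      (∀ t ∈ Ico (0 : ℝ) T', (W t ∈ Ico c₁ c₁'' ∧ Z t ∈ Ico c₂ c₂'') ∧
        HasDerivAt W (f (W t) (Z t)) t ∧ HasDerivAt Z (g (W t) (Z t)) t) := by
  set R := Ico c₁ c₁'' ×ˢ Ico c₂ c₂''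
  obtain ⟨r, hr, hbox⟩ := exists_pos_Icc_prod_Icc_subset_Ico_prod_Ico hL₁ hL₂
  obtain ⟨ρ, hρ, W₀, Z₀, hW₀, hZ₀, hsol⟩ := exists_hasDerivWithinAt_Icc_of_pos (T := T) hr
    (hf_cont.mono hbox) (hg_cont.mono hbox)
    (fun x hx y hy => hf_nonneg x (hbox (mk_mem_prod hx hy)).1 y (hbox (mk_mem_prod hx hy)).2)
    (fun x hx y hy => hg_pos x (hbox (mk_mem_prod hx hy)).1 y (hbox (mk_mem_prod hx hy)).2)
  set W := fun t => if t < T then w t else W₀ t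
  set Z := fun t => if t < T then z t else Z₀ t
  have hWZT : (W T, Z T) = (L₁, L₂) := by simp [W, Z, hW₀, hZ₀]
  have hWZ : Tendsto (fun t => (W t, Z t)) (𝓝[<] T) (𝓝[R] (W T, Z T)) := by
    refine tendsto_nhdsWithin_iff.2 ⟨hWZT ▸ (hwL.prodMk_nhds hzL).congr' ?_, ?_⟩ <;>
      filter_upwards [Ioo_mem_nhdsLT hT] with t ht
    · simp [W, Z, ht.2]
    · simpa [W, Z, R, ht.2] using hmem t (Ioo_subset_Ico_self ht)
  have hleft : ∀ φ : ℝ → ℝ → ℝ, ContinuousOn (fun p : ℝ × ℝ => φ p.1 p.2) R →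
      Tendsto (fun t => φ (W t) (Z t)) (𝓝[<] T) (𝓝 (φ (W T) (Z T))) := fun φ hφ =>
    (hφ _ (hWZT ▸ ⟨hL₁, hL₂⟩)).tendsto.comp hWZ
  refine ⟨T + ρ, W, Z, by linarith, fun t ht => ⟨if_pos ht.2, if_pos ht.2⟩, fun t ht => ?_⟩
  refine ⟨?_, hasDerivAt_ite_lt hT (by linarith) (fun s hs => ?_) (fun s hs => ?_)
    (hW₀ ▸ hwL) (hleft f hf_cont) t ht, hasDerivAt_ite_lt hT (by linarith) (fun s hs => ?_)
    (fun s hs => ?_) (hZ₀ ▸ hzL) (hleft g hg_cont) t ht⟩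
  · rcases lt_or_ge t T with htT | htT
    · simpa [W, Z, htT] using hmem t ⟨ht.1, htT⟩
    · simpa [W, Z, R, not_lt.2 htT] using hbox (a := (W₀ t, Z₀ t)) (hsol t ⟨htT, ht.2.le⟩).1
  · simpa [W, Z, hs.2] using hw' s hs
  · simpa [W, Z, not_lt.2 hs.1] using (hsol s hs).2.1
  · simpa [W, Z, hs.2] using hz' s hs
  · simpa [W, Z, not_lt.2 hs.1] using (hsol s hs).2.2

theorem quenching_thmC_part2_general
    (c₁ c₁'' c₂ c₂'' T : ℝ)
    (f g : ℝ → ℝ → ℝ)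
    (hf_cont : ContinuousOn (fun p : ℝ × ℝ => f p.1 p.2) (Ico c₁ c₁'' ×ˢ Ico c₂ c₂''))
    (hg_cont : ContinuousOn (fun p : ℝ × ℝ => g p.1 p.2) (Ico c₁ c₁'' ×ˢ Ico c₂ c₂''))
    (hf_pos : ∀ x ∈ Ico c₁ c₁'', ∀ y ∈ Ico c₂ c₂'', 0 < f x y)
    (hg_pos : ∀ x ∈ Ico c₁ c₁'', ∀ y ∈ Ico c₂ c₂'', 0 < g x y)
    (hg_blow : ∀ M > (0 : ℝ), ∃ δ > (0 : ℝ), ∀ x y : ℝ,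
      c₂'' - δ < y → y < c₂'' → c₁ ≤ x → x ≤ c₁'' → M < g x y)
    (hT : 0 < T)
    (w z : ℝ → ℝ)
    (hw0 : w 0 = c₁) (hz0 : z 0 = c₂)
    (hmem : ∀ t ∈ Ico (0 : ℝ) T, w t ∈ Ico c₁ c₁'' ∧ z t ∈ Ico c₂ c₂'')
    (hw' : ∀ t ∈ Ico (0 : ℝ) T, HasDerivAt w (f (w t) (z t)) t)
    (hz' : ∀ t ∈ Ico (0 : ℝ) T, HasDerivAt z (g (w t) (z t)) t)
    (hmax : ¬ ∃ (T' : ℝ) (W Z : ℝ → ℝ), T < T' ∧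
      (∀ t ∈ Ico (0 : ℝ) T, W t = w t ∧ Z t = z t) ∧
      W 0 = c₁ ∧ Z 0 = c₂ ∧
      (∀ t ∈ Ico (0 : ℝ) T', (W t ∈ Ico c₁ c₁'' ∧ Z t ∈ Ico c₂ c₂'') ∧
        HasDerivAt W (f (W t) (Z t)) t ∧ HasDerivAt Z (g (W t) (Z t)) t)) :
    StrictMonoOn w (Ico (0 : ℝ) T) ∧ StrictMonoOn z (Ico (0 : ℝ) T) ∧
      ((Tendsto z (nhdsWithin T (Iio T)) (nhds c₂'') ∧
          ¬ ∃ M : ℝ, ∀ t ∈ Ico (0 : ℝ) T, |g (w t) (z t)| ≤ M) ∨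
        Tendsto w (nhdsWithin T (Iio T)) (nhds c₁'')) := by
  have hsw := strictMonoOn_Ico_of_hasDerivAt_pos hw' fun t ht =>
    hf_pos _ (hmem t ht).1 _ (hmem t ht).2
  have hsz := strictMonoOn_Ico_of_hasDerivAt_pos hz' fun t ht =>
    hg_pos _ (hmem t ht).1 _ (hmem t ht).2
  obtain ⟨L₁, hL₁, hwL⟩ :=
    exists_tendsto_nhdsLT_of_monotoneOn hT hsw.monotoneOn fun t ht => (hmem t ht).1
  obtain ⟨L₂, hL₂, hzL⟩ :=
    exists_tendsto_nhdsLT_of_monotoneOn hT hsz.monotoneOn fun t ht => (hmem t ht).2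
  refine ⟨hsw, hsz, ?_⟩
  rcases hL₂.2.eq_or_lt with rfl | hL₂lt
  · refine Or.inl ⟨hzL, fun ⟨M, hM⟩ => ?_⟩
    have hnear : ∀ᶠ t in 𝓝[<] T, t ∈ Ico 0 T :=
      mem_of_superset (Ioo_mem_nhdsLT hT) Ioo_subset_Ico_self
    have hg_top := tendsto_atTop_of_forall_lt_of_tendsto hg_blow hzL <|
      hnear.mono fun t ht => ⟨Ico_subset_Icc_self (hmem t ht).1, (hmem t ht).2.2⟩
    obtain ⟨t, hMt, ht⟩ := ((hg_top.eventually_gt_atTop M).and hnear).exists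
    linarith [le_abs_self (g (w t) (z t)), hM t ht]
  rcases hL₁.2.eq_or_lt with rfl | hL₁lt
  · exact Or.inr hwL
  obtain ⟨T', W, Z, hTT', hWZ, hsol⟩ := exists_extension_of_tendsto hf_cont hg_cont
    (fun x hx y hy => (hf_pos x hx y hy).le) hg_pos hT hmem hw' hz' ⟨hL₁.1, hL₁lt⟩
    ⟨hL₂.1, hL₂lt⟩ hwL hzL
  have h0 : (0 : ℝ) ∈ Ico 0 T := ⟨le_rfl, hT⟩
  exact (hmax ⟨T', W, Z, hTT', hWZ, (hWZ 0 h0).1.trans hw0, (hWZ 0 h0).2.trans hz0, hsol⟩).elim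

/-- Theorem C, part (2), of the paper: for `w' = f(w,z)`, `z' = g(w,z)` with `f, g > 0`
on the box `R = [c₁, c₁'') × [c₂, c₂'')` and `g(w,z) → +∞` as `z → c₂''⁻` uniformly in
`w`, every maximal solution starting at `(c₁, c₂)` and staying in `R` quenches in
finite time: `w` and `z` are strictly increasing, and as `t → T⁻` either
`z(t) → c₂''` with `|z'(t)|` unbounded, or `w(t) → c₁''`. -/
theorem quenching_thmC_part2
    (c₁ c₁'' c₂ c₂'' T : ℝ)
    (hc₁ : 0 ≤ c₁) (hc₁'' : c₁ < c₁'') (hc₂ : 0 ≤ c₂) (hc₂'' : c₂ < c₂'')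
    (f g : ℝ → ℝ → ℝ)
    (hf_cont : ContinuousOn (fun p : ℝ × ℝ => f p.1 p.2) (Ico c₁ c₁'' ×ˢ Ico c₂ c₂''))
    (hg_cont : ContinuousOn (fun p : ℝ × ℝ => g p.1 p.2) (Ico c₁ c₁'' ×ˢ Ico c₂ c₂''))
    (hf_pos : ∀ x ∈ Ico c₁ c₁'', ∀ y ∈ Ico c₂ c₂'', 0 < f x y)
    (hg_pos : ∀ x ∈ Ico c₁ c₁'', ∀ y ∈ Ico c₂ c₂'', 0 < g x y)
    (hg_blow : ∀ M > (0 : ℝ), ∃ δ > (0 : ℝ), ∀ x y : ℝ,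
      c₂'' - δ < y → y < c₂'' → c₁ ≤ x → x ≤ c₁'' → M < g x y)
    (hT : 0 < T)
    (w z : ℝ → ℝ)
    (hw0 : w 0 = c₁) (hz0 : z 0 = c₂)
    (hmem : ∀ t ∈ Ico (0 : ℝ) T, w t ∈ Ico c₁ c₁'' ∧ z t ∈ Ico c₂ c₂'')
    (hw' : ∀ t ∈ Ico (0 : ℝ) T, HasDerivAt w (f (w t) (z t)) t)
    (hz' : ∀ t ∈ Ico (0 : ℝ) T, HasDerivAt z (g (w t) (z t)) t)
    (hmax : ¬ ∃ (T' : ℝ) (W Z : ℝ → ℝ), T < T' ∧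
      (∀ t ∈ Ico (0 : ℝ) T, W t = w t ∧ Z t = z t) ∧
      W 0 = c₁ ∧ Z 0 = c₂ ∧
      (∀ t ∈ Ico (0 : ℝ) T', (W t ∈ Ico c₁ c₁'' ∧ Z t ∈ Ico c₂ c₂'') ∧
        HasDerivAt W (f (W t) (Z t)) t ∧ HasDerivAt Z (g (W t) (Z t)) t)) :
    StrictMonoOn w (Ico (0 : ℝ) T) ∧ StrictMonoOn z (Ico (0 : ℝ) T) ∧
      ((Tendsto z (nhdsWithin T (Iio T)) (nhds c₂'') ∧
          ¬ ∃ M : ℝ, ∀ t ∈ Ico (0 : ℝ) T, |g (w t) (z t)| ≤ M) ∨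
        Tendsto w (nhdsWithin T (Iio T)) (nhds c₁'')) :=
  quenching_thmC_part2_general c₁ c₁'' c₂ c₂'' T f g hf_cont hg_cont hf_pos hg_pos hg_blow hT w z
    hw0 hz0 hmem hw' hz' hmax
end

section
/- Let p, q > 0 with p·q ≤ 1 and let c₁, c₂ ≥ 0. Then every solution of the system w'(t) = z(t)^p, z'(t) = w(t)^q, with w(0) = c₁, z(0) = c₂ and w, z : [0,T) → [0,∞) for finite T, is bounded on [0,T); hence the solution extends globally to [0,∞). -/
open Set MeasureTheory Filter

/-- Weighted AM–GM via max: if `X, Y ≥ 1` and the exponent sum is at most 1,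
then `X ^ θ * Y ^ η ≤ X + Y`. -/
lemma max_trick (X Y θ η : ℝ) (hX : 1 ≤ X) (hY : 1 ≤ Y) (hθ : 0 ≤ θ) (hη : 0 ≤ η)
    (h : θ + η ≤ 1) : X ^ θ * Y ^ η ≤ X + Y := by
  set M := max X Y with hM
  have hM1 : 1 ≤ M := le_trans hX (le_max_left _ _)
  have hM0 : 0 ≤ M := by linarith
  have h1 : X ^ θ ≤ M ^ θ := Real.rpow_le_rpow (by linarith) (le_max_left _ _) hθ
  have h2 : Y ^ η ≤ M ^ η := Real.rpow_le_rpow (by linarith) (le_max_right _ _) hη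
  calc X ^ θ * Y ^ η ≤ M ^ θ * M ^ η := by
        apply mul_le_mul h1 h2 (Real.rpow_nonneg (by linarith) _) (Real.rpow_nonneg hM0 _)
    _ = M ^ (θ + η) := (Real.rpow_add (by linarith) _ _).symm
    _ ≤ M ^ (1 : ℝ) := Real.rpow_le_rpow_of_exponent_le hM1 h
    _ = M := Real.rpow_one M
    _ ≤ X + Y := by rcases max_cases X Y with ⟨h', _⟩ | ⟨h', _⟩ <;> rw [hM, h'] <;> linarith

/-- Young-type inequality via the max trick. -/
lemma young_max (A B a b c d : ℝ) (hA : 1 ≤ A) (hB : 1 ≤ B) (ha : 0 < a) (hb : 0 < b)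
    (hc : 0 ≤ c) (hd : 0 ≤ d) (h : c * b + d * a ≤ a * b) : A ^ c * B ^ d ≤ A ^ a + B ^ b := by
  have h : c / a + d / b ≤ 1 := by
    rw [div_add_div _ _ ha.ne' hb.ne', div_le_one (by positivity)]
    nlinarith
  have h1 : A ^ c = (A ^ a) ^ (c / a) := by
    rw [← Real.rpow_mul (by linarith)]
    congr 1
    field_simp
  have h2 : B ^ d = (B ^ b) ^ (d / b) := by
    rw [← Real.rpow_mul (by linarith)]
    congr 1
    field_simp
  rw [h1, h2]
  exact max_trick _ _ _ _ (Real.one_le_rpow hA ha.le) (Real.one_le_rpow hB hb.le)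
    (div_nonneg hc ha.le) (div_nonneg hd hb.le) h

/-- Example 2.1 of the paper (global-existence half): if `p q ≤ 1`, every solution of
`w' = z^p`, `z' = w^q` with nonnegative initial data on a finite interval `[0,T)` is
bounded; hence the solution extends globally. -/
theorem global_existence_power_system
    (p q c₁ c₂ T : ℝ) (hp : 0 < p) (hq : 0 < q) (hpq : p * q ≤ 1)
    (hc₁ : 0 ≤ c₁) (hc₂ : 0 ≤ c₂)
    (w z : ℝ → ℝ)
    (hw0 : w 0 = c₁) (hz0 : z 0 = c₂)
    (hnn : ∀ t ∈ Ico (0 : ℝ) T, 0 ≤ w t ∧ 0 ≤ z t)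
    (hw' : ∀ t ∈ Ico (0 : ℝ) T, HasDerivAt w (z t ^ p) t)
    (hz' : ∀ t ∈ Ico (0 : ℝ) T, HasDerivAt z (w t ^ q) t) :
    ∃ C : ℝ, ∀ t ∈ Ico (0 : ℝ) T, w t ≤ C ∧ z t ≤ C := by
  set β : ℝ := 1 + p with hβ_def
  have hβ : 0 < β := by rw [hβ_def]; linarith
  have hβ1 : 1 ≤ β := by rw [hβ_def]; linarith
  set α : ℝ := β / p with hα_def
  have hα : 0 < α := by positivity
  have hpα : p * α = β := by rw [hα_def]; field_simp
  have hqβ : q * β ≤ α := by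
    rw [hα_def, hβ_def, le_div_iff₀ hp]
    nlinarith [mul_nonneg (show (0:ℝ) ≤ 1 + p by linarith) (show (0:ℝ) ≤ 1 - p * q by linarith)]
  have hα1 : 1 ≤ α := by
    rw [hα_def, le_div_iff₀ hp, one_mul, hβ_def]; linarith
  set K : ℝ := α + β with hK_def
  have hK : 0 < K := by positivity
  set φ : ℝ → ℝ := fun t => (1 + w t) ^ α + (1 + z t) ^ β with hφ_def
  set φ' : ℝ → ℝ := fun t =>
    z t ^ p * α * (1 + w t) ^ (α - 1) + w t ^ q * β * (1 + z t) ^ (β - 1) with hφ'_def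
  -- derivative of φ
  have hφderiv : ∀ t ∈ Ico (0 : ℝ) T, HasDerivAt φ (φ' t) t := by
    intro t ht
    have h1 : HasDerivAt (fun s => 1 + w s) (z t ^ p) t := (hw' t ht).const_add 1
    have h2 : HasDerivAt (fun s => 1 + z s) (w t ^ q) t := (hz' t ht).const_add 1
    have hw1 : (1 : ℝ) + w t ≠ 0 := by have := (hnn t ht).1; positivity
    have hz1 : (1 : ℝ) + z t ≠ 0 := by have := (hnn t ht).2; positivity
    exact (h1.rpow_const (Or.inl hw1)).add (h2.rpow_const (Or.inl hz1))
  -- the key differential inequality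
  have hineq : ∀ t ∈ Ico (0 : ℝ) T, φ' t ≤ K * φ t := by
    intro t ht
    obtain ⟨hwnn, hznn⟩ := hnn t ht
    set A : ℝ := 1 + w t with hA_def
    set B : ℝ := 1 + z t with hB_def
    have hA : 1 ≤ A := by linarith
    have hB : 1 ≤ B := by linarith
    have hzB : z t ^ p ≤ B ^ p := Real.rpow_le_rpow hznn (by linarith) hp.le
    have hwA : w t ^ q ≤ A ^ q := Real.rpow_le_rpow hwnn (by linarith) hq.le
    have key1 : A ^ (α - 1) * B ^ p ≤ A ^ α + B ^ β := by
      apply young_max A B α β (α - 1) p hA hB hα hβ (by linarith) hp.le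
      have h' : (α - 1) * β + p * α = α * β - β + p * α := by ring
      rw [h', hpα]; linarith
    have key2 : A ^ q * B ^ (β - 1) ≤ A ^ α + B ^ β := by
      apply young_max A B α β q (β - 1) hA hB hα hβ hq.le (by linarith)
      have h' : q * β + (β - 1) * α = α * β - α + q * β := by ring
      rw [h']; linarith
    have hApos : (0:ℝ) ≤ A ^ (α - 1) := Real.rpow_nonneg (by linarith) _
    have hBpos : (0:ℝ) ≤ B ^ (β - 1) := Real.rpow_nonneg (by linarith) _
    have t1 : z t ^ p * α * A ^ (α - 1) ≤ α * (A ^ α + B ^ β) := by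
      have : z t ^ p * A ^ (α - 1) ≤ A ^ (α - 1) * B ^ p := by
        rw [mul_comm]
        exact mul_le_mul_of_nonneg_left hzB hApos
      calc z t ^ p * α * A ^ (α - 1) = α * (z t ^ p * A ^ (α - 1)) := by ring
        _ ≤ α * (A ^ (α - 1) * B ^ p) := mul_le_mul_of_nonneg_left this hα.le
        _ ≤ α * (A ^ α + B ^ β) := mul_le_mul_of_nonneg_left key1 hα.le
    have t2 : w t ^ q * β * B ^ (β - 1) ≤ β * (A ^ α + B ^ β) := by
      have : w t ^ q * B ^ (β - 1) ≤ A ^ q * B ^ (β - 1) := by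
        exact mul_le_mul_of_nonneg_right hwA hBpos
      calc w t ^ q * β * B ^ (β - 1) = β * (w t ^ q * B ^ (β - 1)) := by ring
        _ ≤ β * (A ^ q * B ^ (β - 1)) := mul_le_mul_of_nonneg_left this hβ.le
        _ ≤ β * (A ^ α + B ^ β) := mul_le_mul_of_nonneg_left key2 hβ.le
    have heq : φ' t = z t ^ p * α * A ^ (α - 1) + w t ^ q * β * B ^ (β - 1) := rfl
    have hKφ : K * φ t = α * (A ^ α + B ^ β) + β * (A ^ α + B ^ β) := by
      rw [hK_def, hφ_def]; dsimp only; rw [hA_def, hB_def]; ring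
    rw [heq, hKφ]
    linarith [t1, t2]
  -- nonnegativity of φ and φ'
  have hφnn : ∀ t ∈ Ico (0 : ℝ) T, 0 ≤ φ t := by
    intro t ht
    obtain ⟨hwnn, hznn⟩ := hnn t ht
    have := Real.rpow_nonneg (show (0:ℝ) ≤ 1 + w t by linarith) α
    have := Real.rpow_nonneg (show (0:ℝ) ≤ 1 + z t by linarith) β
    rw [hφ_def]; dsimp only; linarith
  have hφ'nn : ∀ t ∈ Ico (0 : ℝ) T, 0 ≤ φ' t := by
    intro t ht
    obtain ⟨hwnn, hznn⟩ := hnn t ht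
    have h1 := Real.rpow_nonneg hznn p
    have h2 := Real.rpow_nonneg hwnn q
    have h3 := Real.rpow_nonneg (show (0:ℝ) ≤ 1 + w t by linarith) (α - 1)
    have h4 := Real.rpow_nonneg (show (0:ℝ) ≤ 1 + z t by linarith) (β - 1)
    rw [hφ'_def]; dsimp only; positivity
  -- Gronwall bound
  set δ : ℝ := (1 + c₁) ^ α + (1 + c₂) ^ β with hδ_def
  set D : ℝ := δ * Real.exp (K * T) with hD_def
  have hδ1 : 1 ≤ δ := by
    have h1 := Real.one_le_rpow (show (1:ℝ) ≤ 1 + c₁ by linarith) hα.le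
    have h2 := Real.one_le_rpow (show (1:ℝ) ≤ 1 + c₂ by linarith) hβ.le
    rw [hδ_def]; linarith
  have hgron : ∀ t ∈ Ico (0 : ℝ) T, φ t ≤ D := by
    intro t ht
    obtain ⟨ht0, htT⟩ := ht
    have hsub : Icc (0:ℝ) t ⊆ Ico (0:ℝ) T := fun s hs => ⟨hs.1, lt_of_le_of_lt hs.2 htT⟩
    have hcont : ContinuousOn φ (Icc 0 t) := fun s hs =>
      ((hφderiv s (hsub hs)).continuousAt).continuousWithinAt
    have hderiv : ∀ s ∈ Ico (0:ℝ) t, HasDerivWithinAt φ (φ' s) (Ici s) s := fun s hs =>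
      ((hφderiv s (hsub ⟨hs.1, hs.2.le⟩)).hasDerivWithinAt)
    have hbound : ∀ s ∈ Ico (0:ℝ) t, ‖φ' s‖ ≤ K * ‖φ s‖ + 0 := by
      intro s hs
      have hs' : s ∈ Ico (0:ℝ) T := hsub ⟨hs.1, hs.2.le⟩
      rw [Real.norm_of_nonneg (hφ'nn s hs'), Real.norm_of_nonneg (hφnn s hs'), add_zero]
      exact hineq s hs'
    have h0 : ‖φ 0‖ ≤ δ := by
      have h0T : (0:ℝ) ∈ Ico (0:ℝ) T := ⟨le_refl _, lt_of_le_of_lt ht0 htT⟩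
      rw [Real.norm_of_nonneg (hφnn 0 h0T), hφ_def, hδ_def]
      dsimp only
      rw [hw0, hz0]
    have := norm_le_gronwallBound_of_norm_deriv_right_le hcont hderiv h0 hbound t
      ⟨ht0, le_refl t⟩
    rw [Real.norm_of_nonneg (hφnn t ⟨ht0, htT⟩), gronwallBound_ε0, sub_zero] at this
    refine this.trans ?_
    rw [hD_def]
    apply mul_le_mul_of_nonneg_left _ (by linarith)
    exact Real.exp_le_exp.mpr (mul_le_mul_of_nonneg_left (by linarith) hK.le)
  -- extract the bound on w and z
  have hDpos : 0 < D := by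
    rw [hD_def]
    exact mul_pos (by linarith) (Real.exp_pos _)
  refine ⟨D ^ (1/α) + D ^ (1/β), ?_⟩
  intro t ht
  obtain ⟨hwnn, hznn⟩ := hnn t ht
  have hφt := hgron t ht
  have hDnn : (0:ℝ) ≤ D := hDpos.le
  have hwb : (1 + w t) ^ α ≤ D := by
    have := Real.rpow_nonneg (show (0:ℝ) ≤ 1 + z t by linarith) β
    rw [hφ_def] at hφt; dsimp only at hφt; linarith
  have hzb : (1 + z t) ^ β ≤ D := by
    have := Real.rpow_nonneg (show (0:ℝ) ≤ 1 + w t by linarith) α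
    rw [hφ_def] at hφt; dsimp only at hφt; linarith
  have hw_le : w t ≤ D ^ (1/α) := by
    have h1 : ((1 + w t) ^ α) ^ (1/α) ≤ D ^ (1/α) :=
      Real.rpow_le_rpow (Real.rpow_nonneg (by linarith) _) hwb (by positivity)
    rw [← Real.rpow_mul (by linarith), mul_one_div, div_self hα.ne', Real.rpow_one] at h1
    linarith
  have hz_le : z t ≤ D ^ (1/β) := by
    have h1 : ((1 + z t) ^ β) ^ (1/β) ≤ D ^ (1/β) :=
      Real.rpow_le_rpow (Real.rpow_nonneg (by linarith) _) hzb (by positivity)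
    rw [← Real.rpow_mul (by linarith), mul_one_div, div_self hβ.ne', Real.rpow_one] at h1
    linarith
  have hD1a : (0:ℝ) ≤ D ^ (1/α) := Real.rpow_nonneg hDnn _
  have hD1b : (0:ℝ) ≤ D ^ (1/β) := Real.rpow_nonneg hDnn _
  exact ⟨by linarith, by linarith⟩
end

section
/- Let p, q > 0 with p·q > 1 and let c₁ > 0, c₂ > 0. Then the system w'(t) = z(t)^p, z'(t) = w(t)^q with w(0) = c₁, z(0) = c₂ has no global solution: there is no pair of differentiable functions w, z : [0,∞) → [0,∞) satisfying these equations for all t ≥ 0, i.e., every solution blows up in finite time. -/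
/-!
Both components are nondecreasing, so `z ≥ c₂` and `w` grows at least linearly. Along solutions
the energy `(q + 1) z ^ (p + 1) - (p + 1) w ^ (q + 1)` is conserved, so once `w` is large,
`z ^ (p + 1) ≳ w ^ (q + 1)` and hence `w' = z ^ p ≳ w ^ α` with `α = p (q + 1) / (p + 1) > 1`
exactly when `p q > 1`. A superlinear differential inequality `w' ≥ k w ^ α` cannot hold for all
large times: `-w ^ (1 - α)` would grow at least linearly while staying negative.
-/

open Set Filter Real

theorem mul_sub_le_sub_of_hasDerivAt_ge {f f' : ℝ → ℝ} {a m t : ℝ}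
    (hf : ∀ s ≥ a, HasDerivAt f (f' s) s) (hm : ∀ s ≥ a, m ≤ f' s) (ht : a ≤ t) :
    m * (t - a) ≤ f t - f a := by
  have hint : ∀ s ∈ interior (Ici a), a ≤ s := fun s hs =>
    le_of_lt (by simpa only [interior_Ici, mem_Ioi] using hs)
  refine (convex_Ici a).mul_sub_le_image_sub_of_le_deriv
    (fun s hs => (hf s hs).continuousAt.continuousWithinAt)
    (fun s hs => (hf s (hint s hs)).differentiableAt.differentiableWithinAt)
    (fun s hs => ?_) a self_mem_Ici t ht ht
  rw [(hf s (hint s hs)).deriv]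
  exact hm s (hint s hs)

theorem false_of_eventually_mul_rpow_le_deriv {w w' : ℝ → ℝ} {k α : ℝ} (hk : 0 < k) (hα : 1 < α)
    (hw : ∀ᶠ t in atTop, 0 < w t ∧ HasDerivAt w (w' t) t ∧ k * w t ^ α ≤ w' t) : False := by
  obtain ⟨a, ha⟩ := eventually_atTop.1 hw
  have hu : ∀ t ≥ a, HasDerivAt (fun s => -w s ^ (1 - α))
      (-(w' t * (1 - α) * w t ^ (1 - α - 1))) t := fun t ht =>
    ((ha t ht).2.1.rpow_const (Or.inl (ha t ht).1.ne')).neg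
  have hu' : ∀ t ≥ a, (α - 1) * k ≤ -(w' t * (1 - α) * w t ^ (1 - α - 1)) := by
    intro t ht
    obtain ⟨hpos, -, hle⟩ := ha t ht
    rw [show 1 - α - 1 = -α by ring, rpow_neg hpos.le]
    calc (α - 1) * k = (α - 1) * (k * w t ^ α) / w t ^ α := by field_simp
      _ ≤ (α - 1) * w' t / w t ^ α := by gcongr
      _ = -(w' t * (1 - α) * (w t ^ α)⁻¹) := by ring
  have hαk : 0 < (α - 1) * k := mul_pos (sub_pos.2 hα) hk
  set t := a + w a ^ (1 - α) / ((α - 1) * k)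
  have hta : a ≤ t := le_add_of_nonneg_right (by have := (ha a le_rfl).1; positivity)
  have key := mul_sub_le_sub_of_hasDerivAt_ge hu hu' hta
  have hcancel : (α - 1) * k * (t - a) = w a ^ (1 - α) := by
    rw [add_sub_cancel_left]
    exact mul_div_cancel₀ _ hαk.ne'
  have := rpow_pos_of_pos (ha t hta).1 (1 - α)
  linarith

theorem mul_rpow_le_rpow_of_mul_rpow_le {x y K a b r : ℝ} (hx : 0 ≤ x) (hy : 0 ≤ y) (hK : 0 ≤ K)
    (hb : 0 < b) (hr : 0 ≤ r) (h : K * x ^ a ≤ y ^ b) :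
    K ^ (r / b) * x ^ (a * r / b) ≤ y ^ r :=
  calc K ^ (r / b) * x ^ (a * r / b) = (K * x ^ a) ^ (r / b) := by
        rw [mul_rpow hK (rpow_nonneg hx _), ← rpow_mul hx, mul_div_assoc]
    _ ≤ (y ^ b) ^ (r / b) := rpow_le_rpow (by positivity) h (by positivity)
    _ = y ^ r := by rw [← rpow_mul hy, mul_div_cancel₀ _ hb.ne']

theorem hasDerivAt_power_system_energy {p q t : ℝ} {w z : ℝ → ℝ} (hp : 0 ≤ p) (hq : 0 ≤ q)
    (hw : HasDerivAt w (z t ^ p) t) (hz : HasDerivAt z (w t ^ q) t) :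
    HasDerivAt (fun s => (q + 1) * z s ^ (p + 1) - (p + 1) * w s ^ (q + 1)) 0 t := by
  have hz' := (hz.rpow_const (p := p + 1) (Or.inr (by linarith))).const_mul (q + 1)
  have hw' := (hw.rpow_const (p := q + 1) (Or.inr (by linarith))).const_mul (p + 1)
  simp only [add_sub_cancel_right] at hz' hw'
  exact (hz'.sub hw').congr_deriv (by ring)

theorem eventually_div_mul_le_of_le_sub {W Z : ℝ → ℝ} {A B E : ℝ} (hA : 0 < A) (hB : 0 < B)
    (hW : Tendsto W atTop atTop) (hE : ∀ᶠ t in atTop, E ≤ B * Z t - A * W t) :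
    ∀ᶠ t in atTop, A / (2 * B) * W t ≤ Z t := by
  filter_upwards [hE, hW.eventually_ge_atTop (-2 * E / A)] with t hEt hWt
  rw [div_le_iff₀ hA] at hWt
  rw [div_mul_eq_mul_div, div_le_iff₀ (by positivity)]
  linarith

/-- Example 2.1 of the paper (blowup half): if `p q > 1` and `c₁, c₂ > 0`, then the
system `w' = z^p`, `z' = w^q` with `w(0) = c₁`, `z(0) = c₂` has no global solution,
i.e. every solution blows up in finite time. -/
theorem blowup_power_system
    (p q c₁ c₂ : ℝ) (hp : 0 < p) (hq : 0 < q) (hpq : 1 < p * q)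
    (hc₁ : 0 < c₁) (hc₂ : 0 < c₂) :
    ¬ ∃ w z : ℝ → ℝ,
        (∀ t : ℝ, 0 ≤ t → 0 ≤ w t ∧ 0 ≤ z t) ∧
        w 0 = c₁ ∧ z 0 = c₂ ∧
        (∀ t : ℝ, 0 ≤ t →
          HasDerivAt w (z t ^ p) t ∧ HasDerivAt z (w t ^ q) t) := by
  rintro ⟨w, z, hnn, hw0, hz0, hd⟩
  have hz_ge : ∀ t ≥ 0, c₂ ≤ z t := fun t ht => by
    have := mul_sub_le_sub_of_hasDerivAt_ge (m := 0) (fun s hs => (hd s hs).2)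
      (fun s hs => rpow_nonneg (hnn s hs).1 q) ht
    linarith
  have hw_ge : ∀ t ≥ 0, c₁ + c₂ ^ p * t ≤ w t := fun t ht => by
    have := mul_sub_le_sub_of_hasDerivAt_ge (fun s hs => (hd s hs).1)
      (fun s hs => rpow_le_rpow hc₂.le (hz_ge s hs) hp.le) ht
    linarith
  set E₀ := (q + 1) * c₂ ^ (p + 1) - (p + 1) * c₁ ^ (q + 1)
  have hE : ∀ t ≥ 0, E₀ ≤ (q + 1) * z t ^ (p + 1) - (p + 1) * w t ^ (q + 1) := fun t ht => by
    have := mul_sub_le_sub_of_hasDerivAt_ge (m := 0)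
      (fun s hs => hasDerivAt_power_system_energy hp.le hq.le (hd s hs).1 (hd s hs).2)
      (fun _ _ => le_rfl) ht
    simp only [hw0, hz0] at this
    linarith
  have hw_top : Tendsto w atTop atTop :=
    tendsto_atTop_mono' _ (eventually_atTop.2 ⟨0, hw_ge⟩)
      (tendsto_atTop_add_const_left _ _ (tendsto_id.const_mul_atTop (rpow_pos_of_pos hc₂ p)))
  have hKW := eventually_div_mul_le_of_le_sub (by linarith) (by linarith)
    ((tendsto_rpow_atTop (show 0 < q + 1 by linarith)).comp hw_top) (eventually_atTop.2 ⟨0, hE⟩)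
  refine false_of_eventually_mul_rpow_le_deriv (w := w) (w' := fun t => z t ^ p)
    (k := ((p + 1) / (2 * (q + 1))) ^ (p / (p + 1))) (α := (q + 1) * p / (p + 1))
    (by positivity) (by rw [lt_div_iff₀ (by linarith)]; linarith) ?_
  filter_upwards [eventually_ge_atTop 0, hKW] with t ht hKWt
  exact ⟨by linarith [hw_ge t ht, mul_nonneg (rpow_pos_of_pos hc₂ p).le ht], (hd t ht).1,
    mul_rpow_le_rpow_of_mul_rpow_le (hnn t ht).1 (hnn t ht).2 (by positivity) (by linarith)
      hp.le hKWt⟩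
end

section
/- Let c₁, c₂ ≥ 0. Then the system w'(t) = e^{z(t)}, z'(t) = e^{w(t)} with w(0) = c₁, z(0) = c₂ has no global solution: there is no pair of differentiable functions w, z : [0,∞) → ℝ satisfying these equations for all t ≥ 0, i.e., every solution blows up in finite time. -/
open Set MeasureTheory Filter

/-- Example 2.2 of the paper: the system `w' = e^z`, `z' = e^w` with `w(0) = c₁ ≥ 0`,
`z(0) = c₂ ≥ 0` has no global solution, i.e. the solution blows up in finite time for
all nonnegative initial data. -/
theorem blowup_exponential_system
    (c₁ c₂ : ℝ) (hc₁ : 0 ≤ c₁) (hc₂ : 0 ≤ c₂) :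
    ¬ ∃ w z : ℝ → ℝ,
        w 0 = c₁ ∧ z 0 = c₂ ∧
        (∀ t : ℝ, 0 ≤ t →
          HasDerivAt w (Real.exp (z t)) t ∧ HasDerivAt z (Real.exp (w t)) t) := by
  rintro ⟨w, z, hw0, hz0, hd⟩
  set ψ : ℝ → ℝ := fun t => Real.exp (-(w t + z t) / 2) + t with hψ
  have hψd : ∀ t : ℝ, 0 ≤ t →
      HasDerivAt ψ (Real.exp (-(w t + z t) / 2) *
        (-(Real.exp (z t) + Real.exp (w t)) / 2) + 1) t := by
    intro t ht
    have h1 : HasDerivAt (fun t => -(w t + z t) / 2)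
        (-(Real.exp (z t) + Real.exp (w t)) / 2) t :=
      (((hd t ht).1.add (hd t ht).2).neg.div_const 2)
    exact (h1.exp).add (hasDerivAt_id t)
  -- the derivative of ψ is ≤ 0 on [0, ∞)
  have hderiv_nonpos : ∀ t : ℝ, 0 ≤ t →
      Real.exp (-(w t + z t) / 2) * (-(Real.exp (z t) + Real.exp (w t)) / 2) + 1 ≤ 0 := by
    intro t ht
    have key : 2 ≤ Real.exp ((z t - w t) / 2) + Real.exp ((w t - z t) / 2) := by
      have h1 : Real.exp ((w t - z t) / 2) = (Real.exp ((z t - w t) / 2))⁻¹ := by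
        rw [← Real.exp_neg]; ring_nf
      rw [h1]
      have hp : 0 < Real.exp ((z t - w t) / 2) := Real.exp_pos _
      rw [← sub_nonneg]
      have heq : Real.exp ((z t - w t) / 2) + (Real.exp ((z t - w t) / 2))⁻¹ - 2
          = (Real.exp ((z t - w t) / 2) - 1) ^ 2 / Real.exp ((z t - w t) / 2) := by
        field_simp; ring
      rw [heq]
      positivity
    have e1 : Real.exp (-(w t + z t) / 2) * Real.exp (z t) = Real.exp ((z t - w t) / 2) := by
      rw [← Real.exp_add]; ring_nf
    have e2 : Real.exp (-(w t + z t) / 2) * Real.exp (w t) = Real.exp ((w t - z t) / 2) := by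
      rw [← Real.exp_add]; ring_nf
    nlinarith [Real.exp_pos (-(w t + z t) / 2)]
  -- ψ is antitone on [0, ∞)
  have hcont : ContinuousOn ψ (Ici (0:ℝ)) := fun t ht =>
    ((hψd t ht).continuousAt).continuousWithinAt
  have hanti : AntitoneOn ψ (Ici (0:ℝ)) := by
    apply antitoneOn_of_deriv_nonpos (convex_Ici 0) hcont
    · intro t ht
      rw [interior_Ici] at ht
      exact (hψd t (le_of_lt ht)).differentiableAt.differentiableWithinAt
    · intro t ht
      rw [interior_Ici] at ht
      rw [(hψd t (le_of_lt ht)).deriv]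
      exact hderiv_nonpos t (le_of_lt ht)
  have h2 : ψ 2 ≤ ψ 0 := hanti (self_mem_Ici) (by norm_num) (by norm_num)
  have := Real.exp_pos (-(w 2 + z 2) / 2)
  simp only [hψ, hw0, hz0] at h2
  have h0 : Real.exp (-(c₁ + c₂) / 2) ≤ 1 := by
    rw [← Real.exp_zero]
    apply Real.exp_le_exp.2; linarith
  linarith
end

section
/- Let c₁ > 1 and c₂ ≥ 0, set M = max(c₁, c₂), and let K > 1. Then every solution w, z : [0,T) → ℝ of w'(t) = e^{z(t)}, z'(t) = ln(w(t)) with w(0) = c₁, z(0) = c₂ and w(t) ≥ 1 on [0,T) satisfies w(t) ≤ exp(M·e^{K t}) and z(t) ≤ M·e^{K t} for all t ∈ [0,T); in particular the solution is bounded on every finite interval and hence exists globally. -/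
open Set MeasureTheory Filter

/-- Example 2.3(i) of the paper: any solution of `w' = e^z`, `z' = ln w` with
`w(0) = c₁ > 1`, `z(0) = c₂ ≥ 0` and `w ≥ 1` is dominated by the explicit
sup-solution `(exp(M e^{Kt}), M e^{Kt})` with `M = max(c₁, c₂)`, `K > 1`; in
particular the solution is bounded on finite intervals and exists globally. -/
theorem global_existence_exp_log_system
    (c₁ c₂ K T M : ℝ) (hc₁ : 1 < c₁) (hc₂ : 0 ≤ c₂) (hK : 1 < K)
    (hM : M = max c₁ c₂)
    (w z : ℝ → ℝ)
    (hw0 : w 0 = c₁) (hz0 : z 0 = c₂)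
    (hw1 : ∀ t ∈ Ico (0 : ℝ) T, 1 ≤ w t)
    (hw' : ∀ t ∈ Ico (0 : ℝ) T, HasDerivAt w (Real.exp (z t)) t)
    (hz' : ∀ t ∈ Ico (0 : ℝ) T, HasDerivAt z (Real.log (w t)) t) :
    ∀ t ∈ Ico (0 : ℝ) T,
      w t ≤ Real.exp (M * Real.exp (K * t)) ∧ z t ≤ M * Real.exp (K * t) := by
  intro t ht
  obtain ⟨ht0, htT⟩ := ht
  have hM1 : 1 < M := lt_of_lt_of_le hc₁ (hM ▸ le_max_left _ _)
  have hsub : Icc (0:ℝ) t ⊆ Ico 0 T := fun s hs => ⟨hs.1, lt_of_le_of_lt hs.2 htT⟩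
  have hsub' : Ico (0:ℝ) t ⊆ Ico 0 T := fun s hs => ⟨hs.1, hs.2.trans htT⟩
  have hwpos : ∀ s ∈ Ico (0:ℝ) T, 0 < w s := fun s hs =>
    lt_of_lt_of_le one_pos (hw1 s hs)
  set f : ℝ → ℝ := fun s => max (Real.log (w s)) (z s) with hf_def
  set f' : ℝ → ℝ := fun s =>
    if Real.log (w s) < z s then Real.log (w s)
    else max (Real.exp (z s) / w s) (Real.log (w s)) with hf'_def
  set B : ℝ → ℝ := fun s => M * Real.exp (K * s) with hB_def
  set B' : ℝ → ℝ := fun s => M * (Real.exp (K * s) * K) with hB'_def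
  -- derivative of B
  have hB : ∀ x, HasDerivAt B (B' x) x := by
    intro x
    have h1 : HasDerivAt (fun s : ℝ => K * s) K x := by
      simpa using (hasDerivAt_id x).const_mul K
    exact (h1.exp).const_mul M
  -- continuity of f on Icc 0 t
  have hwc : ∀ s ∈ Icc (0:ℝ) t, ContinuousAt w s := fun s hs =>
    (hw' s (hsub hs)).continuousAt
  have hzc : ∀ s ∈ Icc (0:ℝ) t, ContinuousAt z s := fun s hs =>
    (hz' s (hsub hs)).continuousAt
  have hfc : ContinuousOn f (Icc 0 t) := by
    intro s hs
    have h1 : ContinuousAt (fun u => Real.log (w u)) s :=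
      (Real.continuousAt_log (ne_of_gt (hwpos s (hsub hs)))).comp (hwc s hs)
    exact (h1.sup (hzc s hs)).continuousWithinAt
  -- derivative of log ∘ w
  have hlogw' : ∀ x ∈ Ico (0:ℝ) T,
      HasDerivAt (fun s => Real.log (w s)) (Real.exp (z x) / w x) x := fun x hx =>
    (hw' x hx).log (ne_of_gt (hwpos x hx))
  -- liminf slope condition
  have hf' : ∀ x ∈ Ico (0:ℝ) t, ∀ r, f' x < r → ∃ᶠ y in nhdsWithin x (Ioi x), slope f x y < r := by
    intro x hx r hr
    have hxT : x ∈ Ico (0:ℝ) T := hsub' hx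
    by_cases h : Real.log (w x) < z x
    · -- near x, f = z
      rw [hf'_def] at hr
      simp only [if_pos h] at hr
      have hcont : ContinuousAt (fun s => z s - Real.log (w s)) x :=
        ((hz' x hxT).continuousAt).sub
          ((Real.continuousAt_log (ne_of_gt (hwpos x hxT))).comp (hw' x hxT).continuousAt)
      have hev : ∀ᶠ y in nhds x, Real.log (w y) < z y := by
        have h0 : (0:ℝ) < z x - Real.log (w x) := sub_pos.2 h
        have hev0 : ∀ᶠ y in nhds x, 0 < z y - Real.log (w y) :=
          hcont.eventually (eventually_gt_nhds h0)
        exact hev0.mono fun y hy => by linarith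
      have hfx : f x = z x := max_eq_right h.le
      have hslope : Tendsto (slope z x) (nhdsWithin x {x}ᶜ) (nhds (Real.log (w x))) :=
        hasDerivAt_iff_tendsto_slope.1 (hz' x hxT)
      have hslope' : ∀ᶠ y in nhdsWithin x (Ioi x), slope z x y < r :=
        (hslope.mono_left (nhdsWithin_mono x fun y hy => ne_of_gt hy)).eventually
          (eventually_lt_nhds hr)
      have hev' : ∀ᶠ y in nhdsWithin x (Ioi x), slope f x y = slope z x y := by
        filter_upwards [nhdsWithin_le_nhds hev] with y hy
        simp only [hf_def, slope_def_field]
        rw [max_eq_right hy.le, max_eq_right h.le]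
      exact ((hev'.and hslope').mono fun y hy => hy.1 ▸ hy.2).frequently
    · -- general max-slope bound
      rw [hf'_def] at hr
      simp only [if_neg h] at hr
      have hr1 : Real.exp (z x) / w x < r := (le_max_left _ _).trans_lt hr
      have hr2 : Real.log (w x) < r := (le_max_right _ _).trans_lt hr
      have hs1 : Tendsto (slope (fun s => Real.log (w s)) x) (nhdsWithin x {x}ᶜ)
          (nhds (Real.exp (z x) / w x)) := hasDerivAt_iff_tendsto_slope.1 (hlogw' x hxT)
      have hs2 : Tendsto (slope z x) (nhdsWithin x {x}ᶜ) (nhds (Real.log (w x))) :=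
        hasDerivAt_iff_tendsto_slope.1 (hz' x hxT)
      have hmono : nhdsWithin x (Ioi x) ≤ nhdsWithin x {x}ᶜ :=
        nhdsWithin_mono x fun y hy => ne_of_gt hy
      have e1 : ∀ᶠ y in nhdsWithin x (Ioi x), slope (fun s => Real.log (w s)) x y < r :=
        (hs1.mono_left hmono).eventually (eventually_lt_nhds hr1)
      have e2 : ∀ᶠ y in nhdsWithin x (Ioi x), slope z x y < r :=
        (hs2.mono_left hmono).eventually (eventually_lt_nhds hr2)
      have e3 : ∀ᶠ y in nhdsWithin x (Ioi x), x < y := eventually_mem_nhdsWithin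
      refine ((e1.and (e2.and e3)).mono ?_).frequently
      rintro y ⟨h1, h2, hxy⟩
      have hkey : f y - f x ≤ max (Real.log (w y) - Real.log (w x)) (z y - z x) := by
        have l1 := le_max_left (Real.log (w y) - Real.log (w x)) (z y - z x)
        have l2 := le_max_right (Real.log (w y) - Real.log (w x)) (z y - z x)
        have m1 := le_max_left (Real.log (w x)) (z x)
        have m2 := le_max_right (Real.log (w x)) (z x)
        have hub : f y ≤ max (Real.log (w x)) (z x)
            + max (Real.log (w y) - Real.log (w x)) (z y - z x) :=
          max_le (by linarith) (by linarith)
        have hlb : max (Real.log (w x)) (z x) ≤ f x := le_of_eq rfl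
        linarith
      have hpos : (0:ℝ) < y - x := sub_pos.2 hxy
      have : slope f x y ≤ max (slope (fun s => Real.log (w s)) x y) (slope z x y) := by
        rw [slope_def_field, slope_def_field, slope_def_field, max_div_div_right hpos.le]
        gcongr
      exact this.trans_lt (max_lt h1 h2)
  -- initial condition
  have ha : f 0 ≤ B 0 := by
    simp only [hf_def, hB_def, hw0, hz0, mul_zero, Real.exp_zero, mul_one]
    exact max_le ((Real.log_le_self (by linarith)).trans (hM ▸ le_max_left _ _))
      (hM ▸ le_max_right _ _)
  -- contact condition
  have bound : ∀ x ∈ Ico (0:ℝ) t, f x = B x → f' x < B' x := by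
    intro x hx hfx
    have hxT : x ∈ Ico (0:ℝ) T := hsub' hx
    have hexp1 : 1 ≤ Real.exp (K * x) := Real.one_le_exp (mul_nonneg (by linarith) hx.1)
    have hMpos : (0:ℝ) < M := lt_trans one_pos hM1
    have hepos := Real.exp_pos (K * x)
    have hv1 : 1 < B x := by
      simp only [hB_def]
      nlinarith
    have hvB' : B x < B' x := by
      simp only [hB_def, hB'_def]
      nlinarith [mul_pos hMpos hepos, sub_pos.2 hK]
    by_cases h : Real.log (w x) < z x
    · rw [hf'_def]
      simp only [if_pos h]
      have : z x = f x := (max_eq_right h.le).symm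
      calc Real.log (w x) < z x := h
      _ = B x := this ▸ hfx
      _ < B' x := hvB'
    · rw [hf'_def]
      simp only [if_neg h]
      have hfxl : f x = Real.log (w x) := max_eq_left (not_lt.1 h)
      have hlw : Real.log (w x) = B x := by rw [← hfxl, hfx]
      have hwx : w x = Real.exp (B x) := by
        rw [← hlw, Real.exp_log (hwpos x hxT)]
      apply max_lt
      · have hz_le : z x ≤ B x := (not_lt.1 h).trans hlw.le
        have h1 : Real.exp (z x) / w x ≤ 1 := by
          rw [hwx, div_le_one (Real.exp_pos _)]
          exact Real.exp_le_exp.2 hz_le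
        exact h1.trans_lt (hv1.trans hvB')
      · rw [hlw]; exact hvB'
  -- apply the fencing theorem
  have key := image_le_of_liminf_slope_right_lt_deriv_boundary hfc hf' ha hB bound
    (x := t) ⟨ht0, le_refl t⟩
  constructor
  · have h1 : Real.log (w t) ≤ M * Real.exp (K * t) := (le_max_left _ _).trans key
    calc w t = Real.exp (Real.log (w t)) := (Real.exp_log (hwpos t ⟨ht0, htT⟩)).symm
    _ ≤ Real.exp (M * Real.exp (K * t)) := Real.exp_le_exp.2 h1
  · exact (le_max_right _ _).trans key
end

section
/- Let A, B, C, D > 0, 0 < p < 2, 0 < q < 2, and let M, N > 0 satisfy A·M²·N > B·M^p and C·M·N² > D·N^q. Set c = min(A·M·N − B·M^{p−1}, C·M·N − D·N^{q−1}) > 0. If w, z : [0,T) → (0,∞) are differentiable with w'(t) = A·w²·z − B·w^p, z'(t) = C·w·z² − D·z^q on [0,T) and w(0) ≥ M, z(0) ≥ N, then w(t) ≥ M/(1 − c·t) and z(t) ≥ N/(1 − c·t) for all t ∈ [0,T); consequently T ≤ 1/c, i.e., the solution blows up in finite time. -/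
/-!
For `κ` slightly below `c`, the pair `(M / (1 - κ t), N / (1 - κ t))` is a strict sub-solution:
when one component of `(w, z)` touches its barrier while the other lies above its own, the
equation forces the touching component to grow strictly faster than the barrier, since
`σ = 1 - κ t ∈ (0, 1]` and `p, q ≤ 2`. Real induction keeps `(w, z)` above the barriers, and
letting `κ → c` gives `M ≤ w t (1 - c t)`. If `T > 1 / c`, this product would stay `≥ M` as
`t → 1 / c`, while by continuity of `w` it tends to `w (1 / c) · 0 = 0`.
-/

open Set Filter Topology

theorem HasDerivAt.eventually_nhdsGT_pos {f : ℝ → ℝ} {f' x : ℝ} (hf : HasDerivAt f f' x)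
    (hx : 0 ≤ f x) (hf' : f x = 0 → 0 < f') : ∀ᶠ y in 𝓝[>] x, 0 < f y := by
  rcases hx.eq_or_lt with hx | hx
  · have hslope : ∀ᶠ y in 𝓝[>] x, 0 < slope f x y :=
      ((hasDerivAt_iff_tendsto_slope.mp hf).mono_left (nhdsGT_le_nhdsNE x)).eventually
        (eventually_gt_nhds (hf' hx.symm))
    filter_upwards [hslope, self_mem_nhdsWithin] with y hy hxy
    have := sub_smul_slope f x y
    rw [smul_eq_mul, vsub_eq_sub, ← hx, sub_zero] at this
    exact this ▸ mul_pos (sub_pos.2 hxy) hy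
  · exact (hf.continuousAt.eventually (eventually_gt_nhds hx)).filter_mono nhdsWithin_le_nhds

theorem nonneg_of_hasDerivAt_pos_of_eq_zero {f g f' g' : ℝ → ℝ} {a b : ℝ}
    (hf : ∀ x ∈ Icc a b, HasDerivAt f (f' x) x) (hg : ∀ x ∈ Icc a b, HasDerivAt g (g' x) x)
    (hfa : 0 ≤ f a) (hga : 0 ≤ g a)
    (hf' : ∀ x ∈ Ico a b, f x = 0 → 0 ≤ g x → 0 < f' x)
    (hg' : ∀ x ∈ Ico a b, g x = 0 → 0 ≤ f x → 0 < g' x) :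
    Icc a b ⊆ {x | 0 ≤ f x ∧ 0 ≤ g x} := by
  have hcont : ContinuousOn (fun x => (f x, g x)) (Icc a b) := fun x hx =>
    ((hf x hx).continuousAt.prodMk (hg x hx).continuousAt).continuousWithinAt
  refine IsClosed.Icc_subset_of_forall_mem_nhdsWithin ?_ ⟨hfa, hga⟩ ?_
  · rw [inter_comm]
    exact hcont.preimage_isClosed_of_isClosed isClosed_Icc (isClosed_Ici (a := (0 : ℝ × ℝ)))
  · rintro x ⟨⟨hfx, hgx⟩, hx⟩
    have hxI := Ico_subset_Icc_self hx
    filter_upwards [(hf x hxI).eventually_nhdsGT_pos hfx (hf' x hx · hgx),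
      (hg x hxI).eventually_nhdsGT_pos hgx (hg' x hx · hfx)] with y hfy hgy
    exact ⟨hfy.le, hgy.le⟩

theorem hasDerivAt_div_one_sub_mul (M κ : ℝ) {s : ℝ} (hs : 1 - κ * s ≠ 0) :
    HasDerivAt (fun t => M / (1 - κ * t)) (κ * M / (1 - κ * s) ^ 2) s := by
  have hden : HasDerivAt (fun t => 1 - κ * t) (-(κ * 1)) s :=
    ((hasDerivAt_id s).const_mul κ).const_sub 1
  exact ((hasDerivAt_const s M).div hden hs).congr_deriv (by ring)

theorem barrier_deriv_lt {A B M N p κ σ x y : ℝ} (hA : 0 ≤ A) (hB : 0 ≤ B) (hM : 0 ≤ M)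
    (hN : 0 ≤ N) (hp : p ≤ 2) (hσ0 : 0 < σ) (hσ1 : σ ≤ 1)
    (hκ : κ * M < A * M ^ 2 * N - B * M ^ p) (hx : x = M / σ) (hy : N / σ ≤ y) :
    κ * M / σ ^ 2 < A * x ^ 2 * y - B * x ^ p := by
  subst hx
  have hσ3 : A * M ^ 2 * N / σ ^ 2 ≤ A * M ^ 2 * N / σ ^ 3 :=
    div_le_div_of_nonneg_left (by positivity) (by positivity)
      (pow_le_pow_of_le_one hσ0.le hσ1 (by norm_num))
  have hσp : B * M ^ p / σ ^ p ≤ B * M ^ p / σ ^ 2 := by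
    refine div_le_div_of_nonneg_left (by positivity) (by positivity) ?_
    simpa using Real.rpow_le_rpow_of_exponent_ge hσ0 hσ1 hp
  calc κ * M / σ ^ 2 < (A * M ^ 2 * N - B * M ^ p) / σ ^ 2 := by gcongr
    _ ≤ A * M ^ 2 * N / σ ^ 3 - B * M ^ p / σ ^ p := by rw [sub_div]; linarith
    _ = A * (M / σ) ^ 2 * (N / σ) - B * (M / σ) ^ p := by
      rw [Real.div_rpow hM hσ0.le]; field_simp
    _ ≤ A * (M / σ) ^ 2 * y - B * (M / σ) ^ p := by gcongr

section LowerBound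

variable {A B C D p q M N : ℝ} {w z : ℝ → ℝ} {τ : ℝ}

theorem le_mul_one_sub_of_lt (hA : 0 ≤ A) (hB : 0 ≤ B) (hC : 0 ≤ C) (hD : 0 ≤ D)
    (hp : p ≤ 2) (hq : q ≤ 2) (hM : 0 ≤ M) (hN : 0 ≤ N) {κ : ℝ} (hκ : 0 ≤ κ)
    (hκw : κ * M < A * M ^ 2 * N - B * M ^ p) (hκz : κ * N < C * M * N ^ 2 - D * N ^ q)
    (hw0 : M ≤ w 0) (hz0 : N ≤ z 0)
    (hw' : ∀ t ∈ Icc 0 τ, HasDerivAt w (A * w t ^ 2 * z t - B * w t ^ p) t)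
    (hz' : ∀ t ∈ Icc 0 τ, HasDerivAt z (C * w t * z t ^ 2 - D * z t ^ q) t)
    (hτ0 : 0 ≤ τ) (hτ : κ * τ < 1) :
    M ≤ w τ * (1 - κ * τ) ∧ N ≤ z τ * (1 - κ * τ) := by
  have hσ : ∀ t ∈ Icc 0 τ, 0 < 1 - κ * t ∧ 1 - κ * t ≤ 1 := fun t ht =>
    ⟨by nlinarith [ht.2], by nlinarith [ht.1]⟩
  have hκz' : κ * N < C * N ^ 2 * M - D * N ^ q := by rwa [mul_right_comm]
  have hbarrier := nonneg_of_hasDerivAt_pos_of_eq_zero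
    (f := fun t => w t - M / (1 - κ * t)) (g := fun t => z t - N / (1 - κ * t))
    (fun t ht => (hw' t ht).sub (hasDerivAt_div_one_sub_mul M κ (hσ t ht).1.ne'))
    (fun t ht => (hz' t ht).sub (hasDerivAt_div_one_sub_mul N κ (hσ t ht).1.ne'))
    (by simpa using hw0) (by simpa using hz0)
    (fun t ht hwt hzt => by
      obtain ⟨hσ0, hσ1⟩ := hσ t (Ico_subset_Icc_self ht)
      exact sub_pos.2 <|
        barrier_deriv_lt hA hB hM hN hp hσ0 hσ1 hκw (sub_eq_zero.1 hwt) (sub_nonneg.1 hzt))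
    (fun t ht hzt hwt => by
      obtain ⟨hσ0, hσ1⟩ := hσ t (Ico_subset_Icc_self ht)
      rw [mul_right_comm C]
      exact sub_pos.2 <|
        barrier_deriv_lt hC hD hN hM hq hσ0 hσ1 hκz' (sub_eq_zero.1 hzt) (sub_nonneg.1 hwt))
  obtain ⟨hwτ, hzτ⟩ := hbarrier ⟨hτ0, le_rfl⟩
  have hστ : 0 < 1 - κ * τ := by linarith
  exact ⟨(div_le_iff₀ hστ).1 (sub_nonneg.1 hwτ), (div_le_iff₀ hστ).1 (sub_nonneg.1 hzτ)⟩

theorem le_mul_one_sub (hA : 0 ≤ A) (hB : 0 ≤ B) (hC : 0 ≤ C) (hD : 0 ≤ D)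
    (hp : p ≤ 2) (hq : q ≤ 2) (hM : 0 < M) (hN : 0 < N) {c : ℝ} (hc : 0 < c)
    (hcw : c * M ≤ A * M ^ 2 * N - B * M ^ p) (hcz : c * N ≤ C * M * N ^ 2 - D * N ^ q)
    (hw0 : M ≤ w 0) (hz0 : N ≤ z 0)
    (hw' : ∀ t ∈ Icc 0 τ, HasDerivAt w (A * w t ^ 2 * z t - B * w t ^ p) t)
    (hz' : ∀ t ∈ Icc 0 τ, HasDerivAt z (C * w t * z t ^ 2 - D * z t ^ q) t)
    (hτ0 : 0 ≤ τ) (hτ : c * τ < 1) :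
    M ≤ w τ * (1 - c * τ) ∧ N ≤ z τ * (1 - c * τ) := by
  -- At rate `c` itself the barrier inequality may be an equality at `t = 0`, hence the limit.
  have hbelow : ∀ᶠ κ in 𝓝[<] c, M ≤ w τ * (1 - κ * τ) ∧ N ≤ z τ * (1 - κ * τ) := by
    filter_upwards [Ioo_mem_nhdsLT hc] with κ ⟨hκ0, hκc⟩
    refine le_mul_one_sub_of_lt hA hB hC hD hp hq hM.le hN.le hκ0.le ?_ ?_ hw0 hz0 hw' hz' hτ0 ?_ <;>
      nlinarith
  have hlim (u : ℝ) : Tendsto (fun κ => u * (1 - κ * τ)) (𝓝[<] c) (𝓝 (u * (1 - c * τ))) :=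
    ((continuous_const.mul (continuous_const.sub (continuous_id.mul continuous_const))).tendsto
      c).mono_left nhdsWithin_le_nhds
  exact ⟨ge_of_tendsto (hlim _) (hbelow.mono fun _ h => h.1),
    ge_of_tendsto (hlim _) (hbelow.mono fun _ h => h.2)⟩

end LowerBound

theorem le_one_div_of_le_mul_one_sub {f : ℝ → ℝ} {M c T : ℝ} (hM : 0 < M) (hc : 0 < c)
    (hf : ∀ t ∈ Ico 0 T, ContinuousAt f t)
    (hbound : ∀ t ∈ Ico 0 T, c * t < 1 → M ≤ f t * (1 - c * t)) : T ≤ 1 / c := by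
  by_contra! hT
  have ht₀ : 1 / c ∈ Ico 0 T := ⟨by positivity, hT⟩
  have hlim : Tendsto (fun t => f t * (1 - c * t)) (𝓝[<] (1 / c))
      (𝓝 (f (1 / c) * (1 - c * (1 / c)))) :=
    ((hf _ ht₀).mul (by fun_prop : ContinuousAt (fun t => 1 - c * t) (1 / c))).tendsto.mono_left
      nhdsWithin_le_nhds
  rw [mul_one_div_cancel hc.ne', sub_self, mul_zero] at hlim
  have hbelow : ∀ᶠ t in 𝓝[<] (1 / c), M ≤ f t * (1 - c * t) := by
    filter_upwards [Ioo_mem_nhdsLT (one_div_pos.2 hc)] with t ⟨ht0, htc⟩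
    exact hbound t ⟨ht0.le, htc.trans hT⟩ ((lt_div_iff₀' hc).1 htc)
  linarith [ge_of_tendsto hlim hbelow]

theorem blowup_example31_general
    (A B C D p q M N c T : ℝ)
    (hA : 0 < A) (hB : 0 < B) (hC : 0 < C) (hD : 0 < D)
    (hp2 : p < 2) (hq2 : q < 2)
    (hM : 0 < M) (hN : 0 < N)
    (h1 : B * M ^ p < A * M ^ (2 : ℕ) * N) (h2 : D * N ^ q < C * M * N ^ (2 : ℕ))
    (hc : c = min (A * M * N - B * M ^ (p - 1)) (C * M * N - D * N ^ (q - 1)))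
    (w z : ℝ → ℝ)
    (hw0 : M ≤ w 0) (hz0 : N ≤ z 0)
    (hw' : ∀ t ∈ Ico (0 : ℝ) T,
      HasDerivAt w (A * w t ^ (2 : ℕ) * z t - B * w t ^ p) t)
    (hz' : ∀ t ∈ Ico (0 : ℝ) T,
      HasDerivAt z (C * w t * z t ^ (2 : ℕ) - D * z t ^ q) t) :
    (∀ t ∈ Ico (0 : ℝ) T, M / (1 - c * t) ≤ w t ∧ N / (1 - c * t) ≤ z t) ∧
      T ≤ 1 / c := by
  have hw_rate : (A * M * N - B * M ^ (p - 1)) * M = A * M ^ 2 * N - B * M ^ p := by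
    rw [Real.rpow_sub_one hM.ne']; field_simp
  have hz_rate : (C * M * N - D * N ^ (q - 1)) * N = C * M * N ^ 2 - D * N ^ q := by
    rw [Real.rpow_sub_one hN.ne']; field_simp
  have hc0 : 0 < c := hc ▸ lt_min ((mul_pos_iff_of_pos_right hM).1 (by linarith))
    ((mul_pos_iff_of_pos_right hN).1 (by linarith))
  have hcw : c * M ≤ A * M ^ 2 * N - B * M ^ p :=
    hw_rate ▸ mul_le_mul_of_nonneg_right (hc ▸ min_le_left _ _) hM.le
  have hcz : c * N ≤ C * M * N ^ 2 - D * N ^ q :=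
    hz_rate ▸ mul_le_mul_of_nonneg_right (hc ▸ min_le_right _ _) hN.le
  have hbound (t : ℝ) (ht : t ∈ Ico 0 T) (hct : c * t < 1) :
      M ≤ w t * (1 - c * t) ∧ N ≤ z t * (1 - c * t) :=
    le_mul_one_sub hA.le hB.le hC.le hD.le hp2.le hq2.le hM hN hc0 hcw hcz hw0 hz0
      (fun s hs => hw' s ⟨hs.1, hs.2.trans_lt ht.2⟩)
      (fun s hs => hz' s ⟨hs.1, hs.2.trans_lt ht.2⟩) ht.1 hct
  have hT : T ≤ 1 / c := le_one_div_of_le_mul_one_sub hM hc0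
    (fun t ht => (hw' t ht).continuousAt) (fun t ht hct => (hbound t ht hct).1)
  refine ⟨fun t ht => ?_, hT⟩
  have hct : c * t < 1 := (lt_div_iff₀' hc0).1 (ht.2.trans_le hT)
  have hσ : 0 < 1 - c * t := by linarith
  obtain ⟨hwt, hzt⟩ := hbound t ht hct
  exact ⟨(div_le_iff₀ hσ).2 hwt, (div_le_iff₀ hσ).2 hzt⟩

/-- Example 3.1(1) of the paper: for `w' = A w² z − B w^p`, `z' = C w z² − D z^q` with
`0 < p, q < 2` and initial data `≥ (M, N)` where `A M² N > B M^p`, `C M N² > D N^q`,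
the explicit sub-solution `(M/(1−ct), N/(1−ct))` with
`c = min(A M N − B M^{p−1}, C M N − D N^{q−1})` forces finite-time blowup: `T ≤ 1/c`. -/
theorem blowup_example31
    (A B C D p q M N c T : ℝ)
    (hA : 0 < A) (hB : 0 < B) (hC : 0 < C) (hD : 0 < D)
    (hp0 : 0 < p) (hp2 : p < 2) (hq0 : 0 < q) (hq2 : q < 2)
    (hM : 0 < M) (hN : 0 < N)
    (h1 : B * M ^ p < A * M ^ (2 : ℕ) * N) (h2 : D * N ^ q < C * M * N ^ (2 : ℕ))
    (hc : c = min (A * M * N - B * M ^ (p - 1)) (C * M * N - D * N ^ (q - 1)))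
    (hT : 0 < T)
    (w z : ℝ → ℝ)
    (hw0 : M ≤ w 0) (hz0 : N ≤ z 0)
    (hpos : ∀ t ∈ Ico (0 : ℝ) T, 0 < w t ∧ 0 < z t)
    (hw' : ∀ t ∈ Ico (0 : ℝ) T,
      HasDerivAt w (A * w t ^ (2 : ℕ) * z t - B * w t ^ p) t)
    (hz' : ∀ t ∈ Ico (0 : ℝ) T,
      HasDerivAt z (C * w t * z t ^ (2 : ℕ) - D * z t ^ q) t) :
    (∀ t ∈ Ico (0 : ℝ) T, M / (1 - c * t) ≤ w t ∧ N / (1 - c * t) ≤ z t) ∧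
      T ≤ 1 / c :=
  blowup_example31_general A B C D p q M N c T hA hB hC hD hp2 hq2 hM hN h1 h2 hc w z hw0 hz0 hw'
    hz'
end
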